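/- arXiv:2208.06684 — 8 statements merged into one kernel-verified Lean document; each statement's English description precedes it below -/
import Mathlib

section
/- Let n ≥ 1 and let Ω be a proper nonempty open subset of ℝⁿ with complement Ωᶜ. Then the following two conditions are equivalent: (i) there exist constants a > 1 and δ > 0 such that for every x ∈ Ω one has w(Ωᶜ ∩ B(x, a·d(x))) > δ·d(x), where d(x) = dist(x, Ωᶜ); (ii) there exists ε > 0 such that for every y ∈ Ωᶜ and every r > 0 one has w(Ωᶜ ∩ B(y, r)) > ε·r. Quantitatively, (ii) implies (i) with a = 2 and δ = ε, and (i) implies (ii) with ε = min(1, δ)/(2(1 + a)). -/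
open Metric MeasureTheory

/-- The width of `E` in direction `ν`: `sup {⟪ν, x - y⟫ : x, y ∈ E}` (with `sSup ∅ = 0`). -/
noncomputable def dirWidth {n : ℕ} (E : Set (EuclideanSpace ℝ (Fin n)))
    (ν : EuclideanSpace ℝ (Fin n)) : ℝ :=
  sSup {w | ∃ x ∈ E, ∃ y ∈ E, w = (inner ℝ ν (x - y) : ℝ)}

/-- The width of `E`: the infimum over unit vectors `ν` of the width of `E` in direction `ν`. -/
noncomputable def setWidth {n : ℕ} (E : Set (EuclideanSpace ℝ (Fin n))) : ℝ :=
  sInf {w | ∃ ν : EuclideanSpace ℝ (Fin n), ‖ν‖ = 1 ∧ w = dirWidth E ν}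

section Aux

variable {n : ℕ} {E F : Set (EuclideanSpace ℝ (Fin n))} {c ν : EuclideanSpace ℝ (Fin n)} {R : ℝ}

lemma wnorm_le (hE : E ⊆ ball c R) {x y : EuclideanSpace ℝ (Fin n)} (hx : x ∈ E) (hy : y ∈ E) :
    ‖x - y‖ ≤ 2 * R := by
  have hx' := mem_ball.mp (hE hx)
  have hy' := mem_ball.mp (hE hy)
  have h := dist_triangle x c y
  have := dist_comm c y
  rw [← dist_eq_norm]
  linarith

lemma wset_bddAbove (hE : E ⊆ ball c R) (ν : EuclideanSpace ℝ (Fin n)) :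
    BddAbove {w | ∃ x ∈ E, ∃ y ∈ E, w = (inner ℝ ν (x - y) : ℝ)} := by
  refine ⟨‖ν‖ * (2 * R), ?_⟩
  rintro w ⟨x, hx, y, hy, rfl⟩
  calc (inner ℝ ν (x - y) : ℝ) ≤ ‖ν‖ * ‖x - y‖ := real_inner_le_norm _ _
    _ ≤ ‖ν‖ * (2 * R) := by
        have := wnorm_le hE hx hy
        have := norm_nonneg ν
        nlinarith

lemma inner_le_dirWidth (hE : E ⊆ ball c R) {x y : EuclideanSpace ℝ (Fin n)}
    (hx : x ∈ E) (hy : y ∈ E) (ν : EuclideanSpace ℝ (Fin n)) :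
    (inner ℝ ν (x - y) : ℝ) ≤ dirWidth E ν :=
  le_csSup (wset_bddAbove hE ν) ⟨x, hx, y, hy, rfl⟩

lemma dirWidth_nonneg (hE : E ⊆ ball c R) (hne : E.Nonempty) (ν : EuclideanSpace ℝ (Fin n)) :
    0 ≤ dirWidth E ν := by
  obtain ⟨x, hx⟩ := hne
  have h := inner_le_dirWidth hE hx hx ν
  simpa using h

lemma dirWidth_mono (hEF : E ⊆ F) (hne : E.Nonempty) (hF : F ⊆ ball c R)
    (ν : EuclideanSpace ℝ (Fin n)) : dirWidth E ν ≤ dirWidth F ν := by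
  refine csSup_le_csSup (wset_bddAbove hF ν) ?_ ?_
  · obtain ⟨x, hx⟩ := hne
    exact ⟨_, x, hx, x, hx, rfl⟩
  · rintro w ⟨x, hx, y, hy, rfl⟩
    exact ⟨x, hEF hx, y, hEF hy, rfl⟩

lemma exists_unit_vector (hn : 1 ≤ n) : ∃ ν : EuclideanSpace ℝ (Fin n), ‖ν‖ = 1 :=
  ⟨EuclideanSpace.single ⟨0, hn⟩ (1 : ℝ), by simp [EuclideanSpace.norm_single]⟩

lemma widthIndex_bddBelow (hE : E ⊆ ball c R) (hne : E.Nonempty) :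
    BddBelow {w | ∃ ν : EuclideanSpace ℝ (Fin n), ‖ν‖ = 1 ∧ w = dirWidth E ν} := by
  refine ⟨0, ?_⟩
  rintro w ⟨ν, hν, rfl⟩
  exact dirWidth_nonneg hE hne ν

lemma setWidth_le_dirWidth (hE : E ⊆ ball c R) (hne : E.Nonempty)
    {ν : EuclideanSpace ℝ (Fin n)} (hν : ‖ν‖ = 1) : setWidth E ≤ dirWidth E ν :=
  csInf_le (widthIndex_bddBelow hE hne) ⟨ν, hν, rfl⟩

lemma setWidth_nonneg (hn : 1 ≤ n) (hE : E ⊆ ball c R) (hne : E.Nonempty) :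
    0 ≤ setWidth E := by
  obtain ⟨u, hu⟩ := exists_unit_vector (n := n) hn
  refine le_csInf ⟨_, u, hu, rfl⟩ ?_
  rintro w ⟨ν, hν, rfl⟩
  exact dirWidth_nonneg hE hne ν

lemma setWidth_mono (hn : 1 ≤ n) (hEF : E ⊆ F) (hne : E.Nonempty) (hF : F ⊆ ball c R) :
    setWidth E ≤ setWidth F := by
  obtain ⟨u, hu⟩ := exists_unit_vector (n := n) hn
  refine le_csInf ⟨_, u, hu, rfl⟩ ?_
  rintro w ⟨ν, hν, rfl⟩
  exact (csInf_le (widthIndex_bddBelow (hEF.trans hF) hne) ⟨ν, hν, rfl⟩).trans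
    (dirWidth_mono hEF hne hF ν)

lemma dirWidth_le_add (hE : E ⊆ ball c R) (hne : E.Nonempty) (hR : 0 ≤ R)
    (ν₁ ν₂ : EuclideanSpace ℝ (Fin n)) :
    dirWidth E ν₁ ≤ dirWidth E ν₂ + 2 * R * ‖ν₁ - ν₂‖ := by
  obtain ⟨x₀, hx₀⟩ := hne
  refine csSup_le ⟨_, x₀, hx₀, x₀, hx₀, rfl⟩ ?_
  rintro w ⟨x, hx, y, hy, rfl⟩
  have h1 : (inner ℝ ν₁ (x - y) : ℝ) = (inner ℝ ν₂ (x - y) : ℝ) + (inner ℝ (ν₁ - ν₂) (x - y) : ℝ) := by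
    rw [inner_sub_left]; ring
  have h2 : (inner ℝ ν₂ (x - y) : ℝ) ≤ dirWidth E ν₂ := inner_le_dirWidth hE hx hy ν₂
  have h3 : (inner ℝ (ν₁ - ν₂) (x - y) : ℝ) ≤ ‖ν₁ - ν₂‖ * ‖x - y‖ := real_inner_le_norm _ _
  have h4 : ‖x - y‖ ≤ 2 * R := wnorm_le hE hx hy
  have h5 : ‖ν₁ - ν₂‖ * ‖x - y‖ ≤ ‖ν₁ - ν₂‖ * (2 * R) := by
    have := norm_nonneg (ν₁ - ν₂); nlinarith
  linarith

lemma dirWidth_lipschitz (hE : E ⊆ ball c R) (hne : E.Nonempty) (hR : 0 ≤ R) :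
    Continuous fun ν : EuclideanSpace ℝ (Fin n) => dirWidth E ν := by
  have : LipschitzWith (2 * R).toNNReal fun ν => dirWidth E ν := by
    apply LipschitzWith.of_dist_le_mul
    intro ν₁ ν₂
    rw [Real.dist_eq, dist_eq_norm]
    have key : ((2 * R).toNNReal : ℝ) = 2 * R := Real.coe_toNNReal _ (by linarith)
    rw [key, abs_sub_le_iff]
    constructor
    · have := dirWidth_le_add hE hne hR ν₁ ν₂
      linarith
    · have := dirWidth_le_add hE hne hR ν₂ ν₁
      rw [norm_sub_rev] at this
      linarith
  exact this.continuous

lemma setWidth_attained (hn : 1 ≤ n) (hE : E ⊆ ball c R) (hne : E.Nonempty) (hR : 0 ≤ R) :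
    ∃ ν : EuclideanSpace ℝ (Fin n), ‖ν‖ = 1 ∧ dirWidth E ν = setWidth E := by
  obtain ⟨u, hu⟩ := exists_unit_vector (n := n) hn
  have husph : u ∈ sphere (0 : EuclideanSpace ℝ (Fin n)) 1 := mem_sphere_zero_iff_norm.mpr hu
  obtain ⟨ν, hνmem, hmin⟩ := (isCompact_sphere (0 : EuclideanSpace ℝ (Fin n)) 1).exists_isMinOn
    ⟨u, husph⟩ (dirWidth_lipschitz hE hne hR).continuousOn
  have hν : ‖ν‖ = 1 := mem_sphere_zero_iff_norm.mp hνmem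
  refine ⟨ν, hν, le_antisymm ?_ (setWidth_le_dirWidth hE hne hν)⟩
  refine le_csInf ⟨_, u, hu, rfl⟩ ?_
  rintro w ⟨ν', hν', rfl⟩
  exact hmin (mem_sphere_zero_iff_norm.mpr hν')

end Aux

/-- (ii) implies (i) with `a = 2`, `δ = ε`. -/
lemma markov_to_width {n : ℕ} (hn : 1 ≤ n) {Ω : Set (EuclideanSpace ℝ (Fin n))}
    (hΩopen : IsOpen Ω) (hproper : Ω ≠ Set.univ) {ε : ℝ} (hε : 0 < ε)
    (H : ∀ y ∈ Ωᶜ, ∀ r > (0:ℝ), setWidth (Ωᶜ ∩ ball y r) > ε * r) :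
    ∀ x ∈ Ω, setWidth (Ωᶜ ∩ ball x (2 * infDist x Ωᶜ)) > ε * infDist x Ωᶜ := by
  intro x hx
  have hKcl : IsClosed Ωᶜ := hΩopen.isClosed_compl
  have hKne : Ωᶜ.Nonempty := Set.nonempty_compl.mpr hproper
  have hd : 0 < infDist x Ωᶜ :=
    (hKcl.notMem_iff_infDist_pos hKne).mp (by simpa using hx)
  set d := infDist x Ωᶜ with hdd
  obtain ⟨y, hy, hxy⟩ := hKcl.exists_infDist_eq_dist hKne x
  have hsub : Ωᶜ ∩ ball y d ⊆ Ωᶜ ∩ ball x (2 * d) := by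
    rintro z ⟨hz, hzb⟩
    refine ⟨hz, mem_ball.mpr ?_⟩
    have h1 : dist z y < d := mem_ball.mp hzb
    have h2 : dist z x ≤ dist z y + dist y x := dist_triangle z y x
    have h3 : dist y x = d := by rw [dist_comm]; exact hxy.symm
    linarith
  have hne' : (Ωᶜ ∩ ball y d).Nonempty := ⟨y, hy, mem_ball_self hd⟩
  have houter : Ωᶜ ∩ ball x (2 * d) ⊆ ball x (2 * d) := Set.inter_subset_right
  have hmono := setWidth_mono hn hsub hne' houter
  have := H y hy d hd
  linarith

set_option maxHeartbeats 1000000 in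
/-- (i) implies (ii) with `ε = min 1 δ / (2 * (1 + a))`. -/
lemma width_to_markov {n : ℕ} (hn : 1 ≤ n) {Ω : Set (EuclideanSpace ℝ (Fin n))}
    (hΩopen : IsOpen Ω) (hproper : Ω ≠ Set.univ) {a δ : ℝ} (ha : 1 < a) (hδ : 0 < δ)
    (H : ∀ x ∈ Ω, setWidth (Ωᶜ ∩ ball x (a * infDist x Ωᶜ)) > δ * infDist x Ωᶜ) :
    ∀ y ∈ Ωᶜ, ∀ r > (0:ℝ),
      setWidth (Ωᶜ ∩ ball y r) > (min 1 δ / (2 * (1 + a))) * r := by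
  intro y hy r hr
  have hKcl : IsClosed Ωᶜ := hΩopen.isClosed_compl
  have hKne : Ωᶜ.Nonempty := ⟨y, hy⟩
  have ha0 : (0:ℝ) < 1 + a := by linarith
  set s : ℝ := r / (1 + a) with hs_def
  have hs_pos : 0 < s := div_pos hr ha0
  have hsr : (1 + a) * s = r := by rw [hs_def]; field_simp [ha0.ne']
  have hs_half : 2 * s ≤ r := by nlinarith
  set E : Set (EuclideanSpace ℝ (Fin n)) := Ωᶜ ∩ ball y r with hE_def
  have hEne : E.Nonempty := ⟨y, hy, mem_ball_self hr⟩
  have hEb : E ⊆ ball y r := Set.inter_subset_right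
  set w : ℝ := setWidth E with hw_def
  have hw0 : 0 ≤ w := setWidth_nonneg hn hEb hEne
  by_contra hcon
  push_neg at hcon
  -- hcon : w ≤ (min 1 δ / (2 * (1 + a))) * r
  have hmin_le : min 1 δ ≤ 1 := min_le_left _ _
  have hmin_pos : 0 < min 1 δ := lt_min one_pos hδ
  have hws : w ≤ min 1 δ * s / 2 := by
    have : (min 1 δ / (2 * (1 + a))) * r = min 1 δ * s / 2 := by
      rw [hs_def]; field_simp
    linarith [hcon.trans_eq this]
  have hw_lt_s : w < s := by nlinarith
  obtain ⟨ν, hν, hνw⟩ := setWidth_attained hn hEb hEne hr.le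
  set x : EuclideanSpace ℝ (Fin n) := y + s • ν with hx_def
  have hxy : dist x y = s := by
    rw [hx_def, dist_eq_norm, add_sub_cancel_left, norm_smul, hν, Real.norm_eq_abs,
      abs_of_pos hs_pos, mul_one]
  -- lower bound on infDist x Ωᶜ
  have hdx_ge : s - w ≤ infDist x Ωᶜ := by
    by_contra hlt
    push_neg at hlt
    obtain ⟨z, hz, hdzx⟩ := (infDist_lt_iff hKne).mp hlt
    by_cases hzb : z ∈ ball y r
    · -- z ∈ E; inner estimate
      have hzE : z ∈ E := ⟨hz, hzb⟩
      have hzw : (inner ℝ ν (z - y) : ℝ) ≤ w := by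
        rw [hw_def, ← hνw]
        exact inner_le_dirWidth hEb hzE ⟨hy, mem_ball_self hr⟩ ν
      have hinner : (inner ℝ ν (x - z) : ℝ) = s - (inner ℝ ν (z - y) : ℝ) := by
        have : x - z = s • ν - (z - y) := by rw [hx_def]; abel
        rw [this, inner_sub_right, real_inner_smul_right, real_inner_self_eq_norm_mul_norm, hν]
        ring
      have hCS : (inner ℝ ν (x - z) : ℝ) ≤ ‖ν‖ * ‖x - z‖ := real_inner_le_norm _ _
      rw [hν, one_mul, ← dist_eq_norm] at hCS
      linarith
    · -- z far away
      have hzy : r ≤ dist z y := by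
        by_contra h; exact hzb (mem_ball.mpr (lt_of_not_ge h))
      have h2 : dist z y ≤ dist z x + dist x y := dist_triangle z x y
      rw [dist_comm z x] at h2
      linarith
  have hdx_pos : 0 < infDist x Ωᶜ := lt_of_lt_of_le (by linarith) hdx_ge
  have hxΩ : x ∈ Ω := by
    by_contra hxc
    have : infDist x Ωᶜ = 0 := infDist_zero_of_mem (by simpa using hxc)
    linarith
  have hdx_le : infDist x Ωᶜ ≤ s := (infDist_le_dist_of_mem hy).trans_eq hxy
  set dx : ℝ := infDist x Ωᶜ with hdx_def
  have hH := H x hxΩ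
  -- the small ball is inside E
  have hsub : Ωᶜ ∩ ball x (a * dx) ⊆ E := by
    rintro z ⟨hz, hzb⟩
    refine ⟨hz, mem_ball.mpr ?_⟩
    have h1 : dist z x < a * dx := mem_ball.mp hzb
    have h2 : dist z y ≤ dist z x + dist x y := dist_triangle z x y
    have h3 : a * dx ≤ a * s := by nlinarith
    nlinarith
  have hne' : (Ωᶜ ∩ ball x (a * dx)).Nonempty := by
    have : infDist x Ωᶜ < a * dx := by nlinarith
    obtain ⟨z, hz, hdz⟩ := (infDist_lt_iff hKne).mp this
    exact ⟨z, hz, mem_ball.mpr (by rwa [dist_comm])⟩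
  have hmono := setWidth_mono hn hsub hne' hEb
  -- chain of inequalities gives contradiction
  have hchain : δ * dx < w := by
    have := hH
    rw [← hdx_def] at this
    linarith
  have hfinal : δ * (s - w) < w := lt_of_le_of_lt (by nlinarith) hchain
  -- w ≤ min 1 δ * s / 2 contradicts w(1+δ) > δ s
  rcases le_total δ 1 with h1 | h1
  · rw [min_eq_right h1] at hws
    have h2 : δ * w ≤ δ * (δ * s / 2) := mul_le_mul_of_nonneg_left hws hδ.le
    have h3 : δ * (δ * s) ≤ 1 * (δ * s) :=
      mul_le_mul_of_nonneg_right h1 (mul_pos hδ hs_pos).le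
    nlinarith
  · rw [min_eq_left h1] at hws
    have h2 : (1:ℝ) * (s - w) ≤ δ * (s - w) := by
      apply mul_le_mul_of_nonneg_right h1
      linarith
    nlinarith

/-- A proper nonempty open set `Ω ⊆ ℝⁿ` satisfies the width condition
`w(Ωᶜ ∩ B(x, a·d(x))) > δ·d(x)` for all `x ∈ Ω` (for some `a > 1`, `δ > 0`) iff its complement
satisfies the global Markov geometric condition `w(Ωᶜ ∩ B(y, r)) > ε·r` for all `y ∈ Ωᶜ`, `r > 0`
(for some `ε > 0`); quantitatively, (ii) gives (i) with `a = 2`, `δ = ε`, and (i) gives (ii) with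
`ε = min 1 δ / (2(1 + a))`. -/
theorem width_condition_iff_global_markov (n : ℕ) (hn : 1 ≤ n)
    (Ω : Set (EuclideanSpace ℝ (Fin n))) (hΩopen : IsOpen Ω) (hne : Ω.Nonempty)
    (hproper : Ω ≠ Set.univ) :
    ((∃ a > (1:ℝ), ∃ δ > (0:ℝ), ∀ x ∈ Ω,
        setWidth (Ωᶜ ∩ ball x (a * infDist x Ωᶜ)) > δ * infDist x Ωᶜ) ↔
      (∃ ε > (0:ℝ), ∀ y ∈ Ωᶜ, ∀ r > (0:ℝ), setWidth (Ωᶜ ∩ ball y r) > ε * r))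
    ∧ (∀ ε > (0:ℝ), (∀ y ∈ Ωᶜ, ∀ r > (0:ℝ), setWidth (Ωᶜ ∩ ball y r) > ε * r) →
        ∀ x ∈ Ω, setWidth (Ωᶜ ∩ ball x (2 * infDist x Ωᶜ)) > ε * infDist x Ωᶜ)
    ∧ (∀ a > (1:ℝ), ∀ δ > (0:ℝ),
        (∀ x ∈ Ω, setWidth (Ωᶜ ∩ ball x (a * infDist x Ωᶜ)) > δ * infDist x Ωᶜ) →
        ∀ y ∈ Ωᶜ, ∀ r > (0:ℝ),
          setWidth (Ωᶜ ∩ ball y r) > (min 1 δ / (2 * (1 + a))) * r) := by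
  refine ⟨⟨?_, ?_⟩, ?_, ?_⟩
  · rintro ⟨a, ha, δ, hδ, H⟩
    have ha0 : (0:ℝ) < 1 + a := by linarith
    refine ⟨min 1 δ / (2 * (1 + a)), ?_, ?_⟩
    · positivity
    · exact width_to_markov hn hΩopen hproper ha hδ H
  · rintro ⟨ε, hε, H⟩
    exact ⟨2, by norm_num, ε, hε, markov_to_width hn hΩopen hproper hε H⟩
  · intro ε hε H
    exact markov_to_width hn hΩopen hproper hε H
  · intro a ha δ hδ H
    exact width_to_markov hn hΩopen hproper ha hδ H
end

section
/- For every n ≥ 1 and every integer k ≥ 1 there exists a constant c(n, k) > 0 with the following property: for every subset E of the closed unit ball B of ℝⁿ and every real polynomial P in n variables of total degree at most k, one has max_{|β| ≤ k−1} sup_{x∈E} |∂^β P(x)| ≥ c(n, k) · w(E) · sup_{x∈B} |P(x)|, where the max is over multi-indices β of order at most k − 1. -/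
open Metric MeasureTheory

/-- The multi-index partial derivative `∂^β` acting on polynomials in `n` variables. -/
noncomputable def mderiv {n : ℕ} (β : Fin n → ℕ) :
    MvPolynomial (Fin n) ℝ →ₗ[ℝ] MvPolynomial (Fin n) ℝ :=
  (List.ofFn fun i : Fin n => ((MvPolynomial.pderiv (R := ℝ) i).toLinearMap) ^ (β i)).prod

open MvPolynomial Finsupp in
lemma pderiv_pow_monomial {n : ℕ} (i : Fin n) (m : ℕ) (α : Fin n →₀ ℕ) (c : ℝ) :
    (((pderiv (R := ℝ) i).toLinearMap) ^ m) (monomial α c)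
      = monomial (α - Finsupp.single i m) (c * ((α i).descFactorial m : ℝ)) := by
  induction m with
  | zero => simp
  | succ m ih =>
      rw [pow_succ', Module.End.mul_apply]
      simp only [Derivation.coeFn_coe, pderiv_monomial]
      rw [ih]
      simp only [Derivation.coeFn_coe, pderiv_monomial]
      have h1 : α - Finsupp.single i m - Finsupp.single i 1 = α - Finsupp.single i (m + 1) := by
        ext j
        simp only [Finsupp.tsub_apply, Finsupp.single_apply]
        by_cases h : i = j <;> simp [h] <;> omega
      rw [h1]
      congr 1
      rw [Finsupp.tsub_apply, Finsupp.single_apply, if_pos rfl]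
      rcases Nat.eq_zero_or_eq_succ_pred (α i) with h | h
      · rw [h]; simp [Nat.zero_descFactorial_succ]
      · rw [h, Nat.succ_descFactorial_succ, mul_assoc, ← Nat.cast_mul, Nat.mul_comm,
          Nat.succ_eq_add_one, Nat.succ_descFactorial, Nat.cast_mul]

open MvPolynomial Finsupp in
lemma sum_single_apply_notmem {n : ℕ} (β : Fin n → ℕ) :
    ∀ (t : List (Fin n)) (i : Fin n), i ∉ t →
      ((t.map fun j => Finsupp.single j (β j)).sum) i = 0 := by
  intro t
  induction t with
  | nil => simp
  | cons j s ihs =>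
      intro i hi
      simp only [List.map_cons, List.sum_cons, Finsupp.add_apply]
      rw [ihs i (fun h => hi (List.mem_cons_of_mem _ h)), Finsupp.single_apply,
        if_neg (fun h : j = i => hi (h ▸ List.mem_cons_self)), add_zero]

open MvPolynomial Finsupp in
lemma listprod_pderiv_monomial {n : ℕ} (β : Fin n → ℕ) :
    ∀ (l : List (Fin n)), l.Nodup → ∀ (α : Fin n →₀ ℕ) (c : ℝ),
      (l.map fun i => ((pderiv (R := ℝ) i).toLinearMap) ^ (β i)).prod (monomial α c)
        = monomial (α - (l.map fun i => Finsupp.single i (β i)).sum)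
            (c * (l.map fun i => (((α i).descFactorial (β i) : ℕ) : ℝ)).prod) := by
  intro l
  induction l with
  | nil => intro _ α c; simp
  | cons i t ih =>
      intro hnd α c
      have hit : i ∉ t := (List.nodup_cons.1 hnd).1
      have hts : t.Nodup := (List.nodup_cons.1 hnd).2
      simp only [List.map_cons, List.prod_cons, List.sum_cons, Module.End.mul_apply,
        ih hts α c, pderiv_pow_monomial]
      have hα : (α - (t.map fun i => Finsupp.single i (β i)).sum) i = α i := by
        rw [Finsupp.tsub_apply]
        rw [sum_single_apply_notmem β t i hit, Nat.sub_zero]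
      rw [hα]
      congr 1
      · rw [tsub_tsub, add_comm]
      · push_cast; ring

open MvPolynomial Finsupp in
lemma mderiv_monomial {n : ℕ} (β : Fin n → ℕ) (α : Fin n →₀ ℕ) (c : ℝ) :
    mderiv β (monomial α c)
      = monomial (α - Finsupp.equivFunOnFinite.symm β)
          (c * ∏ i, (((α i).descFactorial (β i) : ℕ) : ℝ)) := by
  rw [mderiv, List.ofFn_eq_map, listprod_pderiv_monomial β _ (List.nodup_finRange n) α c]
  have hsum : ((List.finRange n).map fun i => Finsupp.single i (β i)).sum
      = Finsupp.equivFunOnFinite.symm β := by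
    rw [← Fin.sum_univ_def]
    calc ∑ i, Finsupp.single i (β i)
        = ∑ i, Finsupp.single i ((Finsupp.equivFunOnFinite.symm β) i) :=
          Finset.sum_congr rfl fun i _ => by simp
      _ = Finsupp.equivFunOnFinite.symm β := Finsupp.univ_sum_single _
  rw [hsum, ← Fin.prod_univ_def]

open MvPolynomial Finsupp in
lemma coeff_mderiv {n : ℕ} (β : Fin n → ℕ) (P : MvPolynomial (Fin n) ℝ) (γ : Fin n →₀ ℕ) :
    coeff γ (mderiv β P)
      = (∏ i, (((γ i + β i).descFactorial (β i) : ℕ) : ℝ))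
          * coeff (γ + Finsupp.equivFunOnFinite.symm β) P := by
  induction P using MvPolynomial.induction_on' with
  | add p q hp hq => rw [map_add, coeff_add, hp, hq, coeff_add]; ring
  | monomial α c =>
      rw [mderiv_monomial, coeff_monomial, coeff_monomial]
      by_cases h : α = γ + Finsupp.equivFunOnFinite.symm β
      · subst h
        rw [if_pos (add_tsub_cancel_right _ _), if_pos rfl]
        have : ∀ i : Fin n, (γ + Finsupp.equivFunOnFinite.symm β) i = γ i + β i := by
          intro i; simp
        rw [Finset.prod_congr rfl fun i _ => by rw [this i]]
        ring
      · rw [if_neg h, mul_zero]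
        by_cases h2 : α - Finsupp.equivFunOnFinite.symm β = γ
        · rw [if_pos h2]
          have hex : ∃ i, α i < β i := by
            by_contra hc
            push_neg at hc
            apply h
            rw [← h2, tsub_add_cancel_of_le]
            rw [Finsupp.le_def]
            intro i; simpa using hc i
          obtain ⟨i, hi⟩ := hex
          have : (((α i).descFactorial (β i) : ℕ) : ℝ) = 0 := by
            rw [Nat.descFactorial_eq_zero_iff_lt.2 hi, Nat.cast_zero]
          rw [Finset.prod_eq_zero (Finset.mem_univ i) this, mul_zero]
        · rw [if_neg h2]

open MvPolynomial Finsupp in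
lemma finsupp_sum_support_eq {n : ℕ} (δ : Fin n →₀ ℕ) :
    ∑ i ∈ δ.support, δ i = ∑ i, δ i :=
  Finset.sum_subset (Finset.subset_univ _)
    (fun i _ hi => by simpa using Finsupp.notMem_support_iff.1 hi)

open MvPolynomial Finsupp in
lemma coeff_mderiv_eq_zero {n D : ℕ} {β : Fin n → ℕ} {P : MvPolynomial (Fin n) ℝ}
    (hP : P.totalDegree ≤ D) (γ : Fin n →₀ ℕ) (h : D < (∑ i, γ i) + ∑ i, β i) :
    coeff γ (mderiv β P) = 0 := by
  rw [coeff_mderiv]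
  have : coeff (γ + Finsupp.equivFunOnFinite.symm β) P = 0 := by
    apply coeff_eq_zero_of_totalDegree_lt
    rw [finsupp_sum_support_eq]
    have : ∑ i, (γ + Finsupp.equivFunOnFinite.symm β) i = (∑ i, γ i) + ∑ i, β i := by
      rw [← Finset.sum_add_distrib]
      exact Finset.sum_congr rfl fun i _ => by simp
    omega
  rw [this, mul_zero]

open MvPolynomial Finsupp in
lemma mderiv_eq_zero {n D : ℕ} {β : Fin n → ℕ} {P : MvPolynomial (Fin n) ℝ}
    (hP : P.totalDegree ≤ D) (h : D < ∑ i, β i) : mderiv β P = 0 := by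
  ext γ
  rw [coeff_zero]
  exact coeff_mderiv_eq_zero hP γ (by have : 0 ≤ ∑ i, γ i := Nat.zero_le _; omega)

open MvPolynomial Finsupp in
lemma finsupp_sum_eq_one {n : ℕ} {δ : Fin n →₀ ℕ} (h : ∑ i, δ i = 1) :
    ∃ j, δ = Finsupp.single j 1 := by
  have hex : ∃ j, δ j ≠ 0 := by
    by_contra hc; push_neg at hc
    rw [Finset.sum_eq_zero (fun i _ => hc i)] at h; omega
  obtain ⟨j, hj⟩ := hex
  have hsplit : δ j + ∑ i ∈ Finset.univ.erase j, δ i = 1 := by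
    rw [Finset.add_sum_erase _ _ (Finset.mem_univ j)]; exact h
  have hδj : δ j = 1 := by
    have := Nat.zero_le (∑ i ∈ Finset.univ.erase j, δ i); omega
  have hrest : ∀ i, i ≠ j → δ i = 0 := by
    intro i hi
    have h0 : ∑ i ∈ Finset.univ.erase j, δ i = 0 := by omega
    exact Finset.sum_eq_zero_iff.1 h0 i (Finset.mem_erase.2 ⟨hi, Finset.mem_univ i⟩)
  refine ⟨j, Finsupp.ext fun i => ?_⟩
  rw [Finsupp.single_apply]
  by_cases hij : j = i
  · subst hij; simp [hδj]
  · simp [hij, hrest i (fun h => hij h.symm)]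

open MvPolynomial Finsupp in
lemma eval_affine {n : ℕ} {Q : MvPolynomial (Fin n) ℝ}
    (h0 : ∀ γ : Fin n →₀ ℕ, 1 < ∑ i, γ i → coeff γ Q = 0) (z : Fin n → ℝ) :
    eval z Q = coeff 0 Q + ∑ j, coeff (Finsupp.single j 1) Q * z j := by
  have hrep : Q = C (coeff 0 Q)
      + ∑ j, monomial (Finsupp.single j 1) (coeff (Finsupp.single j 1) Q) := by
    apply MvPolynomial.ext
    intro δ
    rw [coeff_add, coeff_C, coeff_sum]
    simp only [coeff_monomial]
    rcases Nat.lt_or_ge (∑ i, δ i) 1 with hd | hd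
    · have hδ0 : δ = 0 := by
        have : ∀ i, δ i = 0 := fun i => by
          have h1 : δ i ≤ ∑ i', δ i' := Finset.single_le_sum (fun _ _ => Nat.zero_le _)
            (Finset.mem_univ i)
          omega
        exact Finsupp.ext this
      subst hδ0
      rw [if_pos rfl, Finset.sum_eq_zero, add_zero]
      intro j _
      rw [if_neg ((fun h => one_ne_zero (Finsupp.single_eq_zero.1 h)))]
    · rcases Nat.eq_or_lt_of_le hd with hd1 | hd2
      · obtain ⟨j, hj⟩ := finsupp_sum_eq_one hd1.symm
        subst hj
        rw [if_neg (fun h => one_ne_zero (Finsupp.single_eq_zero.1 h.symm)), zero_add]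
        rw [Finset.sum_eq_single j]
        · rw [if_pos rfl]
        · intro i _ hij
          rw [if_neg (fun h => hij (by
            have := Finsupp.single_left_injective (α := Fin n) (one_ne_zero (α := ℕ))
            exact this h))]
        · intro h; exact absurd (Finset.mem_univ j) h
      · rw [h0 δ hd2]
        have hδne : δ ≠ 0 := by
          intro h; subst h; simp at hd2
        rw [if_neg (fun h => hδne h.symm), Finset.sum_eq_zero, add_zero]
        intro j _
        refine if_neg (fun h => ?_)
        have : ∑ i, (Finsupp.single j 1 : Fin n →₀ ℕ) i = 1 := by
          simp [Finsupp.single_apply]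
        rw [h] at this; omega
  conv_lhs => rw [hrep]
  rw [map_add, eval_C, map_sum]
  congr 1
  refine Finset.sum_congr rfl fun j _ => ?_
  rw [eval_monomial]
  congr 1
  rw [Finsupp.prod_single_index (by simp)]
  exact pow_one _

open MvPolynomial Finsupp in
lemma eval_const {n : ℕ} {Q : MvPolynomial (Fin n) ℝ}
    (h0 : ∀ γ : Fin n →₀ ℕ, 0 < ∑ i, γ i → coeff γ Q = 0) (z : Fin n → ℝ) :
    eval z Q = coeff 0 Q := by
  rw [eval_affine (fun γ h => h0 γ (by omega)) z, Finset.sum_eq_zero, add_zero]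
  intro j _
  rw [h0 (Finsupp.single j 1) (by simp [Finsupp.single_apply]), zero_mul]

open MvPolynomial Finsupp in
lemma eval_abs_le {n : ℕ} (Q : MvPolynomial (Fin n) ℝ) (z : Fin n → ℝ)
    (hz : ∀ i, |z i| ≤ 1) :
    |eval z Q| ≤ ∑ α ∈ Q.support, |coeff α Q| := by
  rw [eval_eq']
  refine (Finset.abs_sum_le_sum_abs _ _).trans ?_
  refine Finset.sum_le_sum fun α _ => ?_
  rw [abs_mul]
  have h1 : |∏ i, z i ^ α i| ≤ 1 := by
    rw [Finset.abs_prod]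
    refine Finset.prod_le_one (fun i _ => abs_nonneg _) fun i _ => ?_
    rw [abs_pow]
    exact pow_le_one₀ (abs_nonneg _) (hz i)
  calc |coeff α Q| * |∏ i, z i ^ α i| ≤ |coeff α Q| * 1 :=
        mul_le_mul_of_nonneg_left h1 (abs_nonneg _)
    _ = |coeff α Q| := mul_one _

open MvPolynomial Finsupp in
lemma taylor_monomial {n k : ℕ} (α : Fin n →₀ ℕ) (c : ℝ) (hα : ∀ i, α i ≤ k)
    (x y : Fin n → ℝ) :
    eval x (monomial α c) = ∑ β ∈ Fintype.piFinset (fun _ : Fin n => Finset.range (k+1)),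
      eval y (mderiv β (monomial α c))
        * ((∏ i, (x i - y i) ^ β i) * (∏ i, (((β i).factorial : ℕ) : ℝ))⁻¹) := by
  have hterm : ∀ β ∈ Fintype.piFinset (fun _ : Fin n => Finset.range (k+1)),
      eval y (mderiv β (monomial α c))
        * ((∏ i, (x i - y i) ^ β i) * (∏ i, (((β i).factorial : ℕ) : ℝ))⁻¹)
      = c * ∏ i, ((((α i).descFactorial (β i) : ℕ) : ℝ) * ((((β i).factorial : ℕ) : ℝ))⁻¹
          * y i ^ (α i - β i) * (x i - y i) ^ β i) := by
    intro β _
    rw [mderiv_monomial, eval_monomial]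
    have hprodY : (Finsupp.prod (α - Finsupp.equivFunOnFinite.symm β) fun i e => y i ^ e)
        = ∏ i, y i ^ (α i - β i) := by
      rw [Finsupp.prod_fintype _ _ (fun i => pow_zero _)]
      exact Finset.prod_congr rfl fun i _ => by
        rw [Finsupp.tsub_apply]; simp
    rw [hprodY]
    rw [(Finset.prod_inv_distrib _).symm]
    simp only [Finset.prod_mul_distrib]
    ring
  rw [Finset.sum_congr rfl hterm, ← Finset.mul_sum]
  rw [← Finset.prod_univ_sum (fun _ : Fin n => Finset.range (k+1))
    (fun i b => (((α i).descFactorial b : ℕ) : ℝ) * (((b.factorial : ℕ) : ℝ))⁻¹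
          * y i ^ (α i - b) * (x i - y i) ^ b)]
  have hinner : ∀ i : Fin n, ∑ b ∈ Finset.range (k+1),
      ((((α i).descFactorial b : ℕ) : ℝ) * (((b.factorial : ℕ) : ℝ))⁻¹
          * y i ^ (α i - b) * (x i - y i) ^ b) = x i ^ α i := by
    intro i
    rw [← Finset.sum_subset (Finset.range_subset_range.2 (Nat.succ_le_succ (hα i)))
      (fun b _ hb => by
        have : α i < b := by
          have := Finset.mem_range.not.1 hb; omega
        rw [Nat.descFactorial_eq_zero_iff_lt.2 this]
        simp)]
    have : ∀ b ∈ Finset.range (α i + 1),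
        ((((α i).descFactorial b : ℕ) : ℝ) * (((b.factorial : ℕ) : ℝ))⁻¹
          * y i ^ (α i - b) * (x i - y i) ^ b)
        = (x i - y i) ^ b * y i ^ (α i - b) * ((α i).choose b : ℝ) := by
      intro b _
      rw [Nat.descFactorial_eq_factorial_mul_choose]
      have hb0 : ((b.factorial : ℕ) : ℝ) ≠ 0 := by exact_mod_cast Nat.factorial_ne_zero b
      push_cast
      field_simp
    rw [Finset.sum_congr rfl this, ← add_pow]
    ring_nf
  rw [Finset.prod_congr rfl fun i _ => hinner i, eval_monomial,
    Finsupp.prod_fintype _ _ (fun i => pow_zero _)]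

open MvPolynomial Finsupp in
lemma taylor_mv {n k : ℕ} (P : MvPolynomial (Fin n) ℝ) (hP : P.totalDegree ≤ k)
    (x y : Fin n → ℝ) :
    eval x P = ∑ β ∈ Fintype.piFinset (fun _ : Fin n => Finset.range (k+1)),
      eval y (mderiv β P)
        * ((∏ i, (x i - y i) ^ β i) * (∏ i, (((β i).factorial : ℕ) : ℝ))⁻¹) := by
  conv_lhs => rw [P.as_sum]
  conv_rhs => rw [P.as_sum]
  rw [map_sum]
  have : ∀ β (hβ : β ∈ Fintype.piFinset (fun _ : Fin n => Finset.range (k+1))),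
      eval y (mderiv β (∑ α ∈ P.support, monomial α (coeff α P)))
        * ((∏ i, (x i - y i) ^ β i) * (∏ i, (((β i).factorial : ℕ) : ℝ))⁻¹)
      = ∑ α ∈ P.support, eval y (mderiv β (monomial α (coeff α P)))
        * ((∏ i, (x i - y i) ^ β i) * (∏ i, (((β i).factorial : ℕ) : ℝ))⁻¹) := by
    intro β _
    rw [map_sum, map_sum, Finset.sum_mul]
  rw [Finset.sum_congr rfl this, Finset.sum_comm]
  refine Finset.sum_congr rfl fun α hα => ?_
  refine taylor_monomial α (coeff α P) (fun i => ?_) x y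
  have h1 : (α.sum fun _ e => e) ≤ k := le_trans (le_totalDegree hα) hP
  have h2 : (α.sum fun _ e => e) = ∑ i, α i := by
    rw [Finsupp.sum, finsupp_sum_support_eq]
  have h3 : α i ≤ ∑ i', α i' :=
    Finset.single_le_sum (fun _ _ => Nat.zero_le _) (Finset.mem_univ i)
  omega

lemma euclid_coord_abs_le_norm {n : ℕ} (x : EuclideanSpace ℝ (Fin n)) (i : Fin n) :
    |x i| ≤ ‖x‖ := by
  rw [EuclideanSpace.norm_eq]
  have h1 : |x i| = Real.sqrt (‖x i‖ ^ 2) := by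
    rw [Real.sqrt_sq_eq_abs, Real.norm_eq_abs, abs_abs]
  rw [h1]
  exact Real.sqrt_le_sqrt (Finset.single_le_sum (f := fun j => ‖x j‖ ^ 2)
    (fun j _ => sq_nonneg _) (Finset.mem_univ i))


open MvPolynomial Finsupp in
/-- For every `n ≥ 1` and `k ≥ 1` there is `c(n,k) > 0` such that for every subset `E` of the
closed unit ball `B` of `ℝⁿ` and every polynomial `P` of total degree at most `k`,
`max_{|β| ≤ k-1} sup_{x ∈ E} |∂^β P(x)| ≥ c(n,k) · w(E) · sup_{x ∈ B} |P(x)|`. -/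
theorem ck_norm_lower_bound_width (n k : ℕ) (hn : 1 ≤ n) (hk : 1 ≤ k) :
    ∃ c > (0:ℝ), ∀ E ⊆ closedBall (0 : EuclideanSpace ℝ (Fin n)) 1,
      ∀ P : MvPolynomial (Fin n) ℝ, P.totalDegree ≤ k →
        sSup {v | ∃ β : Fin n → ℕ, (∑ i, β i) ≤ k - 1 ∧
            ∃ x ∈ E, v = |MvPolynomial.eval (fun i => x i) (mderiv β P)|} ≥
          c * setWidth E *
            sSup {v | ∃ x ∈ closedBall (0 : EuclideanSpace ℝ (Fin n)) 1,
              v = |MvPolynomial.eval (fun i => x i) P|} := by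
  classical
  set C : ℝ := ((k+1 : ℕ) : ℝ)^n * ((Nat.factorial k : ℕ) : ℝ)^n * 2 * 2^(k*n) with hCdef
  have hC : 0 < C := by positivity
  refine ⟨C⁻¹, by positivity, ?_⟩
  intro E hE P hP
  rw [ge_iff_le]
  set Aset : Set ℝ := {v | ∃ β : Fin n → ℕ, (∑ i, β i) ≤ k - 1 ∧
      ∃ x ∈ E, v = |MvPolynomial.eval (fun i => x i) (mderiv β P)|} with hAdef
  set Bset : Set ℝ := {v | ∃ x ∈ closedBall (0 : EuclideanSpace ℝ (Fin n)) 1,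
      v = |MvPolynomial.eval (fun i => x i) P|} with hBdef
  have hA0 : 0 ≤ sSup Aset := by
    apply Real.sSup_nonneg
    rintro v ⟨β, hβ, x, hx, rfl⟩
    exact abs_nonneg _
  -- unit vector
  set ν₀ : EuclideanSpace ℝ (Fin n) := EuclideanSpace.single ⟨0, hn⟩ (1:ℝ) with hν₀def
  have hν₀ : ‖ν₀‖ = 1 := by rw [hν₀def, EuclideanSpace.norm_single]; norm_num
  rcases E.eq_empty_or_nonempty with hEe | hEne
  · -- empty case
    subst hEe
    have h1 : setWidth (∅ : Set (EuclideanSpace ℝ (Fin n))) = 0 := by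
      have hset : {w | ∃ ν : EuclideanSpace ℝ (Fin n), ‖ν‖ = 1 ∧
          w = dirWidth (∅ : Set (EuclideanSpace ℝ (Fin n))) ν} = {(0:ℝ)} := by
        ext w
        simp only [Set.mem_setOf_eq, Set.mem_singleton_iff]
        constructor
        · rintro ⟨ν, hν, rfl⟩
          have : {w | ∃ x ∈ (∅ : Set (EuclideanSpace ℝ (Fin n))), ∃ y ∈
              (∅ : Set (EuclideanSpace ℝ (Fin n))), w = (inner ℝ ν (x - y) : ℝ)} = ∅ := by
            ext u; simp
          rw [dirWidth, this, Real.sSup_empty]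
        · rintro rfl
          refine ⟨ν₀, hν₀, ?_⟩
          have : {w | ∃ x ∈ (∅ : Set (EuclideanSpace ℝ (Fin n))), ∃ y ∈
              (∅ : Set (EuclideanSpace ℝ (Fin n))), w = (inner ℝ ν₀ (x - y) : ℝ)} = ∅ := by
            ext u; simp
          rw [dirWidth, this, Real.sSup_empty]
      rw [setWidth, hset, csInf_singleton]
    rw [h1, mul_zero, zero_mul]
    exact hA0
  -- nonempty case
  obtain ⟨y, hyE⟩ := hEne
  have hyB := hE hyE
  have hcoord : ∀ x : EuclideanSpace ℝ (Fin n), x ∈ closedBall (0 : EuclideanSpace ℝ (Fin n)) 1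
      → ∀ i, |x i| ≤ 1 := by
    intro x hx i
    refine (euclid_coord_abs_le_norm x i).trans ?_
    rwa [mem_closedBall, dist_zero_right] at hx
  -- bounds on dirWidth sets
  have hdirBdd : ∀ ν : EuclideanSpace ℝ (Fin n),
      ∀ u ∈ {w | ∃ x ∈ E, ∃ y ∈ E, w = (inner ℝ ν (x - y) : ℝ)}, u ≤ ‖ν‖ * 2 := by
    rintro ν u ⟨z, hz, z', hz', rfl⟩
    have h1 : (inner ℝ ν (z - z') : ℝ) ≤ ‖ν‖ * ‖z - z'‖ := real_inner_le_norm ν (z - z')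
    have h2 : ‖z - z'‖ ≤ 2 := by
      have hz1 : ‖z‖ ≤ 1 := by have := hE hz; rwa [mem_closedBall, dist_zero_right] at this
      have hz2 : ‖z'‖ ≤ 1 := by have := hE hz'; rwa [mem_closedBall, dist_zero_right] at this
      calc ‖z - z'‖ ≤ ‖z‖ + ‖z'‖ := norm_sub_le _ _
        _ ≤ 2 := by linarith
    calc (inner ℝ ν (z - z') : ℝ) ≤ ‖ν‖ * ‖z - z'‖ := h1
      _ ≤ ‖ν‖ * 2 := mul_le_mul_of_nonneg_left h2 (norm_nonneg ν)
  have hdir0 : ∀ ν : EuclideanSpace ℝ (Fin n), 0 ≤ dirWidth E ν := by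
    intro ν
    refine le_csSup ⟨‖ν‖ * 2, fun u hu => hdirBdd ν u hu⟩ ?_
    exact ⟨y, hyE, y, hyE, by simp⟩
  have hWbddBelow : BddBelow {w | ∃ ν : EuclideanSpace ℝ (Fin n), ‖ν‖ = 1 ∧ w = dirWidth E ν} :=
    ⟨0, by rintro w ⟨ν, hν, rfl⟩; exact hdir0 ν⟩
  have hw0 : 0 ≤ setWidth E :=
    le_csInf ⟨_, ν₀, hν₀, rfl⟩ (by rintro w ⟨ν, hν, rfl⟩; exact hdir0 ν)
  have hw2 : setWidth E ≤ 2 := by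
    refine (csInf_le hWbddBelow ⟨ν₀, hν₀, rfl⟩).trans ?_
    refine csSup_le ⟨0, y, hyE, y, hyE, by simp⟩ ?_
    intro u hu
    have := hdirBdd ν₀ u hu
    rwa [hν₀, one_mul] at this
  -- bddAbove of Aset and membership bound
  have hAbdd : BddAbove Aset := by
    set R : ℝ := ∑ β ∈ Fintype.piFinset (fun _ : Fin n => Finset.range k),
      ∑ α ∈ (mderiv β P).support, |coeff α (mderiv β P)| with hRdef
    refine ⟨R, ?_⟩
    rintro v ⟨β, hβ, z, hz, rfl⟩
    have hmemβ : β ∈ Fintype.piFinset (fun _ : Fin n => Finset.range k) := by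
      rw [Fintype.mem_piFinset]
      intro i
      rw [Finset.mem_range]
      have h3 : β i ≤ ∑ i', β i' :=
        Finset.single_le_sum (fun _ _ => Nat.zero_le _) (Finset.mem_univ i)
      omega
    have h1 : |MvPolynomial.eval (fun i => z i) (mderiv β P)|
        ≤ ∑ α ∈ (mderiv β P).support, |coeff α (mderiv β P)| :=
      eval_abs_le _ _ (fun i => hcoord z (hE hz) i)
    refine h1.trans ?_
    exact Finset.single_le_sum
      (f := fun β => ∑ α ∈ (mderiv β P).support, |coeff α (mderiv β P)|)
      (fun β' _ => Finset.sum_nonneg fun α _ => abs_nonneg _) hmemβ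
  have hmem : ∀ β : Fin n → ℕ, (∑ i, β i) ≤ k - 1 → ∀ z ∈ E,
      |MvPolynomial.eval (fun i => z i) (mderiv β P)| ≤ sSup Aset := by
    intro β hβ z hz
    exact le_csSup hAbdd ⟨β, hβ, z, hz, rfl⟩
  set w : ℝ := setWidth E with hwdef
  set A : ℝ := sSup Aset with hAdef2
  by_cases hwz : w = 0
  · rw [hwz, mul_zero, zero_mul]; exact hA0
  have hwpos : 0 < w := lt_of_le_of_ne hw0 (Ne.symm hwz)
  -- key coefficient bound
  have hcoeff : ∀ β : Fin n → ℕ, (∑ i, β i) = k →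
      w * |coeff (Finsupp.equivFunOnFinite.symm β) P| ≤ 2 * A := by
    intro β hβk
    obtain ⟨i, hi⟩ : ∃ i, β i ≠ 0 := by
      by_contra hc
      push_neg at hc
      rw [Finset.sum_eq_zero (fun i _ => hc i)] at hβk
      omega
    set β' : Fin n → ℕ := Function.update β i (β i - 1) with hβ'def
    have hsplit : β i + ∑ i' ∈ Finset.univ.erase i, β i' = k := by
      rw [Finset.add_sum_erase _ _ (Finset.mem_univ i)]
      exact hβk
    have hβ's : ∑ i', β' i' = k - 1 := by
      rw [hβ'def, Finset.sum_update_of_mem (Finset.mem_univ i),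
        Finset.sdiff_singleton_eq_erase]
      omega
    set Q : MvPolynomial (Fin n) ℝ := mderiv β' P with hQdef
    have hQA : ∀ z ∈ E, |MvPolynomial.eval (fun j => z j) Q| ≤ A :=
      fun z hz => hmem β' (le_of_eq hβ's) z hz
    have hQ1 : ∀ γ : Fin n →₀ ℕ, 1 < ∑ j, γ j → coeff γ Q = 0 := by
      intro γ hγ
      exact coeff_mderiv_eq_zero hP γ (by omega)
    set a : EuclideanSpace ℝ (Fin n) := WithLp.toLp 2 (fun j => coeff (Finsupp.single j 1) Q) with hadef
    have heval : ∀ z : EuclideanSpace ℝ (Fin n),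
        MvPolynomial.eval (fun j => z j) Q = coeff 0 Q + ∑ j, a j * z j :=
      fun z => eval_affine hQ1 _
    have hdiff : ∀ z z' : EuclideanSpace ℝ (Fin n),
        (inner ℝ a (z - z') : ℝ)
          = MvPolynomial.eval (fun j => z j) Q - MvPolynomial.eval (fun j => z' j) Q := by
      intro z z'
      have hzz : (inner ℝ a (z - z') : ℝ) = ∑ j, a j * (z j - z' j) := by
        rw [PiLp.inner_apply]
        simp only [RCLike.inner_apply, starRingEnd_apply, star_trivial]
        exact Finset.sum_congr rfl fun j _ => mul_comm _ _
      rw [hzz, heval z, heval z']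
      have h2 : ∑ j, a j * (z j - z' j) = (∑ j, a j * z j) - ∑ j, a j * z' j := by
        rw [← Finset.sum_sub_distrib]
        exact Finset.sum_congr rfl fun j _ => by ring
      rw [h2]
      ring
    have hinner_le : ∀ z ∈ E, ∀ z' ∈ E, (inner ℝ a (z - z') : ℝ) ≤ 2 * A := by
      intro z hz z' hz'
      rw [hdiff z z']
      have h1 := hQA z hz
      have h2 := hQA z' hz'
      have h3 : MvPolynomial.eval (fun j => z j) Q ≤ A := (abs_le.1 h1).2
      have h4 : -A ≤ MvPolynomial.eval (fun j => z' j) Q := (abs_le.1 h2).1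
      linarith
    -- relation between a i and the coefficient
    have hfact : a i = (∏ j, ((((Finsupp.single i 1 : Fin n →₀ ℕ) j + β' j).descFactorial (β' j)
        : ℕ) : ℝ)) * coeff (Finsupp.single i 1 + Finsupp.equivFunOnFinite.symm β') P := by
      rw [hadef]
      exact coeff_mderiv β' P (Finsupp.single i 1)
    have hβsingle : (Finsupp.single i 1 + Finsupp.equivFunOnFinite.symm β')
        = Finsupp.equivFunOnFinite.symm β := by
      apply Finsupp.ext
      intro j
      rw [Finsupp.add_apply, Finsupp.single_apply]
      by_cases hij : i = j
      · subst hij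
        simp [hβ'def]
        omega
      · simp [hβ'def, Function.update_apply, if_neg (Ne.symm hij), hij]
    have hd1 : (1:ℝ) ≤ ∏ j, ((((Finsupp.single i 1 : Fin n →₀ ℕ) j + β' j).descFactorial (β' j)
        : ℕ) : ℝ) := by
      rw [← Nat.cast_prod]
      have hp : 0 < ∏ j, ((Finsupp.single i 1 : Fin n →₀ ℕ) j + β' j).descFactorial (β' j) := by
        refine Finset.prod_pos fun j _ => Nat.pos_of_ne_zero ?_
        rw [Ne, Nat.descFactorial_eq_zero_iff_lt]
        omega
      exact_mod_cast hp
    have hcle : |coeff (Finsupp.equivFunOnFinite.symm β) P| ≤ |a i| := by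
      rw [← hβsingle, hfact, abs_mul]
      nth_rewrite 1 [← one_mul |coeff (Finsupp.single i 1 + Finsupp.equivFunOnFinite.symm β') P|]
      refine mul_le_mul_of_nonneg_right ?_ (abs_nonneg _)
      rw [abs_of_nonneg (by linarith)]
      exact hd1
    by_cases ha : a = 0
    · have : a i = 0 := by rw [ha]; rfl
      rw [this, abs_zero] at hcle
      have : |coeff (Finsupp.equivFunOnFinite.symm β) P| = 0 := le_antisymm hcle (abs_nonneg _)
      rw [this, mul_zero]
      linarith
    · set νa : EuclideanSpace ℝ (Fin n) := ‖a‖⁻¹ • a with hνadef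
      have hνa : ‖νa‖ = 1 := norm_smul_inv_norm (𝕜 := ℝ) ha
      have hdir : dirWidth E νa ≤ ‖a‖⁻¹ * (2 * A) := by
        refine csSup_le ⟨_, y, hyE, y, hyE, rfl⟩ ?_
        rintro u ⟨z, hz, z', hz', rfl⟩
        rw [hνadef, real_inner_smul_left]
        exact mul_le_mul_of_nonneg_left (hinner_le z hz z' hz')
          (inv_nonneg.2 (norm_nonneg a))
      have hwle : w ≤ ‖a‖⁻¹ * (2 * A) :=
        (csInf_le hWbddBelow ⟨νa, hνa, rfl⟩).trans hdir
      have hna : (0:ℝ) < ‖a‖ := norm_pos_iff.2 ha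
      have hwa : w * ‖a‖ ≤ 2 * A := by
        have := mul_le_mul_of_nonneg_right hwle (le_of_lt hna)
        rwa [mul_comm (‖a‖⁻¹) _, mul_assoc, inv_mul_cancel₀ (ne_of_gt hna), mul_one] at this
      have hana : |a i| ≤ ‖a‖ := euclid_coord_abs_le_norm a i
      calc w * |coeff (Finsupp.equivFunOnFinite.symm β) P| ≤ w * ‖a‖ := by
            refine mul_le_mul_of_nonneg_left (hcle.trans hana) (le_of_lt hwpos)
        _ ≤ 2 * A := hwa
  -- pointwise bound on the ball
  have hx : ∀ x : EuclideanSpace ℝ (Fin n), x ∈ closedBall (0 : EuclideanSpace ℝ (Fin n)) 1 →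
      w * |MvPolynomial.eval (fun i => x i) P| ≤ C * A := by
    intro x hxB
    set F' := Fintype.piFinset (fun _ : Fin n => Finset.range (k+1)) with hF'def
    set t : (Fin n → ℕ) → ℝ := fun β =>
      MvPolynomial.eval (fun i => y i) (mderiv β P)
        * ((∏ i, (x i - y i) ^ β i) * (∏ i, (((β i).factorial : ℕ) : ℝ))⁻¹) with htdef
    have htaylor : MvPolynomial.eval (fun i => x i) P = ∑ β ∈ F', t β :=
      taylor_mv P hP _ _
    set D : ℝ := ((Nat.factorial k : ℕ) : ℝ)^n * (2 * A) * 2^(k*n) with hDdef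
    have h2 : ∀ β ∈ F', w * |t β| ≤ D := by
      intro β hβF
      have hβle : ∀ i, β i ≤ k := by
        intro i
        have := (Fintype.mem_piFinset.1 hβF) i
        rw [Finset.mem_range] at this
        omega
      have hr : |(∏ i, (x i - y i) ^ β i) * (∏ i, (((β i).factorial : ℕ) : ℝ))⁻¹|
          ≤ 2^(k*n) := by
        rw [abs_mul]
        have hr1 : |∏ i, (x i - y i) ^ β i| ≤ 2^(k*n) := by
          rw [Finset.abs_prod]
          have : ∀ i ∈ Finset.univ, |(x i - y i) ^ β i| ≤ 2^k := by
            intro i _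
            rw [abs_pow]
            have hxy : |x i - y i| ≤ 2 := by
              have h1 := hcoord x hxB i
              have h2 := hcoord y hyB i
              have := abs_sub (x i) (y i)
              calc |x i - y i| ≤ |x i| + |y i| := abs_sub _ _
                _ ≤ 2 := by linarith
            calc |x i - y i| ^ β i ≤ 2 ^ β i :=
                  pow_le_pow_left₀ (abs_nonneg _) hxy _
              _ ≤ 2 ^ k := pow_le_pow_right₀ (by norm_num) (hβle i)
          calc ∏ i, |(x i - y i) ^ β i| ≤ ∏ _i : Fin n, (2:ℝ)^k :=
                Finset.prod_le_prod (fun i _ => abs_nonneg _) this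
            _ = 2^(k*n) := by
              rw [Finset.prod_const, Finset.card_univ, Fintype.card_fin, ← pow_mul]
        have hr2 : |(∏ i, (((β i).factorial : ℕ) : ℝ))⁻¹| ≤ 1 := by
          have hpos : (0:ℝ) < ∏ i, (((β i).factorial : ℕ) : ℝ) := by
            refine Finset.prod_pos fun i _ => ?_
            exact_mod_cast (β i).factorial_pos
          rw [abs_of_nonneg (inv_nonneg.2 (le_of_lt hpos))]
          rw [inv_le_one_iff₀]
          right
          rw [← Nat.cast_prod]
          exact_mod_cast Nat.one_le_iff_ne_zero.2 (by
            refine Finset.prod_ne_zero_iff.2 fun i _ => (β i).factorial_ne_zero)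
        calc |∏ i, (x i - y i) ^ β i| * |(∏ i, (((β i).factorial : ℕ) : ℝ))⁻¹|
            ≤ 2^(k*n) * 1 := mul_le_mul hr1 hr2 (abs_nonneg _) (by positivity)
          _ = 2^(k*n) := mul_one _
      have hw_e : w * |MvPolynomial.eval (fun i => y i) (mderiv β P)|
          ≤ ((Nat.factorial k : ℕ) : ℝ)^n * (2 * A) := by
        have h2A : (0:ℝ) ≤ 2 * A := by linarith
        have hfk : (1:ℝ) ≤ ((Nat.factorial k : ℕ) : ℝ)^n := by
          have : (1:ℝ) ≤ ((Nat.factorial k : ℕ) : ℝ) := by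
            exact_mod_cast Nat.one_le_iff_ne_zero.2 (Nat.factorial_ne_zero k)
          exact one_le_pow₀ this
        rcases show (∑ i, β i) ≤ k - 1 ∨ (∑ i, β i) = k ∨ k < (∑ i, β i) by omega
          with hc | hc | hc
        · have h1 := hmem β hc y hyE
          calc w * |MvPolynomial.eval (fun i => y i) (mderiv β P)| ≤ 2 * A :=
                mul_le_mul hw2 h1 (abs_nonneg _) (by norm_num)
            _ ≤ ((Nat.factorial k : ℕ) : ℝ)^n * (2 * A) := by
              nth_rewrite 1 [← one_mul (2*A)]
              exact mul_le_mul_of_nonneg_right hfk h2A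
        · have he : MvPolynomial.eval (fun i => y i) (mderiv β P)
              = (∏ j, (((β j).factorial : ℕ) : ℝ))
                  * coeff (Finsupp.equivFunOnFinite.symm β) P := by
            rw [eval_const (fun γ hγ => coeff_mderiv_eq_zero hP γ (by omega))]
            rw [coeff_mderiv]
            rw [zero_add]
            congr 1
            refine Finset.prod_congr rfl fun j _ => ?_
            rw [Finsupp.coe_zero, Pi.zero_apply, zero_add, Nat.descFactorial_self]
          rw [he, abs_mul]
          have hfprod : |∏ j, (((β j).factorial : ℕ) : ℝ)| ≤ ((Nat.factorial k : ℕ) : ℝ)^n := by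
            rw [abs_of_nonneg (by positivity)]
            calc ∏ j, (((β j).factorial : ℕ) : ℝ) ≤ ∏ _j : Fin n, ((Nat.factorial k : ℕ) : ℝ) := by
                  refine Finset.prod_le_prod (fun j _ => by positivity) fun j _ => ?_
                  exact_mod_cast Nat.factorial_le (hβle j)
              _ = ((Nat.factorial k : ℕ) : ℝ)^n := by
                rw [Finset.prod_const, Finset.card_univ, Fintype.card_fin]
          calc w * (|∏ j, (((β j).factorial : ℕ) : ℝ)|
                * |coeff (Finsupp.equivFunOnFinite.symm β) P|)
              = |∏ j, (((β j).factorial : ℕ) : ℝ)|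
                * (w * |coeff (Finsupp.equivFunOnFinite.symm β) P|) := by ring
            _ ≤ ((Nat.factorial k : ℕ) : ℝ)^n * (2 * A) := by
              refine mul_le_mul hfprod (hcoeff β hc) ?_ ?_
              · positivity
              · positivity
        · rw [mderiv_eq_zero hP hc]
          simp only [map_zero, abs_zero, mul_zero]
          positivity
      calc w * |t β| = (w * |MvPolynomial.eval (fun i => y i) (mderiv β P)|)
            * |(∏ i, (x i - y i) ^ β i) * (∏ i, (((β i).factorial : ℕ) : ℝ))⁻¹| := by
            rw [htdef, abs_mul]; ring
        _ ≤ (((Nat.factorial k : ℕ) : ℝ)^n * (2 * A)) * 2^(k*n) := by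
            refine mul_le_mul hw_e hr (abs_nonneg _) ?_
            positivity
        _ = D := by rw [hDdef]
    have hcard : (F'.card : ℝ) = ((k+1 : ℕ) : ℝ)^n := by
      rw [hF'def, Fintype.card_piFinset]
      simp [Finset.card_range]
    calc w * |MvPolynomial.eval (fun i => x i) P|
        ≤ w * ∑ β ∈ F', |t β| := by
          rw [htaylor]
          exact mul_le_mul_of_nonneg_left (Finset.abs_sum_le_sum_abs _ _) hw0
      _ = ∑ β ∈ F', w * |t β| := Finset.mul_sum _ _ _
      _ ≤ ∑ _β ∈ F', D := Finset.sum_le_sum h2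
      _ = (F'.card : ℝ) * D := by rw [Finset.sum_const, nsmul_eq_mul]
      _ = C * A := by rw [hcard, hDdef, hCdef]; ring
  -- conclude
  have hM : sSup Bset ≤ (C * A) / w := by
    refine csSup_le ⟨_, 0, mem_closedBall_self zero_le_one, rfl⟩ ?_
    rintro v ⟨x, hxB, rfl⟩
    rw [le_div_iff₀ hwpos, mul_comm]
    exact hx x hxB
  calc C⁻¹ * w * sSup Bset ≤ C⁻¹ * w * ((C * A) / w) := by
        refine mul_le_mul_of_nonneg_left hM ?_
        positivity
    _ = A := by field_simp
end

section
/- Let d ≥ 1, let E be a bounded subset of ℝ^d, and let ε > 0. Suppose that for every choice of d points x₁, x₂, …, x_d in E there exists a unit vector ν ∈ ℝ^d satisfying |ν · x_i| ≤ ε for all 1 ≤ i ≤ d. Then there exists a unit vector ν₀ ∈ ℝ^d such that |ν₀ · x| ≤ 2dε for every x ∈ E. -/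
open Metric Matrix

lemma euclid_abs_apply_le_norm {d : ℕ} (x : EuclideanSpace ℝ (Fin d)) (j : Fin d) :
    |x j| ≤ ‖x‖ := by
  rw [EuclideanSpace.norm_eq, ← Real.sqrt_sq_eq_abs]
  apply Real.sqrt_le_sqrt
  have := Finset.single_le_sum (f := fun k => ‖x k‖ ^ 2) (fun k _ => sq_nonneg _)
    (Finset.mem_univ j)
  simpa [Real.norm_eq_abs, sq_abs] using this

/-- If `E` is a bounded subset of `ℝᵈ` and for every `d` points `x₁, …, x_d ∈ E` there is a unit
vector `ν` with `|ν · xᵢ| ≤ ε` for all `i`, then there is a single unit vector `ν₀` with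
`|ν₀ · x| ≤ 2dε` for every `x ∈ E`. -/
theorem exists_uniform_direction (d : ℕ) (hd : 1 ≤ d)
    (E : Set (EuclideanSpace ℝ (Fin d))) (hE : Bornology.IsBounded E)
    (ε : ℝ) (hε : 0 < ε)
    (h : ∀ x : Fin d → EuclideanSpace ℝ (Fin d), (∀ i, x i ∈ E) →
      ∃ ν : EuclideanSpace ℝ (Fin d), ‖ν‖ = 1 ∧ ∀ i, |(inner ℝ ν (x i) : ℝ)| ≤ ε) :
    ∃ ν₀ : EuclideanSpace ℝ (Fin d), ‖ν₀‖ = 1 ∧ ∀ x ∈ E, |(inner ℝ ν₀ x : ℝ)| ≤ 2 * d * ε := by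
  by_cases hspan : Submodule.span ℝ E = ⊤
  · -- E spans the whole space
    obtain ⟨M, hM⟩ := isBounded_iff_forall_norm_le.mp hE
    -- The set of absolute determinants of tuples from E
    set T : Set ℝ := {r | ∃ y : Fin d → EuclideanSpace ℝ (Fin d),
      (∀ i, y i ∈ E) ∧ r = |(Matrix.of fun i j => y i j : Matrix (Fin d) (Fin d) ℝ).det|} with hT
    have hTbdd : BddAbove T := by
      refine ⟨(d.factorial : ℝ) * M ^ d, fun r hr => ?_⟩
      obtain ⟨y, hy, rfl⟩ := hr
      have hb : ∀ i j, |(Matrix.of fun i j => y i j : Matrix (Fin d) (Fin d) ℝ) i j| ≤ M :=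
        fun i j => (euclid_abs_apply_le_norm (y i) j).trans (hM _ (hy i))
      have := Matrix.det_le (A := (Matrix.of fun i j => y i j : Matrix (Fin d) (Fin d) ℝ)) (abv := AbsoluteValue.abs) (x := M) hb
      simpa [Fintype.card_fin, nsmul_eq_mul] using this
    -- There is a tuple from E with nonzero determinant
    obtain ⟨s, hsE, hs_span, hs_ind⟩ := exists_linearIndependent ℝ E
    have hspan' : Submodule.span ℝ s = ⊤ := hs_span.trans hspan
    let b : Module.Basis s ℝ (EuclideanSpace ℝ (Fin d)) := Module.Basis.mk hs_ind (by rw [Subtype.range_val, hspan'])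
    have : FiniteDimensional ℝ (EuclideanSpace ℝ (Fin d)) := by infer_instance
    haveI : Fintype s := FiniteDimensional.fintypeBasisIndex b
    have hcard : Fintype.card s = d := by
      have := Module.finrank_eq_card_basis b
      rw [finrank_euclideanSpace_fin] at this
      omega
    let e : s ≃ Fin d := Fintype.equivFinOfCardEq hcard
    let b' := b.reindex e
    have hz : ∀ i, b' i ∈ E := by
      intro i
      have : b' i = b (e.symm i) := b.reindex_apply e i
      rw [this, Module.Basis.mk_apply]
      exact hsE (e.symm i).2
    have hdet0 : (Matrix.of fun i j => b' i j : Matrix (Fin d) (Fin d) ℝ).det ≠ 0 := by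
      have hu := (EuclideanSpace.basisFun (Fin d) ℝ).toBasis.isUnit_det b'
      rw [Module.Basis.det_apply] at hu
      have hmat : (EuclideanSpace.basisFun (Fin d) ℝ).toBasis.toMatrix b'
          = (Matrix.of fun i j => b' i j : Matrix (Fin d) (Fin d) ℝ)ᵀ := by
        ext i j
        simp [Module.Basis.toMatrix_apply, OrthonormalBasis.coe_toBasis_repr_apply, EuclideanSpace.basisFun_repr, Matrix.transpose_apply]
      rw [hmat, Matrix.det_transpose] at hu
      exact hu.ne_zero
    have hTne : T.Nonempty := ⟨_, b', hz, rfl⟩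
    set D : ℝ := sSup T with hD
    have hDpos : 0 < D := by
      have h1 : |(Matrix.of fun i j => b' i j : Matrix (Fin d) (Fin d) ℝ).det| ≤ D :=
        le_csSup hTbdd ⟨b', hz, rfl⟩
      exact lt_of_lt_of_le (abs_pos.mpr hdet0) h1
    obtain ⟨r, hrT, hr⟩ := exists_lt_of_lt_csSup hTne (by linarith : D / 2 < D)
    obtain ⟨y, hyE, rfl⟩ := hrT
    set A : Matrix (Fin d) (Fin d) ℝ := Matrix.of fun i j => y i j with hA
    have hdetA : A.det ≠ 0 := by
      intro h0
      rw [h0] at hr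
      simp at hr
      linarith
    obtain ⟨ν, hν1, hνε⟩ := h y hyE
    refine ⟨ν, hν1, fun x hx => ?_⟩
    -- Cramer expansion
    set c : Fin d → ℝ := fun i => (A.det)⁻¹ * Matrix.cramer Aᵀ x i with hc
    have hxj : ∀ j, x j = ∑ i, c i * A i j := by
      intro j
      have := congrFun (Matrix.mulVec_cramer Aᵀ x) j
      rw [Matrix.det_transpose] at this
      have h2 : (Aᵀ *ᵥ Matrix.cramer Aᵀ x) j = ∑ i, A i j * Matrix.cramer Aᵀ x i := by
        simp [Matrix.mulVec, dotProduct, Matrix.transpose_apply]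
      rw [h2] at this
      have h3 : (A.det • x.ofLp) j = A.det * x j := rfl
      rw [h3] at this
      have h4 : x j = (A.det)⁻¹ * ∑ i, A i j * Matrix.cramer Aᵀ x i := by
        rw [this]; field_simp
      rw [h4, Finset.mul_sum]
      exact Finset.sum_congr rfl fun i _ => by simp only [hc]; ring
    have hcbound : ∀ i, |c i| ≤ 2 := by
      intro i
      have h1 : Matrix.cramer Aᵀ x i = (A.updateRow i x).det := Matrix.cramer_transpose_apply A x i
      have h2 : |(A.updateRow i x).det| ≤ D := by
        apply le_csSup hTbdd
        refine ⟨Function.update y i x, fun k => ?_, ?_⟩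
        · rcases eq_or_ne k i with rfl | hk
          · simpa using hx
          · simpa [Function.update_of_ne hk] using hyE k
        · have hAi : A.updateRow i x = Matrix.of fun k j => Function.update y i x k j := by
            ext k j
            rcases eq_or_ne k i with rfl | hk
            · simp [Matrix.updateRow_self]
            · simp [Matrix.updateRow_ne hk, Function.update_of_ne hk, hA]
          rw [hAi]
      have hAd : D / 2 < |A.det| := hr
      rw [hc, abs_mul, abs_inv, h1]
      rw [inv_mul_le_iff₀ (abs_pos.mpr hdetA)]
      calc |(A.updateRow i x).det| ≤ D := h2
        _ ≤ |A.det| * 2 := by linarith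
    have hinner : (inner ℝ ν x : ℝ) = ∑ i, c i * (inner ℝ ν (y i) : ℝ) := by
      simp only [← real_inner_comm ν]
      simp only [PiLp.inner_apply, RCLike.inner_apply, conj_trivial]
      calc (∑ j, ν j * x j) = ∑ j, ∑ i, c i * (ν j * y i j) := by
            refine Finset.sum_congr rfl fun j _ => ?_
            rw [hxj j, Finset.mul_sum]
            exact Finset.sum_congr rfl fun i _ => by simp only [hA, Matrix.of_apply]; ring
        _ = ∑ i, ∑ j, c i * (ν j * y i j) := Finset.sum_comm
        _ = ∑ i, c i * ∑ j, ν j * y i j := by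
            exact Finset.sum_congr rfl fun i _ => by rw [Finset.mul_sum]
    rw [hinner]
    calc |∑ i, c i * (inner ℝ ν (y i) : ℝ)| ≤ ∑ i, |c i * (inner ℝ ν (y i) : ℝ)| :=
          Finset.abs_sum_le_sum_abs _ _
      _ ≤ ∑ _i : Fin d, 2 * ε := by
          apply Finset.sum_le_sum
          intro i _
          rw [abs_mul]
          exact mul_le_mul (hcbound i) (hνε i) (abs_nonneg _) (by norm_num)
      _ = 2 * d * ε := by simp [Finset.sum_const]; ring
  · -- E does not span: take a unit normal to span E
    have hne : (Submodule.span ℝ E)ᗮ ≠ ⊥ := fun h0 =>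
      hspan (Submodule.orthogonal_eq_bot_iff.mp h0)
    obtain ⟨v, hvmem, hv0⟩ := Submodule.exists_mem_ne_zero_of_ne_bot hne
    refine ⟨‖v‖⁻¹ • v, ?_, ?_⟩
    · rw [norm_smul, norm_inv, norm_norm, inv_mul_cancel₀ (norm_ne_zero_iff.mpr hv0)]
    · intro x hx
      have : (inner ℝ v x : ℝ) = 0 := by
        have := hvmem _ (Submodule.subset_span hx)
        rwa [real_inner_comm] at this
      rw [real_inner_smul_left, this, mul_zero, abs_zero]
      positivity
end

section
/- For every n ≥ 1 and every integer k ≥ 1 there exists a constant c(n, k) > 0 with the following property. Let B be the closed unit ball of ℝⁿ, let δ > 0, and let E ⊆ B be a set such that every real polynomial P in n variables of total degree at most k satisfies max_{|β| ≤ k−1} sup_{x∈E} |∂^β P(x)| ≥ δ · sup_{x∈B} |P(x)|. Then there exists a finite set F ⊆ {(x, β) : x ∈ E, β a multi-index with |β| ≤ k − 1} of cardinality equal to dim ℙ_k = C(n + k, k) such that every polynomial P of total degree at most k satisfies max_{(x,β)∈F} |∂^β P(x)| ≥ c(n, k) · δ · sup_{x∈B} |P(x)|. -/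
open Metric MeasureTheory

noncomputable def evalLM {n : ℕ} (x : EuclideanSpace ℝ (Fin n)) :
    MvPolynomial (Fin n) ℝ →ₗ[ℝ] ℝ where
  toFun P := MvPolynomial.eval (fun i => x i) P
  map_add' p q := by simp
  map_smul' c p := by simp [MvPolynomial.smul_eval]

lemma continuous_evalE {n : ℕ} (R : MvPolynomial (Fin n) ℝ) :
    Continuous fun x : EuclideanSpace ℝ (Fin n) => MvPolynomial.eval (fun i => x i) R := by
  have h1 : Continuous fun y : Fin n → ℝ => MvPolynomial.eval y R := R.continuous_eval
  have h2 : Continuous fun x : EuclideanSpace ℝ (Fin n) => (fun i => x i) :=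
    continuous_pi fun i => (EuclideanSpace.proj i).continuous
  exact h1.comp h2

lemma exists_bound_ball {n : ℕ} (R : MvPolynomial (Fin n) ℝ) :
    ∃ M : ℝ, 0 ≤ M ∧ ∀ x ∈ closedBall (0 : EuclideanSpace ℝ (Fin n)) 1,
      |MvPolynomial.eval (fun i => x i) R| ≤ M := by
  obtain ⟨M, hM⟩ := (isCompact_closedBall (0 : EuclideanSpace ℝ (Fin n)) 1).bddAbove_image
    ((continuous_evalE R).abs.continuousOn)
  exact ⟨max M 0, le_max_right _ _, fun x hx =>
    le_trans (hM (Set.mem_image_of_mem _ hx)) (le_max_left _ _)⟩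

lemma eq_zero_of_zero_on_ball {n : ℕ} (hn : 1 ≤ n) (R : MvPolynomial (Fin n) ℝ)
    (h : ∀ x ∈ closedBall (0 : EuclideanSpace ℝ (Fin n)) 1,
      MvPolynomial.eval (fun i => x i) R = 0) : R = 0 := by
  have hf : AnalyticOnNhd ℝ (fun y : Fin n → ℝ => MvPolynomial.eval y R) Set.univ :=
    AnalyticOnNhd.eval_mvPolynomial R
  have hball : ∀ y : Fin n → ℝ, y ∈ closedBall (0 : Fin n → ℝ) (1 / n) →
      MvPolynomial.eval y R = 0 := by
    intro y hy
    have hyc : ∀ i, |y i| ≤ 1 / n := by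
      intro i
      have := (pi_norm_le_iff_of_nonneg (by positivity : (0:ℝ) ≤ 1/n)).mp
        (by simpa using mem_closedBall_zero_iff.mp hy)
      simpa [Real.norm_eq_abs] using this i
    set x : EuclideanSpace ℝ (Fin n) := (WithLp.equiv 2 (Fin n → ℝ)).symm y with hx
    have hxy : (fun i => x i) = y := rfl
    have hxball : x ∈ closedBall (0 : EuclideanSpace ℝ (Fin n)) 1 := by
      rw [mem_closedBall_zero_iff]
      rw [EuclideanSpace.norm_eq]
      have hn1 : (1:ℝ) ≤ (n:ℝ) := by exact_mod_cast hn
      have hsum : ∑ i, ‖x i‖ ^ 2 ≤ 1 := by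
        calc ∑ i, ‖x i‖ ^ 2 ≤ ∑ _i : Fin n, (1/(n:ℝ))^2 := by
              refine Finset.sum_le_sum fun i _ => ?_
              have hxe : x i = y i := rfl
              rw [Real.norm_eq_abs, hxe]
              exact pow_le_pow_left₀ (abs_nonneg _) (hyc i) 2
          _ = (n:ℝ) * (1/(n:ℝ))^2 := by
              rw [Finset.sum_const, Finset.card_univ, Fintype.card_fin, nsmul_eq_mul]
          _ ≤ 1 := by
              rw [div_pow, one_pow]
              rw [mul_one_div]
              rw [div_le_one (by positivity)]
              nlinarith
      calc Real.sqrt (∑ i, ‖x i‖ ^ 2) ≤ Real.sqrt 1 := Real.sqrt_le_sqrt hsum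
        _ = 1 := Real.sqrt_one
    rw [← hxy]
    exact h x hxball
  have hz : (fun y : Fin n → ℝ => MvPolynomial.eval y R) =ᶠ[nhds 0] 0 := by
    filter_upwards [closedBall_mem_nhds (0 : Fin n → ℝ) (by positivity : (0:ℝ) < 1/n)] with y hy
    exact hball y hy
  have := hf.eqOn_zero_of_preconnected_of_eventuallyEq_zero isPreconnected_univ
    (Set.mem_univ 0) hz
  exact MvPolynomial.funext fun y => by simpa using this (Set.mem_univ y)


noncomputable def indexEquiv (n k : ℕ) :
    {s : Fin n →₀ ℕ // (s.sum fun _ e => e) ≤ k} ≃ {P : Fin (n+1) → ℕ // ∑ i, P i = k} where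
  toFun s := ⟨Fin.cons (k - ∑ i, s.1 i) (fun i => s.1 i), by
    have hs : (s.1.sum fun _ e => e) = ∑ i, s.1 i := Finsupp.sum_fintype _ _ (fun _ => rfl)
    have h2 := s.2
    rw [hs] at h2
    rw [Fin.sum_cons]
    omega⟩
  invFun P := ⟨Finsupp.equivFunOnFinite.symm (fun i : Fin n => P.1 i.succ), by
    have hs : ((Finsupp.equivFunOnFinite.symm fun i : Fin n => P.1 i.succ).sum fun _ e => e)
        = ∑ i : Fin n, P.1 i.succ := by
      rw [Finsupp.sum_fintype _ _ (fun _ => rfl)]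
      simp
    rw [hs]
    have h2 := P.2
    rw [Fin.sum_univ_succ] at h2
    omega⟩
  left_inv s := by
    ext a
    simp
  right_inv P := by
    have h2 := P.2
    rw [Fin.sum_univ_succ] at h2
    ext j
    refine Fin.cases ?_ (fun i => ?_) j
    · simp only [Fin.cons_zero]
      have : ∑ i, (Finsupp.equivFunOnFinite.symm fun i : Fin n => P.1 i.succ) i = ∑ i : Fin n, P.1 i.succ := by
        simp
      rw [this]
      omega
    · simp

lemma card_index (n k : ℕ) :
    Nat.card {s : Fin n →₀ ℕ // (s.sum fun _ e => e) ≤ k} = (n + k).choose k := by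
  have e := (indexEquiv n k).trans (Sym.equivNatSumOfFintype (Fin (n+1)) k).symm
  rw [Nat.card_congr e, Nat.card_eq_fintype_card, Sym.card_sym_eq_choose]
  congr 1
  simp


set_option maxHeartbeats 1000000 in
/-- For every `n ≥ 1`, `k ≥ 1` there is `c(n,k) > 0` such that: if `δ > 0` and `E` is a subset of
the closed unit ball `B` of `ℝⁿ` with
`max_{|β| ≤ k-1} sup_{x ∈ E} |∂^β P(x)| ≥ δ · sup_B |P|` for every polynomial `P` of total degree
at most `k`, then there is a set `F` of pairs `(x, β)`, `x ∈ E`, `|β| ≤ k-1`, of cardinality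
`dim ℙ_k = C(n+k, k)`, with `max_{(x,β) ∈ F} |∂^β P(x)| ≥ c(n,k) · δ · sup_B |P|` for all such `P`. -/
theorem exists_finite_interpolation_set (n k : ℕ) (hn : 1 ≤ n) (hk : 1 ≤ k) :
    ∃ c > (0:ℝ), ∀ δ : ℝ, 0 < δ →
      ∀ E ⊆ closedBall (0 : EuclideanSpace ℝ (Fin n)) 1,
      (∀ P : MvPolynomial (Fin n) ℝ, P.totalDegree ≤ k →
        sSup {v | ∃ β : Fin n → ℕ, (∑ i, β i) ≤ k - 1 ∧
            ∃ x ∈ E, v = |MvPolynomial.eval (fun i => x i) (mderiv β P)|} ≥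
          δ * sSup {v | ∃ x ∈ closedBall (0 : EuclideanSpace ℝ (Fin n)) 1,
              v = |MvPolynomial.eval (fun i => x i) P|}) →
      ∃ F : Finset ((EuclideanSpace ℝ (Fin n)) × (Fin n → ℕ)),
        (∀ q ∈ F, q.1 ∈ E ∧ (∑ i, q.2 i) ≤ k - 1) ∧
        F.card = Nat.choose (n + k) k ∧
        ∀ P : MvPolynomial (Fin n) ℝ, P.totalDegree ≤ k →
          sSup {v | ∃ q ∈ F, v = |MvPolynomial.eval (fun i => q.1 i) (mderiv q.2 P)|} ≥
            c * δ * sSup {v | ∃ x ∈ closedBall (0 : EuclideanSpace ℝ (Fin n)) 1,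
              v = |MvPolynomial.eval (fun i => x i) P|} := by
  classical
  -- the index set and basis
  set ιs : Set (Fin n →₀ ℕ) := {s | (s.sum fun _ e => e) ≤ k} with hιs
  haveI hfinι : Finite ↥ιs := by
    have : Finite {s : Fin n →₀ ℕ // (s.sum fun _ e => e) ≤ k} :=
      Nat.finite_of_card_ne_zero (by rw [card_index n k]; exact (Nat.choose_pos (Nat.le_add_left k n)).ne')
    exact this
  haveI : Fintype ↥ιs := Fintype.ofFinite _
  set V : Submodule ℝ (MvPolynomial (Fin n) ℝ) := MvPolynomial.restrictTotalDegree (Fin n) ℝ k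
    with hVdef
  let b : Module.Basis ↥ιs ℝ ↥V := MvPolynomial.basisRestrictSupport ℝ ιs
  haveI : Nonempty ↥ιs := ⟨⟨0, by simp [hιs]⟩⟩
  set N : ℕ := Fintype.card ↥ιs with hNdef
  have hN : N = (n + k).choose k := by
    rw [hNdef, ← Nat.card_eq_fintype_card]
    exact card_index n k
  have hNpos : 0 < N := by rw [hN]; exact Nat.choose_pos (Nat.le_add_left k n)
  have hNR : (0:ℝ) < 2 * N := by positivity
  have hfinrank : Module.finrank ℝ ↥V = N := (Module.finrank_eq_card_basis b).symm ▸ rfl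
  refine ⟨1 / (2 * N), by positivity, ?_⟩
  intro δ hδ E hE hyp
  -- the functionals
  set φ : (EuclideanSpace ℝ (Fin n) × (Fin n → ℕ)) → Module.Dual ℝ ↥V :=
    fun q => (evalLM q.1) ∘ₗ ((mderiv q.2) ∘ₗ V.subtype) with hφdef
  set Q : Set (EuclideanSpace ℝ (Fin n) × (Fin n → ℕ)) :=
    {q | q.1 ∈ E ∧ (∑ i, q.2 i) ≤ k - 1} with hQdef
  -- facts about the sup over the ball
  have hTSbdd : ∀ P : MvPolynomial (Fin n) ℝ,
      BddAbove {v | ∃ x ∈ closedBall (0 : EuclideanSpace ℝ (Fin n)) 1,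
        v = |MvPolynomial.eval (fun i => x i) P|} := by
    intro P
    have himg : {v | ∃ x ∈ closedBall (0 : EuclideanSpace ℝ (Fin n)) 1,
        v = |MvPolynomial.eval (fun i => x i) P|} =
        (fun x : EuclideanSpace ℝ (Fin n) => |MvPolynomial.eval (fun i => x i) P|) '' closedBall 0 1 := by
      ext v; constructor
      · rintro ⟨x, hx, rfl⟩; exact ⟨x, hx, rfl⟩
      · rintro ⟨x, hx, rfl⟩; exact ⟨x, hx, rfl⟩
    rw [himg]
    exact (isCompact_closedBall _ _).bddAbove_image (continuous_evalE P).abs.continuousOn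
  -- Step 1 : the functionals φ q, q ∈ Q, span the dual space
  have hspan : Submodule.span ℝ (φ '' Q) = ⊤ := by
    have hco : (Submodule.span ℝ (φ '' Q)).dualCoannihilator = ⊥ := by
      rw [Submodule.eq_bot_iff]
      intro P hP
      rw [Submodule.mem_dualCoannihilator] at hP
      have hzero : ∀ q ∈ Q, φ q P = 0 := fun q hq =>
        hP _ (Submodule.subset_span (Set.mem_image_of_mem _ hq))
      have hdeg : (P : MvPolynomial (Fin n) ℝ).totalDegree ≤ k :=
        (MvPolynomial.mem_restrictTotalDegree _ _ _).mp P.2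
      have h1 := hyp P.1 hdeg
      have h2 : sSup {v | ∃ β : Fin n → ℕ, (∑ i, β i) ≤ k - 1 ∧
          ∃ x ∈ E, v = |MvPolynomial.eval (fun i => x i) (mderiv β P.1)|} ≤ 0 := by
        refine Real.sSup_le ?_ le_rfl
        rintro v ⟨β, hβ, x, hx, rfl⟩
        have hv : MvPolynomial.eval (fun i => x i) (mderiv β P.1) = φ (x, β) P := rfl
        rw [hv, hzero (x, β) ⟨hx, hβ⟩]
        simp
      have hT0 : sSup {v | ∃ x ∈ closedBall (0 : EuclideanSpace ℝ (Fin n)) 1,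
          v = |MvPolynomial.eval (fun i => x i) P.1|} ≤ 0 := by
        by_contra hc
        push_neg at hc
        nlinarith
      have hvanish : ∀ x ∈ closedBall (0 : EuclideanSpace ℝ (Fin n)) 1,
          MvPolynomial.eval (fun i => x i) P.1 = 0 := by
        intro x hx
        have hle : |MvPolynomial.eval (fun i => x i) P.1| ≤
            sSup {v | ∃ x ∈ closedBall (0 : EuclideanSpace ℝ (Fin n)) 1,
              v = |MvPolynomial.eval (fun i => x i) P.1|} :=
          le_csSup (hTSbdd P.1) ⟨x, hx, rfl⟩
        exact abs_nonpos_iff.mp (le_trans hle hT0)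
      exact Subtype.ext (eq_zero_of_zero_on_ball hn P.1 hvanish)
    have hfin := Subspace.finrank_add_finrank_dualCoannihilator_eq (Submodule.span ℝ (φ '' Q))
    rw [hco, finrank_bot] at hfin
    apply Submodule.eq_top_of_finrank_eq
    rw [Subspace.dual_finrank_eq]
    omega
  -- Step 2 : uniform bound on the entries
  obtain ⟨M, hM0, hM⟩ : ∃ M : ℝ, 0 ≤ M ∧ ∀ q ∈ Q, ∀ j : ↥ιs, |φ q (b j)| ≤ M := by
    set Γfin : Finset (Fin n → ℕ) :=
      Finset.image (fun f : Fin n → Fin k => fun i => (f i : ℕ)) Finset.univ with hΓdef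
    have hΓ : ∀ β : Fin n → ℕ, (∑ i, β i) ≤ k - 1 → β ∈ Γfin := by
      intro β hβ
      have hβi : ∀ i, β i < k := by
        intro i
        have := Finset.single_le_sum (f := β) (fun _ _ => Nat.zero_le _) (Finset.mem_univ i)
        omega
      exact Finset.mem_image.mpr ⟨fun i => ⟨β i, hβi i⟩, Finset.mem_univ _, rfl⟩
    have hΓne : ((Γfin ×ˢ (Finset.univ : Finset ↥ιs))).Nonempty :=
      ⟨(fun _ => 0, Classical.arbitrary ↥ιs),
        Finset.mem_product.mpr ⟨hΓ _ (by simp), Finset.mem_univ _⟩⟩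
    set f : (Fin n → ℕ) × ↥ιs → ℝ :=
      fun p => (exists_bound_ball (mderiv p.1 ((b p.2 : ↥V) : MvPolynomial (Fin n) ℝ))).choose
      with hfdef
    refine ⟨(Γfin ×ˢ Finset.univ).sup' hΓne f, ?_, ?_⟩
    · obtain ⟨p0, hp0⟩ := hΓne
      exact le_trans
        (exists_bound_ball (mderiv p0.1 ((b p0.2 : ↥V) : MvPolynomial (Fin n) ℝ))).choose_spec.1
        (Finset.le_sup' f hp0)
    · intro q hq j
      have hmem : (q.2, j) ∈ Γfin ×ˢ (Finset.univ : Finset ↥ιs) :=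
        Finset.mem_product.mpr ⟨hΓ q.2 hq.2, Finset.mem_univ _⟩
      have hb := (exists_bound_ball
        (mderiv q.2 ((b j : ↥V) : MvPolynomial (Fin n) ℝ))).choose_spec.2 q.1 (hE hq.1)
      exact le_trans hb (Finset.le_sup' f hmem)
  -- the determinant function
  set matQ : (↥ιs → ↥Q) → Matrix ↥ιs ↥ιs ℝ :=
    fun g => Matrix.of fun i j => φ (g i).1 (b j) with hmatQ
  -- Q is nonempty
  have hQne : Q.Nonempty := by
    by_contra hne
    rw [Set.not_nonempty_iff_eq_empty] at hne
    rw [hne, Set.image_empty, Submodule.span_empty] at hspan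
    have hbd : b.dualBasis (Classical.arbitrary ↥ιs) ∈ (⊤ : Submodule ℝ (Module.Dual ℝ ↥V)) :=
      trivial
    rw [← hspan] at hbd
    exact b.dualBasis.ne_zero _ ((Submodule.mem_bot ℝ).mp hbd)
  haveI : Nonempty ↥Q := hQne.to_subtype
  set S : ℝ := sSup (Set.range fun g : ↥ιs → ↥Q => |(matQ g).det|) with hSdef
  have hSbdd : BddAbove (Set.range fun g : ↥ιs → ↥Q => |(matQ g).det|) := by
    refine ⟨(N.factorial : ℝ) * M ^ N, ?_⟩
    rintro v ⟨g, rfl⟩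
    have := Matrix.det_le (A := matQ g) (abv := AbsoluteValue.abs)
      (x := M) (fun i j => hM _ (g i).2 j)
    simpa [hNdef, nsmul_eq_mul] using this
  have hSpos : 0 < S := by
    obtain ⟨t, htsub, htspan, htind⟩ := exists_linearIndependent ℝ (φ '' Q)
    rw [hspan] at htspan
    have htfin : t.Finite := htind.setFinite
    haveI := htfin.fintype
    let bt : Module.Basis ↥t ℝ (Module.Dual ℝ ↥V) := Module.Basis.mk htind (by rw [Subtype.range_coe, htspan])
    have hcard : Fintype.card ↥t = N := by
      rw [← Module.finrank_eq_card_basis bt, Subspace.dual_finrank_eq, hfinrank]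
    let e : ↥ιs ≃ ↥t := Fintype.equivOfCardEq (by rw [hcard])
    have hsel : ∀ i : ↥ιs, ∃ q ∈ Q, φ q = (e i : Module.Dual ℝ ↥V) := fun i => htsub (e i).2
    choose gq hgQQ hgφ using hsel
    set g : ↥ιs → ↥Q := fun i => ⟨gq i, hgQQ i⟩ with hgdef
    have hdet : (matQ g).det ≠ 0 := by
      intro h0
      obtain ⟨v, hv0, hvm⟩ := (Matrix.exists_vecMul_eq_zero_iff).mpr h0
      have hzero : (∑ i, v i • ((e i : Module.Dual ℝ ↥V))) = 0 := by
        refine b.ext fun j => ?_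
        have hvm' := congrFun hvm j
        simp only [Matrix.vecMul, dotProduct, Pi.zero_apply] at hvm'
        simp only [LinearMap.coe_sum, Finset.sum_apply, LinearMap.smul_apply, smul_eq_mul,
          LinearMap.zero_apply]
        rw [← hvm']
        refine Finset.sum_congr rfl fun i _ => ?_
        rw [← hgφ i]
        rfl
      have hindE : LinearIndependent ℝ fun i : ↥ιs => ((e i : Module.Dual ℝ ↥V)) :=
        htind.comp e e.injective
      have hvz := Fintype.linearIndependent_iff.mp hindE v hzero
      exact hv0 (funext hvz)
    have h1 : (0:ℝ) < |(matQ g).det| := abs_pos.mpr hdet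
    have hle : |(matQ g).det| ≤ S := le_csSup hSbdd ⟨g, rfl⟩
    linarith
  obtain ⟨_, ⟨g0, rfl⟩, hg0⟩ := exists_lt_of_lt_csSup
    (Set.range_nonempty fun g : ↥ιs → ↥Q => |(matQ g).det|) (half_lt_self hSpos)
  have hg0' : S / 2 < |(matQ g0).det| := hg0
  have hdetA : (matQ g0).det ≠ 0 := by
    intro h0
    rw [h0] at hg0'
    simp at hg0'
    linarith [half_pos hSpos]
  -- Step 3 : Cramer bound
  have key : ∀ q ∈ Q, ∀ P : ↥V, |φ q P| ≤ 2 * ∑ i, |φ (g0 i).1 P| := by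
    intro q hq P
    set A := matQ g0 with hA
    set w : ↥ιs → ℝ := fun j => φ q (b j) with hw
    set cv : ↥ιs → ℝ := fun i => (A.updateRow i w).det / A.det with hcv
    have hupd : ∀ i, A.updateRow i w = matQ (Function.update g0 i ⟨q, hq⟩) := by
      intro i
      funext i' j
      by_cases h : i' = i
      · subst h
        show (A.updateRow i' w) i' j = φ ((Function.update g0 i' ⟨q, hq⟩ i') : ↥Q).1 (b j)
        rw [Matrix.updateRow_self, Function.update_self]
      · show (A.updateRow i w) i' j = φ ((Function.update g0 i ⟨q, hq⟩ i') : ↥Q).1 (b j)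
        rw [Matrix.updateRow_ne h, Function.update_of_ne h]
        rfl
    have hcle : ∀ i, |cv i| ≤ 2 := by
      intro i
      have h1 : |(A.updateRow i w).det| ≤ S := by
        rw [hupd i]; exact le_csSup hSbdd ⟨_, rfl⟩
      have hS2 : 0 < S / 2 := half_pos hSpos
      have h3 : |cv i| = |(A.updateRow i w).det| / |A.det| := abs_div _ _
      rw [h3]
      calc |(A.updateRow i w).det| / |A.det| ≤ S / (S / 2) :=
            div_le_div₀ (le_of_lt hSpos) h1 hS2 (le_of_lt hg0')
        _ = 2 := by
            field_simp
    have hcramer : ∀ j, ∑ i, cv i * A i j = w j := by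
      intro j
      have hcr := congrFun (Matrix.mulVec_cramer A.transpose w) j
      have hlhs : (A.transpose.mulVec (A.transpose.cramer w)) j
          = ∑ i, A i j * (A.updateRow i w).det := by
        simp [Matrix.mulVec, dotProduct, Matrix.transpose_apply,
          Matrix.cramer_transpose_apply]
      have hrhs : (A.transpose.det • w) j = A.det * w j := by
        simp [Matrix.det_transpose]
      rw [hlhs, hrhs] at hcr
      have hsum : ∑ i, cv i * A i j = (∑ i, A i j * (A.updateRow i w).det) / A.det := by
        rw [Finset.sum_div]
        refine Finset.sum_congr rfl fun i _ => ?_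
        rw [hcv]
        field_simp
      rw [hsum, hcr, mul_comm A.det (w j), mul_div_assoc, div_self hdetA, mul_one]
    have hrepr : φ q = ∑ i, cv i • φ (g0 i).1 := by
      refine b.ext fun j => ?_
      simp only [LinearMap.coe_sum, Finset.sum_apply, LinearMap.smul_apply, smul_eq_mul]
      exact (hcramer j).symm
    rw [hrepr]
    calc |(∑ i, cv i • φ (g0 i).1) P| = |∑ i, cv i * φ (g0 i).1 P| := by
          simp [LinearMap.sum_apply, LinearMap.smul_apply, smul_eq_mul]
      _ ≤ ∑ i, |cv i * φ (g0 i).1 P| := Finset.abs_sum_le_sum_abs _ _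
      _ ≤ ∑ i, 2 * |φ (g0 i).1 P| := by
          refine Finset.sum_le_sum fun i _ => ?_
          rw [abs_mul]
          exact mul_le_mul_of_nonneg_right (hcle i) (abs_nonneg _)
      _ = 2 * ∑ i, |φ (g0 i).1 P| := by rw [Finset.mul_sum]
  -- the finite set F
  refine ⟨Finset.image (fun i => ((g0 i) : ↥Q).1) Finset.univ, ?_, ?_, ?_⟩
  · intro q hq
    obtain ⟨i, _, rfl⟩ := Finset.mem_image.mp hq
    exact (g0 i).2
  · rw [Finset.card_image_of_injective _ ?_, Finset.card_univ, ← hN]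
    intro i i' hii
    have hii' : ((g0 i) : EuclideanSpace ℝ (Fin n) × (Fin n → ℕ)) = (g0 i') := hii
    by_contra hne
    apply hdetA
    refine Matrix.det_zero_of_row_eq hne ?_
    funext j
    show φ (g0 i).1 (b j) = φ (g0 i').1 (b j)
    rw [hii']
  · intro P hP
    set P' : ↥V := ⟨P, (MvPolynomial.mem_restrictTotalDegree _ _ _).mpr hP⟩ with hP'def
    set Fs : Set ℝ := {v | ∃ q ∈ Finset.image (fun i => ((g0 i) : ↥Q).1) Finset.univ,
      v = |MvPolynomial.eval (fun i => q.1 i) (mderiv q.2 P)|} with hFsdef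
    have hFsbdd : BddAbove Fs := by
      have himg : Fs = (fun q : EuclideanSpace ℝ (Fin n) × (Fin n → ℕ) =>
          |MvPolynomial.eval (fun i => q.1 i) (mderiv q.2 P)|) ''
          ↑(Finset.image (fun i => ((g0 i) : ↥Q).1) Finset.univ) := by
        ext v; constructor
        · rintro ⟨q, hq, rfl⟩; exact ⟨q, hq, rfl⟩
        · rintro ⟨q, hq, rfl⟩; exact ⟨q, hq, rfl⟩
      rw [himg]
      exact (((Finset.image (fun i => ((g0 i) : ↥Q).1) Finset.univ).finite_toSet).image _).bddAbove
    have hFle : ∀ i : ↥ιs, |φ (g0 i).1 P'| ≤ sSup Fs := fun i =>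
      le_csSup hFsbdd ⟨(g0 i).1, Finset.mem_image_of_mem _ (Finset.mem_univ i), rfl⟩
    have hFnn : (0:ℝ) ≤ sSup Fs := le_trans (abs_nonneg _) (hFle (Classical.arbitrary _))
    have hQle : sSup {v | ∃ β : Fin n → ℕ, (∑ i, β i) ≤ k - 1 ∧
        ∃ x ∈ E, v = |MvPolynomial.eval (fun i => x i) (mderiv β P)|} ≤ 2 * N * sSup Fs := by
      refine Real.sSup_le ?_ (mul_nonneg (by positivity) hFnn)
      rintro v ⟨β, hβ, x, hx, rfl⟩
      have h1 : |MvPolynomial.eval (fun i => x i) (mderiv β P)| = |φ (x, β) P'| := rfl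
      rw [h1]
      calc |φ (x, β) P'| ≤ 2 * ∑ i, |φ (g0 i).1 P'| := key (x, β) ⟨hx, hβ⟩ P'
        _ ≤ 2 * ∑ _i : ↥ιs, sSup Fs :=
            mul_le_mul_of_nonneg_left (Finset.sum_le_sum fun i _ => hFle i) (by norm_num)
        _ = 2 * N * sSup Fs := by
            rw [Finset.sum_const, Finset.card_univ, nsmul_eq_mul]; ring
    have h1 := hyp P hP
    rw [ge_iff_le]
    have hδT : δ * sSup {v | ∃ x ∈ closedBall (0 : EuclideanSpace ℝ (Fin n)) 1,
        v = |MvPolynomial.eval (fun i => x i) P|} ≤ 2 * N * sSup Fs := le_trans h1 hQle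
    calc 1 / (2*(N:ℝ)) * δ * sSup {v | ∃ x ∈ closedBall (0 : EuclideanSpace ℝ (Fin n)) 1,
          v = |MvPolynomial.eval (fun i => x i) P|}
        = (δ * sSup {v | ∃ x ∈ closedBall (0 : EuclideanSpace ℝ (Fin n)) 1,
          v = |MvPolynomial.eval (fun i => x i) P|}) / (2*N) := by ring
      _ ≤ (2 * N * sSup Fs) / (2*N) := by gcongr
      _ = sSup Fs := by field_simp
end

section
/- Let n ≥ 1 and let Ω be a proper nonempty open subset of ℝⁿ satisfying: there exist a > 1 and δ > 0 such that for every x ∈ Ω, |Ωᶜ ∩ B(x, a·d(x))| > δ·|B(x, a·d(x))|, where d(x) = dist(x, Ωᶜ). Then there is a constant C = C(n, a, δ) such that for every x₀ ∈ Ω, every r with d(x₀)/2 ≤ r ≤ d(x₀), and every measurable g supported in B(x₀, r) with ‖g‖_∞ ≤ |B(x₀, r)|^{−1}, the function g̃ = g − c·𝟙_{Ωᶜ ∩ B(x₀, a·d(x₀))} with c = (∫ g) / |Ωᶜ ∩ B(x₀, a·d(x₀))| satisfies: g̃ is supported in B(x₀, a·d(x₀)), ∫ g̃ = 0, and ‖g̃‖_∞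 ≤ C·|B(x₀, a·d(x₀))|^{−1}. In particular g̃ is C times a 1-atom extending g. -/
open Metric MeasureTheory

/-- If a proper nonempty open `Ω ⊆ ℝⁿ` satisfies the measure-density condition
`|Ωᶜ ∩ B(x, a·d(x))| > δ·|B(x, a·d(x))|`, then every `(1,Ω)`-atom `g` (supported in a ball
`B(x₀, r)` with `d(x₀)/2 ≤ r ≤ d(x₀)` and `‖g‖_∞ ≤ |B(x₀,r)|⁻¹`) extends, by subtracting a
suitable constant on `Ωᶜ ∩ B(x₀, a·d(x₀))`, to a function `g̃` supported in `B(x₀, a·d(x₀))`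
with `∫ g̃ = 0` and `‖g̃‖_∞ ≤ C(n,a,δ)·|B(x₀, a·d(x₀))|⁻¹`, i.e. `C` times a `1`-atom. -/
theorem one_atom_extension (n : ℕ) (hn : 1 ≤ n) (a δ : ℝ) (ha : 1 < a) (hδ : 0 < δ) :
    ∃ C > (0:ℝ), ∀ Ω : Set (EuclideanSpace ℝ (Fin n)),
      IsOpen Ω → Ω.Nonempty → Ω ≠ Set.univ →
      (∀ x ∈ Ω, ENNReal.ofReal δ * volume (ball x (a * infDist x Ωᶜ)) <
        volume (Ωᶜ ∩ ball x (a * infDist x Ωᶜ))) →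
      ∀ x₀ ∈ Ω, ∀ r : ℝ, infDist x₀ Ωᶜ / 2 ≤ r → r ≤ infDist x₀ Ωᶜ →
      ∀ g : EuclideanSpace ℝ (Fin n) → ℝ, Measurable g →
        Function.support g ⊆ ball x₀ r →
        (∀ y, |g y| ≤ ((volume (ball x₀ r)).toReal)⁻¹) →
        ∀ c : ℝ, c = (∫ z, g z) /
            (volume (Ωᶜ ∩ ball x₀ (a * infDist x₀ Ωᶜ))).toReal →
        ∀ gt : EuclideanSpace ℝ (Fin n) → ℝ,
          gt = (fun y => g y -
            Set.indicator (Ωᶜ ∩ ball x₀ (a * infDist x₀ Ωᶜ)) (fun _ => c) y) →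
        Function.support gt ⊆ ball x₀ (a * infDist x₀ Ωᶜ) ∧
        (∫ y, gt y) = 0 ∧
        ∀ y, |gt y| ≤ C * ((volume (ball x₀ (a * infDist x₀ Ωᶜ))).toReal)⁻¹ := by
  have ha0 : (0:ℝ) < a := lt_trans one_pos ha
  refine ⟨(2*a)^n + δ⁻¹, by positivity, ?_⟩
  intro Ω hΩopen hΩne hΩproper hdens x₀ hx₀ r hr1 hr2 g hgmeas hgsupp hgbd c hc gt hgt
  haveI : Nontrivial (EuclideanSpace ℝ (Fin n)) := by
    apply Module.nontrivial_of_finrank_pos (R := ℝ)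
    rw [finrank_euclideanSpace_fin]; omega
  set d := infDist x₀ Ωᶜ with hd
  have hΩc : Ωᶜ.Nonempty := Set.nonempty_compl.2 hΩproper
  have hd0 : 0 < d :=
    (hΩopen.isClosed_compl.notMem_iff_infDist_pos hΩc).1 (by simp [hx₀])
  have hr0 : 0 < r := lt_of_lt_of_le (by linarith) hr1
  have had : 0 < a * d := by positivity
  have hball_sub : ball x₀ r ⊆ ball x₀ (a * d) :=
    ball_subset_ball (by nlinarith)
  set S := Ωᶜ ∩ ball x₀ (a * d) with hS
  have hSmeas : MeasurableSet S :=
    (hΩopen.isClosed_compl.measurableSet).inter measurableSet_ball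
  have hSfin : volume S < ⊤ :=
    lt_of_le_of_lt (measure_mono Set.inter_subset_right) measure_ball_lt_top
  have hVfin : volume (ball x₀ (a * d)) < ⊤ := measure_ball_lt_top
  set V : ℝ := (volume (ball x₀ (a * d))).toReal with hV
  set Vr : ℝ := (volume (ball x₀ r)).toReal with hVr
  set m : ℝ := (volume S).toReal with hm
  have hV0 : 0 < V := ENNReal.toReal_pos (measure_ball_pos volume x₀ had).ne' hVfin.ne
  have hVr0 : 0 < Vr := ENNReal.toReal_pos (measure_ball_pos volume x₀ hr0).ne' measure_ball_lt_top.ne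
  have hdens' := hdens x₀ hx₀
  have hm_lb : δ * V ≤ m := by
    have h := le_of_lt hdens'
    have := ENNReal.toReal_le_toReal (a := ENNReal.ofReal δ * volume (ball x₀ (a*d)))
      (b := volume S) (by finiteness) hSfin.ne |>.2 h
    rwa [ENNReal.toReal_mul, ENNReal.toReal_ofReal hδ.le] at this
  have hm0 : 0 < m := lt_of_lt_of_le (by positivity) hm_lb
  -- integrability of g
  have hg_eq : (ball x₀ r).indicator g = g := Set.indicator_eq_self.2 hgsupp
  have hg_int : Integrable g := by
    rw [← hg_eq]
    rw [integrable_indicator_iff measurableSet_ball]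
    exact Measure.integrableOn_of_bounded measure_ball_lt_top.ne
      hgmeas.aestronglyMeasurable
      (Filter.Eventually.of_forall fun y => by
        simpa [Real.norm_eq_abs] using hgbd y)
  have hind_int : Integrable (S.indicator (fun _ => c)) := by
    rw [integrable_indicator_iff hSmeas]
    exact integrableOn_const hSfin.ne
  -- bound on the integral of g
  have hg_int_bd : |∫ z, g z| ≤ 1 := by
    have : ∫ z, g z = ∫ z in ball x₀ r, g z :=
      (setIntegral_eq_integral_of_forall_compl_eq_zero (fun y hy =>
        Function.notMem_support.1 (fun h => hy (hgsupp h)))).symm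
    rw [this]
    calc |∫ z in ball x₀ r, g z| ≤ Vr⁻¹ * (volume (ball x₀ r)).toReal :=
          norm_setIntegral_le_of_norm_le_const (f := g) (C := Vr⁻¹) measure_ball_lt_top
            (fun y _ => by simpa [Real.norm_eq_abs] using hgbd y)
      _ = 1 := by rw [← hVr]; field_simp
  refine ⟨?_, ?_, ?_⟩
  · -- support
    intro y hy
    rw [Function.mem_support] at hy
    by_contra hyb
    apply hy
    rw [hgt]
    have h1 : g y = 0 := by
      by_contra h
      exact hyb (hball_sub (hgsupp (Function.mem_support.2 h)))
    have h2 : y ∉ S := fun h => hyb h.2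
    simp [h1, Set.indicator_of_notMem h2]
  · -- integral zero
    rw [hgt, integral_sub hg_int hind_int, integral_indicator hSmeas,
      setIntegral_const, smul_eq_mul, hc, measureReal_def, ← hm]
    field_simp
    simp
  · -- bound
    intro y
    have hc_bd : |c| ≤ δ⁻¹ * V⁻¹ := by
      rw [hc, abs_div, abs_of_pos hm0]
      rw [div_le_iff₀ hm0]
      calc |∫ z, g z| ≤ 1 := hg_int_bd
        _ ≤ δ⁻¹ * V⁻¹ * (δ * V) := by
            rw [show δ⁻¹ * V⁻¹ * (δ * V) = (δ * δ⁻¹) * (V * V⁻¹) by ring,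
              mul_inv_cancel₀ hδ.ne', mul_inv_cancel₀ hV0.ne']
            norm_num
        _ ≤ δ⁻¹ * V⁻¹ * m := by
            apply mul_le_mul_of_nonneg_left hm_lb (by positivity)
    have hVr_bd : Vr⁻¹ ≤ (2*a)^n * V⁻¹ := by
      set v : ℝ := (volume (ball (0:EuclideanSpace ℝ (Fin n)) 1)).toReal with hv
      have hv0 : 0 < v := ENNReal.toReal_pos
        (measure_ball_pos volume _ one_pos).ne' measure_ball_lt_top.ne
      have hVeq : V = (a*d)^n * v := by
        rw [hV, Measure.addHaar_ball volume x₀ had.le, finrank_euclideanSpace_fin,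
          ENNReal.toReal_mul, ENNReal.toReal_ofReal (by positivity)]
      have hVreq : Vr = r^n * v := by
        rw [hVr, Measure.addHaar_ball volume x₀ hr0.le, finrank_euclideanSpace_fin,
          ENNReal.toReal_mul, ENNReal.toReal_ofReal (by positivity)]
      have key : V ≤ (2*a)^n * Vr := by
        rw [hVeq, hVreq]
        calc (a*d)^n * v ≤ ((2*a)*r)^n * v :=
              mul_le_mul_of_nonneg_right
                (pow_le_pow_left₀ (by positivity) (by nlinarith) n) hv0.le
          _ = (2*a)^n * (r^n * v) := by rw [mul_pow]; ring
      rw [show (2*a)^n * V⁻¹ = (2*a)^n / V from (div_eq_mul_inv _ _).symm,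
        ← one_div, div_le_div_iff₀ hVr0 hV0, one_mul]
      exact key
    calc |gt y| ≤ |g y| + |S.indicator (fun _ => c) y| := by
          rw [hgt]; exact abs_sub _ _
      _ ≤ Vr⁻¹ + |c| := by
          apply add_le_add (hgbd y)
          by_cases h : y ∈ S
          · simp [Set.indicator_of_mem h]
          · simp [Set.indicator_of_notMem h, abs_nonneg]
      _ ≤ (2*a)^n * V⁻¹ + δ⁻¹ * V⁻¹ := add_le_add hVr_bd hc_bd
      _ = ((2*a)^n + δ⁻¹) * V⁻¹ := by ring
end

section
/- There is an absolute constant C such that if f is a locally integrable function on ℝ whose BMO seminorm satisfies sup_I ⨍_I |f − ⨍_I f| ≤ M (supremum over all bounded intervals I), and F(x) = ∫₀ˣ f(t) dt, then for all x ∈ ℝ and all h ≠ 0: |F(x + 2h) − 2F(x + h) + F(x)| ≤ C·M·|h|. That is, F belongs to the Zygmund class Λ̇¹(ℝ) with seminorm ≲ ‖f‖_{BMO(ℝ)}. -/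
open MeasureTheory

private lemma zyg_aux (f : ℝ → ℝ) (hf : LocallyIntegrable f volume) (M : ℝ)
    (hM : ∀ a b : ℝ, a < b →
        ⨍ t in Set.Ioo a b, |f t - ⨍ s in Set.Ioo a b, f s| ≤ M)
    (x h : ℝ) (hh : 0 < h) :
    |(∫ t in (0:ℝ)..(x + 2 * h), f t) - 2 * (∫ t in (0:ℝ)..(x + h), f t) +
        (∫ t in (0:ℝ)..x, f t)| ≤ 4 * M * h := by
  have hint : ∀ a b : ℝ, IntervalIntegrable f volume a b := fun a b =>
    (hf.integrableOn_isCompact isCompact_uIcc).intervalIntegrable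
  have e1 : ∫ t in (0:ℝ)..(x + 2 * h), f t =
      (∫ t in (0:ℝ)..(x + h), f t) + ∫ t in (x + h)..(x + 2 * h), f t :=
    (intervalIntegral.integral_add_adjacent_intervals (hint 0 (x + h))
      (hint (x + h) (x + 2 * h))).symm
  have e2 : ∫ t in (0:ℝ)..(x + h), f t =
      (∫ t in (0:ℝ)..x, f t) + ∫ t in x..(x + h), f t :=
    (intervalIntegral.integral_add_adjacent_intervals (hint 0 x) (hint x (x + h))).symm
  have e : (∫ t in (0:ℝ)..(x + 2 * h), f t) - 2 * (∫ t in (0:ℝ)..(x + h), f t) +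
      (∫ t in (0:ℝ)..x, f t) =
      (∫ t in (x + h)..(x + 2 * h), f t) - ∫ t in x..(x + h), f t := by
    rw [e1, e2]; ring
  rw [e]
  -- rewrite as set integrals over Ioo
  have hJ2 : ∫ t in (x + h)..(x + 2 * h), f t = ∫ t in Set.Ioo (x + h) (x + 2 * h), f t := by
    rw [intervalIntegral.integral_of_le (by linarith), MeasureTheory.integral_Ioc_eq_integral_Ioo]
  have hJ1 : ∫ t in x..(x + h), f t = ∫ t in Set.Ioo x (x + h), f t := by
    rw [intervalIntegral.integral_of_le (by linarith), MeasureTheory.integral_Ioc_eq_integral_Ioo]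
  rw [hJ1, hJ2]
  set I : Set ℝ := Set.Ioo x (x + 2 * h) with hIdef
  set c : ℝ := ⨍ s in I, f s with hc
  have hI : IntegrableOn f I volume := by
    have := (hint x (x + 2 * h)).1
    exact this.mono_set Set.Ioo_subset_Ioc_self
  have hvolI : volume I = ENNReal.ofReal (2 * h) := by
    rw [hIdef, Real.volume_Ioo]; ring_nf
  have hvolIR : (volume I).toReal = 2 * h := by
    rw [hvolI, ENNReal.toReal_ofReal (by linarith)]
  have hconst : IntegrableOn (fun _ : ℝ => c) I volume := by
    apply integrableOn_const ?_ (by simp)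
    rw [hvolI]; exact ENNReal.ofReal_lt_top.ne
  have hg : IntegrableOn (fun t => f t - c) I volume := hI.sub hconst
  have habs : IntegrableOn (fun t => |f t - c|) I volume := hg.abs
  have hsub1 : Set.Ioo x (x + h) ⊆ I := Set.Ioo_subset_Ioo le_rfl (by linarith)
  have hsub2 : Set.Ioo (x + h) (x + 2 * h) ⊆ I := Set.Ioo_subset_Ioo (by linarith) le_rfl
  -- the key bound for each half
  have key : ∀ s : Set ℝ, MeasurableSet s → s ⊆ I → (volume s).toReal = h →
      |(∫ t in s, f t) - c * h| ≤ 2 * M * h := by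
    intro s hms hsI hvs
    have hgs : IntegrableOn (fun t => f t - c) s volume := hg.mono_set hsI
    have hfs : IntegrableOn f s volume := hI.mono_set hsI
    have hcs : IntegrableOn (fun _ : ℝ => c) s volume := hconst.mono_set hsI
    have e3 : (∫ t in s, f t) - c * h = ∫ t in s, (f t - c) := by
      rw [integral_sub hfs hcs, setIntegral_const, smul_eq_mul, measureReal_def, hvs]; ring
    rw [e3]
    calc |∫ t in s, (f t - c)| ≤ ∫ t in s, |f t - c| := by
          simpa [Real.norm_eq_abs] using
            norm_integral_le_integral_norm (μ := volume.restrict s) (fun t => f t - c)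
      _ ≤ ∫ t in I, |f t - c| := by
          apply setIntegral_mono_set habs
          · filter_upwards with t using abs_nonneg _
          · exact Filter.Eventually.of_forall hsI |>.mono fun a ha => ha
      _ = (volume I).toReal * ⨍ t in I, |f t - c| := by
          rw [setAverage_eq, smul_eq_mul, measureReal_def, ← mul_assoc, mul_inv_cancel₀, one_mul]
          rw [hvolIR]; positivity
      _ ≤ 2 * h * M := by
          rw [hvolIR]
          have := hM x (x + 2 * h) (by linarith)
          have hh2 : (0:ℝ) ≤ 2 * h := by linarith
          exact mul_le_mul_of_nonneg_left this hh2
      _ = 2 * M * h := by ring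
  have k1 := key (Set.Ioo x (x + h)) measurableSet_Ioo hsub1
    (by rw [Real.volume_Ioo, ENNReal.toReal_ofReal (by linarith)]; ring)
  have k2 := key (Set.Ioo (x + h) (x + 2 * h)) measurableSet_Ioo hsub2
    (by rw [Real.volume_Ioo, ENNReal.toReal_ofReal (by linarith)]; ring)
  calc |(∫ t in Set.Ioo (x + h) (x + 2 * h), f t) - ∫ t in Set.Ioo x (x + h), f t|
      = |((∫ t in Set.Ioo (x + h) (x + 2 * h), f t) - c * h)
          - ((∫ t in Set.Ioo x (x + h), f t) - c * h)| := by ring_nf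
    _ ≤ |(∫ t in Set.Ioo (x + h) (x + 2 * h), f t) - c * h|
          + |(∫ t in Set.Ioo x (x + h), f t) - c * h| := abs_sub _ _
    _ ≤ 2 * M * h + 2 * M * h := add_le_add k2 k1
    _ = 4 * M * h := by ring

/-- There is an absolute constant `C` such that if `f` is locally integrable on `ℝ` with BMO
seminorm at most `M` (over all bounded intervals) and `F(x) = ∫₀ˣ f`, then
`|F(x + 2h) - 2F(x + h) + F(x)| ≤ C·M·|h|` for all `x` and `h ≠ 0`; i.e. `F` is in the Zygmund
class `Λ̇¹(ℝ)` with seminorm `≲ ‖f‖_BMO`. -/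
theorem zygmund_of_bmo_primitive :
    ∃ C > (0:ℝ), ∀ f : ℝ → ℝ, LocallyIntegrable f volume →
      ∀ M : ℝ, (∀ a b : ℝ, a < b →
        ⨍ t in Set.Ioo a b, |f t - ⨍ s in Set.Ioo a b, f s| ≤ M) →
      ∀ (x h : ℝ), h ≠ 0 →
        |(∫ t in (0:ℝ)..(x + 2 * h), f t) - 2 * (∫ t in (0:ℝ)..(x + h), f t) +
            (∫ t in (0:ℝ)..x, f t)| ≤ C * M * |h| := by
  refine ⟨4, by norm_num, fun f hf M hM x h hh => ?_⟩
  rcases lt_or_gt_of_ne hh with hneg | hpos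
  · have := zyg_aux f hf M hM (x + 2 * h) (-h) (by linarith)
    rw [show x + 2 * h + 2 * (-h) = x by ring, show x + 2 * h + (-h) = x + h by ring] at this
    rw [abs_of_neg hneg]
    calc |(∫ t in (0:ℝ)..(x + 2 * h), f t) - 2 * (∫ t in (0:ℝ)..(x + h), f t) +
            (∫ t in (0:ℝ)..x, f t)|
        = |(∫ t in (0:ℝ)..x, f t) - 2 * (∫ t in (0:ℝ)..(x + h), f t) +
            (∫ t in (0:ℝ)..(x + 2 * h), f t)| := by ring_nf
      _ ≤ 4 * M * (-h) := this
  · have := zyg_aux f hf M hM x h hpos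
    rw [abs_of_pos hpos]
    exact this
end

section
/- Let k ≥ 1 be an integer and n ≥ 1. There is a constant C(k, n) with the following property: if f : ℝⁿ → ℝ is bounded with finite seminorms ‖f‖_{Λ̇^l(ℝⁿ)} = sup_{h≠0} ‖Δ_h^{l+1} f‖_∞ / |h|^l for 1 ≤ l ≤ k, and g ∈ C^k(ℝⁿ) has bounded derivatives up to order k, then fg satisfies ‖fg‖_{Λ̇^k(ℝⁿ)} ≤ C(k, n) ( Σ_{l=1}^{k} ‖f‖_{Λ̇^l(ℝⁿ)} · ‖∇^{k−l} g‖_∞ + ‖f‖_∞ · ‖∇^{k} g‖_∞ ), where ‖∇^0 g‖_∞ = ‖g‖_∞ and ‖∇^m g‖_∞ denotes the supremum norm of the m-th total derivative of g. -/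
open MeasureTheory

/-- The forward difference operator `Δ_h f(x) = f(x + h) - f(x)`. -/
def fdiff {E : Type*} [Add E] (h : E) (f : E → ℝ) : E → ℝ := fun x => f (x + h) - f x

section Alg

variable {V : Type*} [AddCommMonoid V]

lemma fdiff_iterate_add (h : V) (m : ℕ) : ∀ (u v : V → ℝ),
    (fdiff h)^[m] (fun x => u x + v x) = fun x => (fdiff h)^[m] u x + (fdiff h)^[m] v x := by
  induction m with
  | zero => intro u v; rfl
  | succ m ih =>
    intro u v
    rw [Function.iterate_succ_apply, Function.iterate_succ_apply, Function.iterate_succ_apply]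
    have : fdiff h (fun x => u x + v x) = fun x => fdiff h u x + fdiff h v x := by
      funext x; simp only [fdiff]; ring
    rw [this, ih]

lemma fdiff_iterate_shift (h c : V) (m : ℕ) : ∀ (g : V → ℝ),
    (fdiff h)^[m] (fun x => g (x + c)) = fun x => (fdiff h)^[m] g (x + c) := by
  induction m with
  | zero => intro g; rfl
  | succ m ih =>
    intro g
    rw [Function.iterate_succ_apply, Function.iterate_succ_apply]
    have : fdiff h (fun x => g (x + c)) = fun x => fdiff h g (x + c) := by
      funext x; simp only [fdiff, add_right_comm]
    rw [this, ih]

lemma fdiff_leibniz (h : V) (m : ℕ) : ∀ (f g : V → ℝ) (x : V),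
    (fdiff h)^[m] (fun y => f y * g y) x =
      ∑ j ∈ Finset.range (m + 1),
        (m.choose j : ℝ) * ((fdiff h)^[j] f x * (fdiff h)^[m - j] g (x + j • h)) := by
  induction m with
  | zero => intro f g x; simp
  | succ m ih =>
    intro f g x
    rw [Function.iterate_succ_apply]
    have e1 : fdiff h (fun y => f y * g y)
        = fun y => (fdiff h f y * g (y + h)) + (f y * fdiff h g y) := by
      funext y; simp only [fdiff]; ring
    rw [e1, fdiff_iterate_add]
    have e2 : (fdiff h)^[m] (fun y => fdiff h f y * g (y + h)) x
        = ∑ j ∈ Finset.range (m + 1),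
            (m.choose j : ℝ) * ((fdiff h)^[j + 1] f x * (fdiff h)^[m - j] g (x + (j+1) • h)) := by
      rw [ih (fdiff h f) (fun y => g (y + h)) x]
      refine Finset.sum_congr rfl fun j hj => ?_
      rw [fdiff_iterate_shift, ← Function.iterate_succ_apply]
      simp only [succ_nsmul, ← add_assoc]
    have e3 : (fdiff h)^[m] (fun y => f y * fdiff h g y) x
        = ∑ j ∈ Finset.range (m + 1),
            (m.choose j : ℝ) * ((fdiff h)^[j] f x * (fdiff h)^[m - j + 1] g (x + j • h)) := by
      rw [ih f (fdiff h g) x]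
      refine Finset.sum_congr rfl fun j hj => ?_
      rw [← Function.iterate_succ_apply]
    beta_reduce
    rw [e2, e3]
    -- now pure binomial bookkeeping
    set U : ℕ → ℝ := fun j => (fdiff h)^[j] f x * (fdiff h)^[m + 1 - j] g (x + j • h) with hU
    have hsub : ∀ j ∈ Finset.range (m + 1), m - j + 1 = m + 1 - j := by
      intro j hj
      have := Finset.mem_range_succ_iff.mp hj
      omega
    have e3' : ∑ j ∈ Finset.range (m + 1),
            (m.choose j : ℝ) * ((fdiff h)^[j] f x * (fdiff h)^[m - j + 1] g (x + j • h))
        = ∑ j ∈ Finset.range (m + 1), (m.choose j : ℝ) * U j := by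
      refine Finset.sum_congr rfl fun j hj => ?_
      rw [hsub j hj]
    have e2' : ∑ j ∈ Finset.range (m + 1),
            (m.choose j : ℝ) * ((fdiff h)^[j + 1] f x * (fdiff h)^[m - j] g (x + (j+1) • h))
        = ∑ j ∈ Finset.range (m + 1), (m.choose j : ℝ) * U (j + 1) := by
      refine Finset.sum_congr rfl fun j hj => ?_
      have : m + 1 - (j + 1) = m - j := by omega
      rw [hU]; simp only [this]
    rw [e2', e3']
    have pascal : ∀ i : ℕ, (((m+1).choose (i+1) : ℕ) : ℝ) = (m.choose i : ℝ) + (m.choose (i+1) : ℝ) := by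
      intro i; rw [Nat.choose_succ_succ]; push_cast; ring
    have key : ∑ j ∈ Finset.range (m + 1 + 1), ((m + 1).choose j : ℝ) * U j
        = (∑ j ∈ Finset.range (m + 1), (m.choose j : ℝ) * U (j + 1))
          + ∑ j ∈ Finset.range (m + 1), (m.choose j : ℝ) * U j := by
      rw [Finset.sum_range_succ' (fun j => ((m + 1).choose j : ℝ) * U j) (m + 1)]
      have expand : ∑ i ∈ Finset.range (m + 1), (((m+1).choose (i+1) : ℕ) : ℝ) * U (i+1)
          = (∑ i ∈ Finset.range (m + 1), (m.choose i : ℝ) * U (i+1))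
            + ∑ i ∈ Finset.range (m + 1), (m.choose (i+1) : ℝ) * U (i+1) := by
        rw [← Finset.sum_add_distrib]
        exact Finset.sum_congr rfl fun i hi => by rw [pascal]; ring
      rw [expand]
      have second : (∑ i ∈ Finset.range (m + 1), (m.choose (i+1) : ℝ) * U (i+1))
            + (((m+1).choose 0 : ℕ) : ℝ) * U 0
          = ∑ j ∈ Finset.range (m + 1), (m.choose j : ℝ) * U j := by
        rw [Finset.sum_range_succ (fun i => (m.choose (i+1) : ℝ) * U (i+1)) m,
            Finset.sum_range_succ' (fun j => (m.choose j : ℝ) * U j) m]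
        simp [Nat.choose_succ_self]
      linarith [second]
    rw [key]

end Alg


section Analytic

variable {E : Type*} [NormedAddCommGroup E] [NormedSpace ℝ E]
variable {F : Type*} [NormedAddCommGroup F] [NormedSpace ℝ F]

lemma fderiv_comp_add (u : E → F) (c x : E) :
    fderiv ℝ (fun y => u (y + c)) x = fderiv ℝ u (x + c) := by
  by_cases hd : DifferentiableAt ℝ u (x + c)
  · have hshift : HasFDerivAt (fun y : E => y + c) (ContinuousLinearMap.id ℝ E) x :=
      (hasFDerivAt_id x).add_const c
    have := (hd.hasFDerivAt.comp x hshift).fderiv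
    simp at this; exact this
  · have hd' : ¬ DifferentiableAt ℝ (fun y => u (y + c)) x := by
      intro hdd
      have hdd2 : DifferentiableAt ℝ ((fun y => u (y + c)) ∘ (fun z => z - c)) (x + c) :=
        DifferentiableAt.comp _ (by simpa using hdd) (differentiableAt_id.sub_const c)
      apply hd
      have heq : ((fun y => u (y + c)) ∘ (fun z => z - c)) = u := by
        funext z; simp [Function.comp]
      rwa [heq] at hdd2
    rw [fderiv_zero_of_not_differentiableAt hd, fderiv_zero_of_not_differentiableAt hd']

lemma iteratedFDeriv_comp_add (u : E → F) (c : E) (m : ℕ) :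
    iteratedFDeriv ℝ m (fun y => u (y + c)) = fun x => iteratedFDeriv ℝ m u (x + c) := by
  induction m with
  | zero => funext x; ext v; simp [iteratedFDeriv_zero_apply]
  | succ m ih =>
    funext x; ext v
    rw [iteratedFDeriv_succ_apply_left, iteratedFDeriv_succ_apply_left, ih, fderiv_comp_add]

/-- Mean-value bound for iterated forward differences of a `C^m` function. -/
lemma fdiff_iterate_norm_le (h : E) (m : ℕ) : ∀ (g : E → ℝ) (M : ℝ),
    ContDiff ℝ (m : ℕ∞) g → (∀ x, ‖iteratedFDeriv ℝ m g x‖ ≤ M) →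
    ∀ x, |(fdiff h)^[m] g x| ≤ M * ‖h‖ ^ m := by
  induction m with
  | zero =>
    intro g M _ hM x
    simpa [norm_iteratedFDeriv_zero, Real.norm_eq_abs] using hM x
  | succ m ih =>
    intro g M hg hM x
    rw [Function.iterate_succ_apply]
    have hshift : ContDiff ℝ (m : ℕ∞) (fun y : E => g (y + h)) := by
      have : ContDiff ℝ ((m+1 : ℕ) : ℕ∞) (fun y : E => g (y + h)) :=
        hg.comp (contDiff_id.add contDiff_const)
      exact this.of_le (by exact_mod_cast Nat.cast_le.mpr (Nat.le_succ m))
    have hgm : ContDiff ℝ (m : ℕ∞) g :=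
      hg.of_le (by exact_mod_cast Nat.cast_le.mpr (Nat.le_succ m))
    have hu : ContDiff ℝ (m : ℕ∞) (fdiff h g) := by
      have : fdiff h g = fun y => g (y + h) - g y := rfl
      rw [this]
      exact hshift.sub hgm
    refine le_of_le_of_eq (ih (fdiff h g) (M * ‖h‖) hu ?_ x) (by ring)
    intro y
    have hdiff : ∀ z : E, DifferentiableAt ℝ (iteratedFDeriv ℝ m g) z := by
      intro z
      exact (hg.differentiable_iteratedFDeriv
        (by exact_mod_cast Nat.lt_succ_self m)) z
    have hbound : ∀ z : E, ‖fderiv ℝ (iteratedFDeriv ℝ m g) z‖ ≤ M := by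
      intro z
      rw [norm_fderiv_iteratedFDeriv]
      exact hM z
    have mv : ‖iteratedFDeriv ℝ m g (y + h) - iteratedFDeriv ℝ m g y‖ ≤ M * ‖h‖ := by
      have := (convex_univ (𝕜 := ℝ) (E := E)).norm_image_sub_le_of_norm_fderiv_le
        (f := iteratedFDeriv ℝ m g) (fun z _ => hdiff z) (fun z _ => hbound z)
        (Set.mem_univ y) (Set.mem_univ (y + h))
      simpa using this
    have hsub : iteratedFDeriv ℝ m (fdiff h g) y
        = iteratedFDeriv ℝ m (fun y => g (y + h)) y - iteratedFDeriv ℝ m g y := by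
      have e : fdiff h g = fun z => g (z + h) + (-g) z := by
        funext z; simp [fdiff, sub_eq_add_neg]
      rw [e, iteratedFDeriv_add_apply' hshift.contDiffAt (by exact hgm.neg.contDiffAt), iteratedFDeriv_neg_apply,
        sub_eq_add_neg]
    rw [hsub, iteratedFDeriv_comp_add]
    exact mv

end Analytic

/-- Product estimate in homogeneous Lipschitz spaces: if `|f| ≤ A 0`, `f` has `Λ̇^l` seminorm at
most `A l` for `1 ≤ l ≤ k`, and `g ∈ C^k(ℝⁿ)` with `‖∇^m g‖_∞ ≤ G m` for `m ≤ k`, then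
`‖fg‖_{Λ̇^k} ≤ C(k,n)·(∑_{l=1}^k A l · G (k-l) + A 0 · G k)`. -/
theorem lipschitz_product_estimate (k n : ℕ) (hk : 1 ≤ k) (hn : 1 ≤ n) :
    ∃ C > (0:ℝ), ∀ (f g : EuclideanSpace ℝ (Fin n) → ℝ) (A G : ℕ → ℝ),
      (∀ x, |f x| ≤ A 0) →
      (∀ l : ℕ, 1 ≤ l → l ≤ k → ∀ h : EuclideanSpace ℝ (Fin n), h ≠ 0 →
        ∀ x, |(fdiff h)^[l + 1] f x| ≤ A l * ‖h‖ ^ l) →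
      ContDiff ℝ (k : ℕ∞) g →
      (∀ m : ℕ, m ≤ k → ∀ x, ‖iteratedFDeriv ℝ m g x‖ ≤ G m) →
      ∀ h : EuclideanSpace ℝ (Fin n), h ≠ 0 → ∀ x,
        |(fdiff h)^[k + 1] (fun y => f y * g y) x| ≤
          C * ((∑ l ∈ Finset.Icc 1 k, A l * G (k - l)) + A 0 * G k) * ‖h‖ ^ k := by
  refine ⟨2 ^ (k + 2), by positivity, ?_⟩
  intro f g A G hf0 hfl hg hG h hh x
  set S : ℝ := (∑ l ∈ Finset.Icc 1 k, A l * G (k - l)) + A 0 * G k with hSdef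
  have hhn : (0:ℝ) < ‖h‖ := norm_pos_iff.mpr hh
  have hA0 : 0 ≤ A 0 := le_trans (abs_nonneg _) (hf0 0)
  have hAl : ∀ l : ℕ, 1 ≤ l → l ≤ k → 0 ≤ A l := by
    intro l h1 h2
    have h3 := (abs_nonneg _).trans (hfl l h1 h2 h hh 0)
    have h4 : (0:ℝ) < ‖h‖ ^ l := pow_pos hhn l
    nlinarith
  have hGm : ∀ m : ℕ, m ≤ k → 0 ≤ G m := fun m hm => (norm_nonneg _).trans (hG m hm 0)
  have hterm : ∀ l ∈ Finset.Icc 1 k, 0 ≤ A l * G (k - l) := by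
    intro l hl
    rcases Finset.mem_Icc.mp hl with ⟨h1, h2⟩
    exact mul_nonneg (hAl l h1 h2) (hGm (k - l) (Nat.sub_le k l))
  have hsum0 : 0 ≤ ∑ l ∈ Finset.Icc 1 k, A l * G (k - l) := Finset.sum_nonneg hterm
  have hA0Gk : 0 ≤ A 0 * G k := mul_nonneg hA0 (hGm k le_rfl)
  have hS0 : 0 ≤ S := by rw [hSdef]; linarith
  -- bounds for iterated differences of g
  have hgb : ∀ m : ℕ, m ≤ k → ∀ y, |(fdiff h)^[m] g y| ≤ G m * ‖h‖ ^ m := by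
    intro m hm
    exact fdiff_iterate_norm_le h m g (G m)
      (hg.of_le (by exact_mod_cast Nat.cast_le.mpr hm)) (hG m hm)
  have hgk1 : ∀ y, |(fdiff h)^[k + 1] g y| ≤ 2 * G k * ‖h‖ ^ k := by
    intro y
    rw [Function.iterate_succ_apply']
    have : fdiff h ((fdiff h)^[k] g) y = (fdiff h)^[k] g (y + h) - (fdiff h)^[k] g y := rfl
    rw [this]
    have b1 := hgb k le_rfl (y + h)
    have b2 := hgb k le_rfl y
    calc |(fdiff h)^[k] g (y + h) - (fdiff h)^[k] g y|
        ≤ |(fdiff h)^[k] g (y + h)| + |(fdiff h)^[k] g y| := abs_sub _ _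
      _ ≤ 2 * G k * ‖h‖ ^ k := by linarith
  -- bound each term of the Leibniz expansion
  have key : ∀ j ∈ Finset.range (k + 1 + 1),
      |(fdiff h)^[j] f x * (fdiff h)^[k + 1 - j] g (x + j • h)| ≤ 2 * S * ‖h‖ ^ k := by
    intro j hj
    have hjk : j ≤ k + 1 := Finset.mem_range_succ_iff.mp hj
    rw [abs_mul]
    match j, hjk with
    | 0, _ =>
      have b1 : |(fdiff h)^[0] f x| ≤ A 0 := hf0 x
      have b2 := hgk1 (x + (0:ℕ) • h)
      have hA0Gk_le : A 0 * G k ≤ S := by rw [hSdef]; linarith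
      calc |(fdiff h)^[0] f x| * |(fdiff h)^[k + 1 - 0] g (x + (0:ℕ) • h)|
          ≤ A 0 * (2 * G k * ‖h‖ ^ k) := by
            apply mul_le_mul b1 b2 (abs_nonneg _) hA0
        _ = 2 * (A 0 * G k) * ‖h‖ ^ k := by ring
        _ ≤ 2 * S * ‖h‖ ^ k := by
            have := pow_nonneg (norm_nonneg h) k
            nlinarith
    | 1, _ =>
      have b1 : |(fdiff h)^[1] f x| ≤ 2 * A 0 := by
        have : (fdiff h)^[1] f x = f (x + h) - f x := rfl
        rw [this]
        calc |f (x + h) - f x| ≤ |f (x + h)| + |f x| := abs_sub _ _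
          _ ≤ 2 * A 0 := by have := hf0 (x + h); have := hf0 x; linarith
      have hkk : k + 1 - 1 = k := by omega
      rw [hkk]
      have b2 := hgb k le_rfl (x + (1:ℕ) • h)
      have hA0Gk_le : A 0 * G k ≤ S := by rw [hSdef]; linarith
      calc |(fdiff h)^[1] f x| * |(fdiff h)^[k] g (x + (1:ℕ) • h)|
          ≤ (2 * A 0) * (G k * ‖h‖ ^ k) := by
            apply mul_le_mul b1 b2 (abs_nonneg _) (by linarith)
        _ = 2 * (A 0 * G k) * ‖h‖ ^ k := by ring
        _ ≤ 2 * S * ‖h‖ ^ k := by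
            have := pow_nonneg (norm_nonneg h) k
            nlinarith
    | (i + 2), hjk =>
      have hl1 : 1 ≤ i + 1 := by omega
      have hl2 : i + 1 ≤ k := by omega
      have b1 : |(fdiff h)^[i + 1 + 1] f x| ≤ A (i + 1) * ‖h‖ ^ (i + 1) :=
        hfl (i + 1) hl1 hl2 h hh x
      have hidx : k + 1 - (i + 2) = k - (i + 1) := by omega
      rw [hidx]
      have b2 := hgb (k - (i + 1)) (Nat.sub_le k (i + 1)) (x + (i + 2 : ℕ) • h)
      have hle : A (i + 1) * G (k - (i + 1)) ≤ ∑ l ∈ Finset.Icc 1 k, A l * G (k - l) :=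
        Finset.single_le_sum hterm (Finset.mem_Icc.mpr ⟨hl1, hl2⟩)
      have hpow : ‖h‖ ^ (i + 1) * ‖h‖ ^ (k - (i + 1)) = ‖h‖ ^ k := by
        rw [← pow_add]
        congr 1
        omega
      calc |(fdiff h)^[i + 2] f x| * |(fdiff h)^[k - (i + 1)] g (x + (i + 2 : ℕ) • h)|
          ≤ (A (i + 1) * ‖h‖ ^ (i + 1)) * (G (k - (i + 1)) * ‖h‖ ^ (k - (i + 1))) := by
            apply mul_le_mul b1 b2 (abs_nonneg _)
              (mul_nonneg (hAl (i + 1) hl1 hl2) (pow_nonneg (norm_nonneg h) _))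
        _ = (A (i + 1) * G (k - (i + 1))) * (‖h‖ ^ (i + 1) * ‖h‖ ^ (k - (i + 1))) := by ring
        _ = (A (i + 1) * G (k - (i + 1))) * ‖h‖ ^ k := by rw [hpow]
        _ ≤ 2 * S * ‖h‖ ^ k := by
            have hp := pow_nonneg (norm_nonneg h) k
            have : A (i + 1) * G (k - (i + 1)) ≤ S := by rw [hSdef]; linarith
            nlinarith
  -- assemble via the discrete Leibniz rule
  rw [fdiff_leibniz h (k + 1) f g x]
  calc |∑ j ∈ Finset.range (k + 1 + 1), ((k + 1).choose j : ℝ) *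
          ((fdiff h)^[j] f x * (fdiff h)^[k + 1 - j] g (x + j • h))|
      ≤ ∑ j ∈ Finset.range (k + 1 + 1), |((k + 1).choose j : ℝ) *
          ((fdiff h)^[j] f x * (fdiff h)^[k + 1 - j] g (x + j • h))| :=
        Finset.abs_sum_le_sum_abs _ _
    _ ≤ ∑ j ∈ Finset.range (k + 1 + 1), ((k + 1).choose j : ℝ) * (2 * S * ‖h‖ ^ k) := by
        refine Finset.sum_le_sum fun j hj => ?_
        rw [abs_mul, Nat.abs_cast]
        exact mul_le_mul_of_nonneg_left (key j hj) (Nat.cast_nonneg _)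
    _ = (∑ j ∈ Finset.range (k + 1 + 1), ((k + 1).choose j : ℝ)) * (2 * S * ‖h‖ ^ k) :=
        (Finset.sum_mul _ _ _).symm
    _ = (2:ℝ) ^ (k + 1) * (2 * S * ‖h‖ ^ k) := by
        rw [← Nat.cast_sum, Nat.sum_range_choose]
        push_cast
        ring
    _ = 2 ^ (k + 2) * S * ‖h‖ ^ k := by ring
end

section
/- For every integer k ≥ 1 there exist constants c(k) > 0 and C(k) with the following property. Let 0 < ε < 1/4, a > 4, and let I ⊆ [−a, a] be a closed interval with |I| < 2ε and midpoint x₀ ∈ [−1, 1]. Then there exists a function f_k : ℝ → ℝ such that: (i) f_k = 0 on I ∪ [−a, a]ᶜ; (ii) |f_k(x)| ≥ c(k) · min{log a, log(1/ε)} for every x ∈ J = ([x₀ − 1/2, x₀ + 1/2])ᶜ ∩ [−1, 1]; (iii) ‖f_k‖_∞ ≤ C(k) · a^k; (iv) sup_{h≠0} sup_x |Δ_h^{k+1} f_k(x)| / |h|^k ≤ C(k). -/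
namespace FdiffAux

open Real Set Filter Topology

noncomputable def ramp (s : ℝ) : ℝ := s * Real.smoothTransition (4 * s)

lemma le_infty (j : ℕ) : (j : WithTop ℕ∞) ≤ ↑(⊤:ℕ∞) := by
  exact_mod_cast (le_top : (j:ℕ∞) ≤ ⊤)

lemma one_le_infty : (1 : WithTop ℕ∞) ≤ ↑(⊤:ℕ∞) := by
  exact_mod_cast (le_top : (1:ℕ∞) ≤ ⊤)

lemma ramp_contDiff : ContDiff ℝ (↑(⊤:ℕ∞)) ramp :=
  contDiff_id.mul (Real.smoothTransition.contDiff.comp (contDiff_const.mul contDiff_id))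

lemma ramp_of_nonpos {s : ℝ} (hs : s ≤ 0) : ramp s = 0 := by
  simp [ramp, Real.smoothTransition.zero_of_nonpos (by linarith : 4 * s ≤ 0)]

lemma ramp_of_ge {s : ℝ} (hs : 1/4 ≤ s) : ramp s = s := by
  simp [ramp, Real.smoothTransition.one_of_one_le (by linarith : (1:ℝ) ≤ 4 * s)]

lemma ramp_nonneg (s : ℝ) : 0 ≤ ramp s := by
  rcases le_or_gt s 0 with hs | hs
  · simp [ramp_of_nonpos hs]
  · exact mul_nonneg hs.le (Real.smoothTransition.nonneg _)

lemma ramp_le (s : ℝ) : ramp s ≤ max s 0 := by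
  rcases le_or_gt s 0 with hs | hs
  · simp [ramp_of_nonpos hs]
  · refine le_trans ?_ (le_max_left _ _)
    calc s * Real.smoothTransition (4*s) ≤ s * 1 :=
      mul_le_mul_of_nonneg_left (Real.smoothTransition.le_one _) hs.le
    _ = s := mul_one s

lemma ramp_ge (s : ℝ) : s - 1/4 ≤ ramp s := by
  rcases le_or_gt (1/4) s with hs | hs
  · rw [ramp_of_ge hs]; linarith
  · have := ramp_nonneg s; linarith

lemma iteratedDeriv_const_succ (n : ℕ) (c : ℝ) :
    iteratedDeriv (n+1) (fun _ : ℝ => c) = fun _ => 0 := by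
  induction n with
  | zero => funext x; simp [iteratedDeriv_succ]
  | succ n ih => rw [iteratedDeriv_succ, ih]; funext x; simp

lemma iteratedDeriv_id_bound (j : ℕ) (hj : 1 ≤ j) (s : ℝ) :
    |iteratedDeriv j (fun x : ℝ => x) s| ≤ 1 := by
  match j, hj with
  | 1, _ => simp [iteratedDeriv_succ]
  | (m+2), _ =>
    rw [iteratedDeriv_succ', show deriv (fun x : ℝ => x) = fun _ => (1:ℝ) from funext fun x => by simp]
    rw [iteratedDeriv_const_succ]
    norm_num

lemma ramp_ideriv_bound (j : ℕ) (hj : 1 ≤ j) : ∃ B, 0 ≤ B ∧ ∀ s, |iteratedDeriv j ramp s| ≤ B := by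
  have hcont : Continuous (fun s => |iteratedDeriv j ramp s|) :=
    (ramp_contDiff.continuous_iteratedDeriv j (le_infty j)).abs
  obtain ⟨z, _, hz⟩ := (isCompact_Icc (a := (-1:ℝ)) (b := 1)).exists_isMaxOn
    (nonempty_Icc.2 (by norm_num)) hcont.continuousOn
  refine ⟨max (|iteratedDeriv j ramp z|) 1, by positivity, fun s => ?_⟩
  rcases le_or_gt s (-1) with hs | hs
  · have hev : ramp =ᶠ[𝓝 s] (fun _ => (0:ℝ)) := by
      filter_upwards [Iio_mem_nhds (show s < 0 by linarith)] with u hu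
      exact ramp_of_nonpos (le_of_lt hu)
    rw [hev.iteratedDeriv_eq]
    obtain ⟨m, rfl⟩ := Nat.exists_eq_add_of_le hj
    rw [show 1 + m = m + 1 by ring, iteratedDeriv_const_succ]
    simp
  · rcases le_or_gt s 1 with hs1 | hs1
    · exact le_trans (hz ⟨hs.le, hs1⟩) (le_max_left _ _)
    · have hev : ramp =ᶠ[𝓝 s] (fun x => x) := by
        filter_upwards [Ioi_mem_nhds (show (1/4:ℝ) < s by linarith)] with u hu
        exact ramp_of_ge (le_of_lt hu)
      rw [hev.iteratedDeriv_eq]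
      exact le_trans (iteratedDeriv_id_bound j hj s) (le_max_right _ _)

/-- All iterated derivatives bounded. -/
def AllDB (f : ℝ → ℝ) : Prop := ∀ i : ℕ, ∃ B, 0 ≤ B ∧ ∀ s, |iteratedDeriv i f s| ≤ B

lemma iteratedDeriv_add_fun {n : ℕ} {f g : ℝ → ℝ} (hf : ContDiff ℝ (↑(⊤:ℕ∞)) f)
    (hg : ContDiff ℝ (↑(⊤:ℕ∞)) g) :
    iteratedDeriv n (fun x => f x + g x) = fun x => iteratedDeriv n f x + iteratedDeriv n g x := by
  funext x
  have := iteratedDerivWithin_add (mem_univ x) uniqueDiffOn_univ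
    (f := f) (g := g) (n := n) ((hf.of_le (le_infty n)).contDiffWithinAt) ((hg.of_le (le_infty n)).contDiffWithinAt)
  simp only [iteratedDerivWithin_univ] at this
  exact this

lemma iteratedDeriv_const_mul_fun {n : ℕ} (c : ℝ) {f : ℝ → ℝ} (hf : ContDiff ℝ (↑(⊤:ℕ∞)) f) :
    iteratedDeriv n (fun x => c * f x) = fun x => c * iteratedDeriv n f x := by
  funext x
  have := iteratedDerivWithin_const_mul (mem_univ x) uniqueDiffOn_univ
    (c := c) (f := f) (n := n) ((hf.of_le (le_infty n)).contDiffWithinAt)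
  simpa [iteratedDerivWithin_univ] using this

lemma AllDB.add {f g : ℝ → ℝ} (hf : ContDiff ℝ (↑(⊤:ℕ∞)) f) (hg : ContDiff ℝ (↑(⊤:ℕ∞)) g)
    (haf : AllDB f) (hag : AllDB g) : AllDB (fun x => f x + g x) := by
  intro i
  obtain ⟨B1, hB1, h1⟩ := haf i
  obtain ⟨B2, hB2, h2⟩ := hag i
  refine ⟨B1 + B2, by linarith, fun s => ?_⟩
  rw [iteratedDeriv_add_fun hf hg]
  exact le_trans (abs_add_le _ _) (add_le_add (h1 s) (h2 s))

lemma AllDB.const_mul (c : ℝ) {f : ℝ → ℝ} (hf : ContDiff ℝ (↑(⊤:ℕ∞)) f) (haf : AllDB f) :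
    AllDB (fun x => c * f x) := by
  intro i
  obtain ⟨B, hB, h1⟩ := haf i
  refine ⟨|c| * B, by positivity, fun s => ?_⟩
  rw [iteratedDeriv_const_mul_fun c hf]
  rw [abs_mul]
  exact mul_le_mul_of_nonneg_left (h1 s) (abs_nonneg c)

lemma AllDB.deriv {f : ℝ → ℝ} (haf : AllDB f) : AllDB (deriv f) := by
  intro i
  obtain ⟨B, hB, h1⟩ := haf (i+1)
  exact ⟨B, hB, fun s => by rw [← iteratedDeriv_succ']; exact h1 s⟩

lemma AllDB.zero : AllDB (fun _ : ℝ => 0) := by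
  intro i
  refine ⟨0, le_refl _, fun s => ?_⟩
  cases i with
  | zero => simp
  | succ n => rw [iteratedDeriv_const_succ]; simp

noncomputable def rho (k : ℕ) (ℓ : ℝ → ℝ) : ℕ → ℝ → ℝ
  | 0 => ℓ
  | j+1 => fun s => ((k:ℝ) - j) * rho k ℓ j s + deriv (rho k ℓ j) s

lemma rho_contDiff {k : ℕ} {ℓ : ℝ → ℝ} (hℓ : ContDiff ℝ (↑(⊤:ℕ∞)) ℓ) (j : ℕ) :
    ContDiff ℝ (↑(⊤:ℕ∞)) (rho k ℓ j) := by
  induction j with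
  | zero => exact hℓ
  | succ j ih =>
    exact (contDiff_const.mul ih).add (contDiff_infty_iff_deriv.mp ih).2

lemma rho_decomp {k : ℕ} {ℓ : ℝ → ℝ} (hℓ : ContDiff ℝ (↑(⊤:ℕ∞)) ℓ) (hdl : AllDB (deriv ℓ)) (j : ℕ) :
    ∃ σ : ℝ → ℝ, ContDiff ℝ (↑(⊤:ℕ∞)) σ ∧ AllDB σ ∧
      rho k ℓ j = fun s => (∏ i ∈ Finset.range j, ((k:ℝ) - i)) * ℓ s + σ s := by
  induction j with
  | zero =>
    exact ⟨fun _ => 0, contDiff_const, AllDB.zero, by funext s; simp [rho]⟩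
  | succ j ih =>
    obtain ⟨σ, hσc, hσb, hσe⟩ := ih
    set c : ℝ := ∏ i ∈ Finset.range j, ((k:ℝ) - i) with hc
    refine ⟨fun s => ((k:ℝ) - j) * σ s + (c * deriv ℓ s + deriv σ s), ?_, ?_, ?_⟩
    · exact (contDiff_const.mul hσc).add
        ((contDiff_const.mul (contDiff_infty_iff_deriv.mp hℓ).2).add
          (contDiff_infty_iff_deriv.mp hσc).2)
    · apply AllDB.add (contDiff_const.mul hσc)
        ((contDiff_const.mul (contDiff_infty_iff_deriv.mp hℓ).2).add
          (contDiff_infty_iff_deriv.mp hσc).2)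
        (AllDB.const_mul _ hσc hσb)
      exact AllDB.add (contDiff_const.mul (contDiff_infty_iff_deriv.mp hℓ).2)
        (contDiff_infty_iff_deriv.mp hσc).2
        (AllDB.const_mul c (contDiff_infty_iff_deriv.mp hℓ).2 hdl)
        hσb.deriv
    · funext s
      have hd1 : HasDerivAt (fun u => c * ℓ u + σ u) (c * deriv ℓ s + deriv σ s) s :=
        (((hℓ.differentiable (zero_lt_one.trans_le one_le_infty).ne') s).hasDerivAt.const_mul c).add
          (((hσc.differentiable (zero_lt_one.trans_le one_le_infty).ne') s).hasDerivAt)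
      show ((k:ℝ) - j) * rho k ℓ j s + deriv (rho k ℓ j) s = _
      rw [hσe, hd1.deriv, Finset.prod_range_succ]
      ring

lemma rho_top_bound {k : ℕ} {ℓ : ℝ → ℝ} (hℓ : ContDiff ℝ (↑(⊤:ℕ∞)) ℓ) (hdl : AllDB (deriv ℓ)) :
    ∃ B, 0 ≤ B ∧ ∀ s, |rho k ℓ (k+1) s| ≤ B := by
  obtain ⟨σ, hσc, hσb, hσe⟩ := rho_decomp hℓ hdl (k+1)
  obtain ⟨B, hB, hb⟩ := hσb 0
  have hzero : (∏ i ∈ Finset.range (k+1), ((k:ℝ) - i)) = 0 :=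
    Finset.prod_eq_zero (Finset.self_mem_range_succ k) (by simp)
  refine ⟨B, hB, fun s => ?_⟩
  rw [hσe, hzero]
  simpa using hb s

lemma fdiff_iter_add (h : ℝ) : ∀ (n : ℕ) (f g : ℝ → ℝ),
    (fdiff h)^[n] (fun x => f x + g x) = fun x => (fdiff h)^[n] f x + (fdiff h)^[n] g x := by
  intro n
  induction n with
  | zero => intro f g; simp
  | succ n ih =>
    intro f g
    rw [Function.iterate_succ_apply, Function.iterate_succ_apply,
      Function.iterate_succ_apply]
    have : (fdiff h fun x => f x + g x) = fun x => fdiff h f x + fdiff h g x := by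
      funext x; simp [fdiff]; ring
    rw [this, ih]

lemma fdiff_iter_const_mul (h : ℝ) (c : ℝ) : ∀ (n : ℕ) (f : ℝ → ℝ),
    (fdiff h)^[n] (fun x => c * f x) = fun x => c * (fdiff h)^[n] f x := by
  intro n
  induction n with
  | zero => intro f; simp
  | succ n ih =>
    intro f
    rw [Function.iterate_succ_apply, Function.iterate_succ_apply]
    have : (fdiff h fun x => c * f x) = fun x => c * fdiff h f x := by
      funext x; simp [fdiff]; ring
    rw [this, ih]

lemma fdiff_iter_comp_affine (h b c : ℝ) : ∀ (n : ℕ) (f : ℝ → ℝ) (x : ℝ),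
    (fdiff h)^[n] (fun y => f (b * y + c)) x = (fdiff (b * h))^[n] f (b * x + c) := by
  intro n
  induction n with
  | zero => intro f x; simp
  | succ n ih =>
    intro f x
    rw [Function.iterate_succ_apply, Function.iterate_succ_apply]
    have : (fdiff h fun y => f (b * y + c)) = fun y => (fdiff (b * h) f) (b * y + c) := by
      funext y; simp only [fdiff]; ring_nf
    rw [this, ih]

lemma fdiff_iter_neg_h (h : ℝ) : ∀ (n : ℕ) (f : ℝ → ℝ) (x : ℝ),
    (fdiff (-h))^[n] f x = (-1 : ℝ) ^ n * (fdiff h)^[n] f (x - n * h) := by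
  intro n
  induction n with
  | zero => intro f x; simp
  | succ n ih =>
    intro f x
    rw [Function.iterate_succ_apply', Function.iterate_succ_apply']
    have e1 : fdiff (-h) ((fdiff (-h))^[n] f) x
        = (fdiff (-h))^[n] f (x + (-h)) - (fdiff (-h))^[n] f x := rfl
    rw [e1, ih, ih]
    have e2 : fdiff h ((fdiff h)^[n] f) (x - (n+1) * h)
        = (fdiff h)^[n] f (x - (n+1) * h + h) - (fdiff h)^[n] f (x - (n+1) * h) := rfl
    have e3 : x + -h - n * h = x - (n+1) * h := by ring
    have e4 : x - n * h = x - (n+1) * h + h := by ring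
    rw [e3, e4]
    push_cast
    rw [e2]
    ring

lemma fdiff_iter_congr (h : ℝ) (hh : 0 ≤ h) : ∀ (n : ℕ) (f g : ℝ → ℝ) (x : ℝ),
    (∀ y ∈ Icc x (x + n * h), f y = g y) →
    (fdiff h)^[n] f x = (fdiff h)^[n] g x := by
  intro n
  induction n with
  | zero => intro f g x hfg; simpa using hfg x (by simp)
  | succ n ih =>
    intro f g x hfg
    rw [Nat.cast_add_one] at hfg
    rw [Function.iterate_succ_apply, Function.iterate_succ_apply]
    apply ih
    intro y hy
    have h1 : y ∈ Icc x (x + ((n:ℝ) + 1) * h) := by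
      refine ⟨hy.1, le_trans hy.2 (by nlinarith)⟩
    have h2 : y + h ∈ Icc x (x + ((n:ℝ) + 1) * h) := by
      refine ⟨by linarith [hy.1], by nlinarith [hy.2]⟩
    show f (y + h) - f y = g (y + h) - g y
    rw [hfg _ h1, hfg _ h2]

lemma fdiff_iter_bound_sup (h : ℝ) (hh : 0 ≤ h) : ∀ (n : ℕ) (f : ℝ → ℝ) (M : ℝ) (x : ℝ),
    (∀ y ∈ Icc x (x + n * h), |f y| ≤ M) →
    |(fdiff h)^[n] f x| ≤ 2 ^ n * M := by
  intro n
  induction n with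
  | zero => intro f M x hf; simpa using hf x (by simp)
  | succ n ih =>
    intro f M x hf
    rw [Nat.cast_add_one] at hf
    rw [Function.iterate_succ_apply]
    have hb : ∀ y ∈ Icc x (x + n * h), |fdiff h f y| ≤ 2 * M := by
      intro y hy
      have h1 : y ∈ Icc x (x + ((n:ℝ)+1) * h) := ⟨hy.1, le_trans hy.2 (by nlinarith)⟩
      have h2 : y + h ∈ Icc x (x + ((n:ℝ)+1) * h) :=
        ⟨by linarith [hy.1], by nlinarith [hy.2]⟩
      calc |f (y + h) - f y| ≤ |f (y+h)| + |f y| := abs_sub _ _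
        _ ≤ M + M := add_le_add (hf _ h2) (hf _ h1)
        _ = 2 * M := by ring
    calc |(fdiff h)^[n] (fdiff h f) x| ≤ 2 ^ n * (2 * M) := ih _ _ _ hb
      _ = 2 ^ (n+1) * M := by ring

/-- Key bound: a chain of derivatives `F 0, F 1, ..., F n` on a convex set `s`
with `|F n| ≤ B` on `s` bounds iterated differences of `F 0`. -/
lemma fdiff_iter_bound_chain :
    ∀ (n : ℕ) (F : ℕ → ℝ → ℝ) (s : Set ℝ), Convex ℝ s →
    (∀ j < n, ∀ v ∈ s, HasDerivAt (F j) (F (j+1) v) v) →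
    ∀ (B : ℝ), (∀ v ∈ s, |F n v| ≤ B) →
    ∀ (h : ℝ), 0 ≤ h → ∀ (x : ℝ), Icc x (x + n * h) ⊆ s →
    |(fdiff h)^[n] (F 0) x| ≤ B * h ^ n := by
  intro n
  induction n with
  | zero =>
    intro F s hconv hd B hB h hh x hw
    simpa using hB x (hw (by simp))
  | succ n ih =>
    intro F s hconv hd B hB h hh x hw
    rw [Nat.cast_add_one] at hw
    set s' : Set ℝ := s ∩ (fun v => v + h) ⁻¹' s with hs'
    have hconv' : Convex ℝ s' := by
      apply hconv.inter
      intro u hu v hv a b ha hb hab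
      simp only [Set.mem_preimage] at *
      have : a • u + b • v + h = a • (u + h) + b • (v + h) := by
        simp [smul_eq_mul]; nlinarith
      rw [this]
      exact hconv hu hv ha hb hab
    set G : ℕ → ℝ → ℝ := fun j => fdiff h (F j) with hG
    have hdG : ∀ j < n, ∀ v ∈ s', HasDerivAt (G j) (G (j+1) v) v := by
      intro j hj v hv
      have h1 : HasDerivAt (fun y => F j (y + h)) (F (j+1) (v + h)) v := by
        have := (hd j (by omega) (v + h) hv.2).comp v ((hasDerivAt_id v).add_const h)
        simpa [Function.comp_def] using this
      exact h1.sub (hd j (by omega) v hv.1)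
    have hBG : ∀ v ∈ s', |G n v| ≤ B * h := by
      intro v hv
      have hvh : v ≤ v + h := by linarith
      have hseg : Icc v (v + h) ⊆ s := hconv.ordConnected.out hv.1 hv.2
      have := Convex.norm_image_sub_le_of_norm_hasDerivWithin_le
        (f := F n) (f' := F (n+1)) (s := Icc v (v + h)) (C := B)
        (fun y hy => ((hd n (by omega) y (hseg hy)).hasDerivWithinAt))
        (fun y hy => by simpa [Real.norm_eq_abs] using hB y (hseg hy))
        (convex_Icc _ _) (left_mem_Icc.2 hvh) (right_mem_Icc.2 hvh)
      simp only [Real.norm_eq_abs] at this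
      calc |G n v| = |F n (v + h) - F n v| := rfl
        _ ≤ B * |v + h - v| := this
        _ = B * h := by rw [show v + h - v = h by ring, abs_of_nonneg hh]
    have hw' : Icc x (x + n * h) ⊆ s' := by
      intro y hy
      refine ⟨hw ⟨hy.1, le_trans hy.2 (by nlinarith)⟩, ?_⟩
      simp only [Set.mem_preimage]
      exact hw ⟨by linarith [hy.1], by nlinarith [hy.2]⟩
    have := ih G s' hconv' hdG (B * h) hBG h hh x hw'
    rw [Function.iterate_succ_apply]
    calc |(fdiff h)^[n] (fdiff h (F 0)) x| = |(fdiff h)^[n] (G 0) x| := rfl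
      _ ≤ B * h * h ^ n := this
      _ = B * h ^ (n + 1) := by ring


lemma hasDerivAt_formula (k : ℕ) (ℓ : ℝ → ℝ) (hℓ : ContDiff ℝ (↑(⊤:ℕ∞)) ℓ) (j : ℕ)
    {v : ℝ} (hv : v ≠ 0) :
    HasDerivAt (fun u => u ^ ((k:ℤ) - j) * rho k ℓ j (Real.log u))
      (v ^ ((k:ℤ) - (j+1)) * rho k ℓ (j+1) (Real.log v)) v := by
  have h1 : HasDerivAt (fun u : ℝ => u ^ ((k:ℤ) - j))
      ((((k:ℤ) - j : ℤ) : ℝ) * v ^ ((k:ℤ) - j - 1)) v := hasDerivAt_zpow _ v (Or.inl hv)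
  have h2 : HasDerivAt (fun u => rho k ℓ j (Real.log u))
      (deriv (rho k ℓ j) (Real.log v) * v⁻¹) v := by
    have hd : HasDerivAt (rho k ℓ j) (deriv (rho k ℓ j) (Real.log v)) (Real.log v) :=
      (((rho_contDiff hℓ j).differentiable (zero_lt_one.trans_le one_le_infty).ne') (Real.log v)).hasDerivAt
    exact hd.comp v (Real.hasDerivAt_log hv)
  have h3 := h1.mul h2
  have key : (((k:ℤ) - j : ℤ) : ℝ) * v ^ ((k:ℤ) - j - 1) * rho k ℓ j (Real.log v)
      + v ^ ((k:ℤ) - j) * (deriv (rho k ℓ j) (Real.log v) * v⁻¹)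
      = v ^ ((k:ℤ) - (j+1)) * rho k ℓ (j+1) (Real.log v) := by
    have e1 : v ^ ((k:ℤ) - j) * v⁻¹ = v ^ ((k:ℤ) - j - 1) := by
      rw [zpow_sub_one₀ hv]
    have e2 : ((k:ℤ) - (j+1) : ℤ) = (k:ℤ) - j - 1 := by ring
    rw [e2]
    show _ = v ^ ((k:ℤ) - j - 1) * (((k:ℝ) - j) * rho k ℓ j (Real.log v)
      + deriv (rho k ℓ j) (Real.log v))
    rw [show v ^ ((k:ℤ) - j) * (deriv (rho k ℓ j) (Real.log v) * v⁻¹)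
        = (v ^ ((k:ℤ) - j) * v⁻¹) * deriv (rho k ℓ j) (Real.log v) from by ring, e1]
    push_cast
    ring
  rw [← key]
  exact h3

lemma ideriv_formula (k : ℕ) (ℓ : ℝ → ℝ) (hℓ : ContDiff ℝ (↑(⊤:ℕ∞)) ℓ) :
    ∀ (j : ℕ) (v : ℝ), v ≠ 0 → iteratedDeriv j (fun u => u ^ k * ℓ (Real.log u)) v
      = v ^ ((k:ℤ) - j) * rho k ℓ j (Real.log v) := by
  intro j
  induction j with
  | zero => intro v hv; simp [rho, zpow_natCast]
  | succ j ih =>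
    intro v hv
    rw [iteratedDeriv_succ]
    have hev : iteratedDeriv j (fun u => u ^ k * ℓ (Real.log u))
        =ᶠ[𝓝 v] fun u => u ^ ((k:ℤ) - j) * rho k ℓ j (Real.log u) := by
      filter_upwards [IsOpen.mem_nhds isOpen_compl_singleton hv] with u hu
      exact ih u hu
    rw [hev.deriv_eq]
    exact (hasDerivAt_formula k ℓ hℓ j hv).deriv

noncomputable def gbar (k : ℕ) (v : ℝ) : ℝ := v ^ k * ramp (Real.log v)
noncomputable def qfun (k : ℕ) (v : ℝ) : ℝ := v ^ k * Real.log v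

lemma gbar_eq_zero {k : ℕ} {v : ℝ} (hv : |v| ≤ 1) : gbar k v = 0 := by
  rcases eq_or_ne v 0 with rfl | hne
  · show (0:ℝ) ^ k * ramp (Real.log 0) = 0
    rw [Real.log_zero, ramp_of_nonpos (le_refl 0), mul_zero]
  · have : Real.log v ≤ 0 := by
      rw [← Real.log_abs]
      exact Real.log_nonpos (abs_nonneg v) hv
    simp [gbar, ramp_of_nonpos this]

lemma gbar_eqOn_zero (k : ℕ) : ∀ v ∈ Ioo (-1:ℝ) 1, gbar k v = 0 := fun v hv =>
  gbar_eq_zero (abs_le.mpr ⟨hv.1.le, hv.2.le⟩)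

lemma gbar_contDiff (k : ℕ) : ContDiff ℝ (↑(⊤:ℕ∞)) (gbar k) := by
  rw [contDiff_iff_contDiffAt]
  intro v
  rcases eq_or_ne v 0 with rfl | hv
  · apply ContDiffAt.congr_of_eventuallyEq (contDiffAt_const (c := (0:ℝ)))
    filter_upwards [IsOpen.mem_nhds isOpen_Ioo (by constructor <;> norm_num : (0:ℝ) ∈ Ioo (-1:ℝ) 1)]
      with u hu
    exact gbar_eqOn_zero k u hu
  · exact (contDiff_id.pow k).contDiffAt.mul
      ((ramp_contDiff.contDiffAt).comp v ((Real.contDiffAt_log).mpr hv))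

lemma gbar_ideriv_eq_zero {k : ℕ} {v : ℝ} (hv : |v| < 1) (j : ℕ) :
    iteratedDeriv j (gbar k) v = 0 := by
  have hev : gbar k =ᶠ[𝓝 v] (fun _ => (0:ℝ)) := by
    filter_upwards [IsOpen.mem_nhds isOpen_Ioo (abs_lt.mp hv : v ∈ Ioo (-1:ℝ) 1)] with u hu
    exact gbar_eqOn_zero k u hu
  rw [hev.iteratedDeriv_eq]
  cases j with
  | zero => simp
  | succ n =>
    induction n with
    | zero => simp [iteratedDeriv_succ]
    | succ n ih => rw [iteratedDeriv_succ', show deriv (fun _ : ℝ => (0:ℝ)) = fun _ => 0 from funext fun _ => by simp]; exact ih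


lemma lt_infty (j : ℕ) : (j : WithTop ℕ∞) < ↑(⊤:ℕ∞) := by
  exact_mod_cast (by simp : (j:ℕ∞) < ⊤)

lemma allDB_deriv_ramp : AllDB (deriv ramp) := by
  intro i
  obtain ⟨B, hB, hb⟩ := ramp_ideriv_bound (i+1) (by omega)
  exact ⟨B, hB, fun s => by rw [← iteratedDeriv_succ']; exact hb s⟩

lemma allDB_deriv_id : AllDB (deriv (fun x : ℝ => x)) := by
  have hd : deriv (fun x : ℝ => x) = fun _ => (1:ℝ) := funext fun x => by simp
  rw [hd]
  intro i
  refine ⟨1, zero_le_one, fun s => ?_⟩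
  cases i with
  | zero => simp
  | succ n => rw [iteratedDeriv_const_succ]; norm_num

/-- chain + bound for globally smooth functions -/
lemma fdiff_bound_of_contDiff (f : ℝ → ℝ) (hf : ContDiff ℝ (↑(⊤:ℕ∞)) f) (n : ℕ) (B : ℝ)
    (hB : ∀ v, |iteratedDeriv n f v| ≤ B) {h : ℝ} (hh : 0 ≤ h) (x : ℝ) :
    |(fdiff h)^[n] f x| ≤ B * h ^ n := by
  have := fdiff_iter_bound_chain n (fun j => iteratedDeriv j f) univ convex_univ
    (fun j hj v _ => by
      have hd := (hf.differentiable_iteratedDeriv j (lt_infty j)) v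
      have := hd.hasDerivAt
      rwa [show deriv (iteratedDeriv j f) = iteratedDeriv (j+1) f from (iteratedDeriv_succ).symm]
        at this)
    B (fun v _ => hB v) h hh x (subset_univ _)
  simpa [iteratedDeriv_zero] using this

lemma gbar_ideriv_bound (k : ℕ) : ∃ B, 0 ≤ B ∧ ∀ v, |iteratedDeriv (k+1) (gbar k) v| ≤ B := by
  obtain ⟨B, hB, hb⟩ := rho_top_bound (k := k) ramp_contDiff allDB_deriv_ramp
  refine ⟨B, hB, fun v => ?_⟩
  rcases lt_or_ge (|v|) 1 with hv | hv
  · rw [gbar_ideriv_eq_zero hv]; simpa using hB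
  · have hne : v ≠ 0 := by intro h; rw [h] at hv; simp at hv; linarith
    have := ideriv_formula k ramp ramp_contDiff (k+1) v hne
    rw [show gbar k = fun u => u ^ k * ramp (Real.log u) from rfl, this]
    rw [abs_mul]
    have e1 : ((k:ℤ) - ((k:ℕ)+1 : ℕ)) = -1 := by push_cast; ring
    rw [e1]
    have : |v ^ (-1:ℤ)| ≤ 1 := by
      rw [zpow_neg_one, abs_inv]
      exact inv_le_one_of_one_le₀ hv
    calc |v ^ (-1:ℤ)| * |rho k ramp (k+1) (Real.log v)| ≤ 1 * B :=
      mul_le_mul this (hb _) (abs_nonneg _) zero_le_one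
    _ = B := one_mul B

lemma abs_qfun_le_one {k : ℕ} (hk : 1 ≤ k) {v : ℝ} (hv : |v| ≤ 1) : |qfun k v| ≤ 1 := by
  rcases eq_or_ne v 0 with rfl | hne
  · simp [qfun, Real.log_zero]
  · have ht : 0 < |v| := abs_pos.mpr hne
    have h1 : |qfun k v| = |v| ^ k * |Real.log v| := by rw [qfun, abs_mul, abs_pow]
    have h2 : |v| ^ k ≤ |v| := by
      calc |v| ^ k ≤ |v| ^ 1 := pow_le_pow_of_le_one (abs_nonneg v) hv hk
        _ = |v| := pow_one _
    have h3 : |Real.log v| = - Real.log |v| := by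
      rw [← Real.log_abs]
      rw [abs_of_nonpos (Real.log_nonpos (abs_nonneg v) hv)]
    have h4 : Real.log |v|⁻¹ ≤ |v|⁻¹ - 1 := Real.log_le_sub_one_of_pos (by positivity)
    rw [Real.log_inv] at h4
    have h5 : |v| * (- Real.log |v|) ≤ 1 := by
      have := mul_le_mul_of_nonneg_left h4 (le_of_lt ht)
      calc |v| * (- Real.log |v|) ≤ |v| * (|v|⁻¹ - 1) := this
        _ = 1 - |v| := by field_simp
        _ ≤ 1 := by linarith
    rw [h1, h3]
    calc |v| ^ k * (-Real.log |v|) ≤ |v| * (-Real.log |v|) := by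
          apply mul_le_mul_of_nonneg_right h2
          rw [← h3]; exact abs_nonneg _
      _ ≤ 1 := h5

lemma abs_gbar_sub_qfun {k : ℕ} (hk : 1 ≤ k) (v : ℝ) :
    |gbar k v - qfun k v| ≤ 2 ^ k := by
  rcases le_or_gt (|v|) 1 with hv | hv
  · rw [gbar_eq_zero hv]
    simp only [zero_sub, abs_neg]
    calc |qfun k v| ≤ 1 := abs_qfun_le_one hk hv
      _ ≤ 2 ^ k := one_le_pow₀ (by norm_num)
  · rcases le_or_gt (1/4 : ℝ) (Real.log v) with hl | hl
    · have : gbar k v = qfun k v := by rw [gbar, qfun, ramp_of_ge hl]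
      rw [this]; simp only [sub_self, abs_zero]; positivity
    · have hlv : 0 ≤ Real.log v := by
        rw [← Real.log_abs]; exact Real.log_nonneg hv.le
      have hv2 : |v| ≤ 2 := by
        have : Real.log |v| ≤ Real.log 2 := by
          rw [Real.log_abs]
          calc Real.log v ≤ 1/4 := hl.le
            _ ≤ Real.log 2 := by
              have := Real.log_two_gt_d9; linarith
        calc |v| = Real.exp (Real.log |v|) := (Real.exp_log (by linarith)).symm
          _ ≤ Real.exp (Real.log 2) := Real.exp_le_exp.mpr this
          _ = 2 := Real.exp_log (by norm_num)
      have : gbar k v - qfun k v = v ^ k * (ramp (Real.log v) - Real.log v) := by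
        rw [gbar, qfun]; ring
      rw [this, abs_mul, abs_pow]
      have hr : |ramp (Real.log v) - Real.log v| ≤ 1 := by
        have h1 := ramp_nonneg (Real.log v)
        have h2 := ramp_le (Real.log v)
        rw [max_eq_left hlv] at h2
        rw [abs_le]; constructor <;> linarith
      calc |v| ^ k * |ramp (Real.log v) - Real.log v| ≤ 2 ^ k * 1 := by
            apply mul_le_mul _ hr (abs_nonneg _) (by positivity)
            exact pow_le_pow_left₀ (abs_nonneg v) hv2 k
        _ = 2 ^ k := mul_one _

lemma qfun_abs_le {k : ℕ} (hk : 1 ≤ k) {R : ℝ} (hR : 1 ≤ R) {v : ℝ} (hv : |v| ≤ R) :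
    |qfun k v| ≤ 1 + R ^ (k+1) := by
  rcases le_or_gt (|v|) 1 with h1 | h1
  · have := abs_qfun_le_one hk h1
    have : (0:ℝ) ≤ R ^ (k+1) := by positivity
    linarith [abs_qfun_le_one hk h1]
  · have hlog : |Real.log v| ≤ R := by
      rw [← Real.log_abs, abs_of_nonneg (Real.log_nonneg h1.le)]
      calc Real.log |v| ≤ |v| - 1 := Real.log_le_sub_one_of_pos (by linarith)
        _ ≤ R := by linarith
    have : |qfun k v| = |v| ^ k * |Real.log v| := by rw [qfun, abs_mul, abs_pow]
    rw [this]
    have h2 : |v| ^ k ≤ R ^ k := pow_le_pow_left₀ (abs_nonneg v) hv k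
    calc |v| ^ k * |Real.log v| ≤ R ^ k * R := by
          apply mul_le_mul h2 hlog (abs_nonneg _) (by positivity)
      _ = R ^ (k+1) := by ring
      _ ≤ 1 + R ^ (k+1) := by linarith


lemma qfun_eq_F0 (k : ℕ) : qfun k = fun v => v ^ ((k:ℤ) - (0:ℕ)) * rho k (fun x => x) 0 (Real.log v) := by
  funext v
  simp [qfun, rho, zpow_natCast]

/-- bound for `(fdiff 1)^[k+1] (qfun k)` everywhere -/
lemma q_delta1_bound (k : ℕ) (hk : 1 ≤ k) :
    ∃ Mk, 0 ≤ Mk ∧ ∀ x, |(fdiff 1)^[k+1] (qfun k) x| ≤ Mk := by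
  obtain ⟨Bq, hBq, hbq⟩ := rho_top_bound (k := k) (ℓ := fun x => x) contDiff_id allDB_deriv_id
  set Mq : ℝ := 1 + ((k:ℝ) + 3) ^ (k+1) with hMq
  have hMq0 : 0 ≤ Mq := by positivity
  have h2Mq : (0:ℝ) ≤ 2 ^ (k+1) * Mq := mul_nonneg (by positivity) hMq0
  refine ⟨2 ^ (k+1) * Mq + Bq, by linarith, fun x => ?_⟩
  set F : ℕ → ℝ → ℝ := fun j v => v ^ ((k:ℤ) - j) * rho k (fun x => x) j (Real.log v) with hF
  have hq : F 0 = qfun k := by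
    funext v; show v ^ ((k:ℤ) - (0:ℕ)) * rho k (fun x => x) 0 (Real.log v) = qfun k v
    simp [qfun, rho, zpow_natCast]
  have hFd : ∀ (s : Set ℝ), (∀ v ∈ s, v ≠ 0) → ∀ j < k+1, ∀ v ∈ s, HasDerivAt (F j) (F (j+1) v) v :=
    fun s hs j _ v hv => hasDerivAt_formula k (fun x => x) contDiff_id j (hs v hv)
  have hFb : ∀ v : ℝ, 1 ≤ |v| → |F (k+1) v| ≤ Bq := by
    intro v hv
    have e1 : ((k:ℤ) - ((k:ℕ)+1 : ℕ)) = -1 := by push_cast; ring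
    rw [hF]
    simp only []
    rw [e1, abs_mul]
    have h1 : |v ^ (-1:ℤ)| ≤ 1 := by
      rw [zpow_neg_one, abs_inv]
      exact inv_le_one_of_one_le₀ hv
    calc |v ^ (-1:ℤ)| * |rho k (fun x => x) (k+1) (Real.log v)| ≤ 1 * Bq :=
        mul_le_mul h1 (hbq _) (abs_nonneg _) zero_le_one
      _ = Bq := one_mul _
  rcases lt_or_ge 1 x with hx | hx
  · -- window in Ioi 1
    have := fdiff_iter_bound_chain (k+1) F (Ioi 1) (convex_Ioi 1)
      (hFd _ (fun v hv => by exact ne_of_gt (lt_trans one_pos hv)))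
      Bq (fun v hv => hFb v (by rw [abs_of_pos (lt_trans one_pos hv)]; exact le_of_lt hv))
      1 zero_le_one x
      (by intro y hy; simp only [mem_Ioi]; have := hy.1; linarith)
    rw [hq] at this
    calc |(fdiff 1)^[k+1] (qfun k) x| ≤ Bq * 1 ^ (k+1) := this
      _ = Bq := by simp
      _ ≤ _ := by linarith
  · rcases lt_or_ge (x + (k+1) * 1) (-1) with hx2 | hx2
    · -- window in Iio (-1)
      have := fdiff_iter_bound_chain (k+1) F (Iio (-1)) (convex_Iio (-1))
        (hFd _ (fun v hv => by have : v < -1 := hv; intro h; rw [h] at this; linarith))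
        Bq (fun v hv => hFb v (by
          have : v < -1 := hv
          rw [abs_of_neg (by linarith)]; linarith))
        1 zero_le_one x
        (by intro y hy; simp only [mem_Iio]
            have := hy.2
            have h3 : (((k+1):ℕ):ℝ) = (k:ℝ) + 1 := by push_cast; ring
            rw [h3] at this
            linarith)
      rw [hq] at this
      calc |(fdiff 1)^[k+1] (qfun k) x| ≤ Bq * 1 ^ (k+1) := this
        _ = Bq := by simp
        _ ≤ _ := by linarith
    · -- middle window
      have := fdiff_iter_bound_sup 1 zero_le_one (k+1) (qfun k) Mq x
        (by
          intro y hy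
          have hy1 := hy.1
          have hy2 := hy.2
          push_cast at hy2
          apply qfun_abs_le hk (by push_cast; linarith : (1:ℝ) ≤ (k:ℝ) + 3)
          rw [abs_le]
          constructor
          · nlinarith
          · nlinarith)
      calc |(fdiff 1)^[k+1] (qfun k) x| ≤ 2 ^ (k+1) * Mq := this
        _ ≤ _ := by linarith

lemma iteratedDeriv_pow_succ : ∀ k : ℕ, iteratedDeriv (k+1) (fun y : ℝ => y ^ k) = fun _ => 0 := by
  intro k
  induction k with
  | zero =>
    rw [show (fun y : ℝ => y ^ 0) = fun _ : ℝ => (1:ℝ) from funext fun y => pow_zero y]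
    exact iteratedDeriv_const_succ 0 1
  | succ k ih =>
    rw [iteratedDeriv_succ']
    rw [show deriv (fun y : ℝ => y ^ (k+1)) = fun y => ((k:ℝ)+1) * y ^ k from funext fun y => by
      simpa using (deriv_pow (k+1) (x := y))]
    have hcd : ContDiff ℝ (↑(⊤:ℕ∞)) (fun y : ℝ => y ^ k) := by exact contDiff_id.pow k
    rw [iteratedDeriv_const_mul_fun ((k:ℝ)+1) hcd, ih]
    funext y; simp

lemma fdiff_pow_zero (k : ℕ) {h : ℝ} (hh : 0 ≤ h) (x : ℝ) :
    (fdiff h)^[k+1] (fun y : ℝ => y ^ k) x = 0 := by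
  have := fdiff_bound_of_contDiff (fun y : ℝ => y ^ k) (contDiff_id.pow k) (k+1) 0
    (fun v => by rw [iteratedDeriv_pow_succ]; simp) hh x
  have h2 := abs_nonneg ((fdiff h)^[k+1] (fun y : ℝ => y ^ k) x)
  have h3 : (0:ℝ) * h ^ (k+1) = 0 := by ring
  rw [h3] at this
  exact abs_eq_zero.mp (le_antisymm this h2)

/-- homogeneity: difference bound for q at all positive steps -/
lemma q_fdiff_bound (k : ℕ) (hk : 1 ≤ k) :
    ∃ Mk, 0 ≤ Mk ∧ ∀ (h : ℝ), 0 < h → ∀ x, |(fdiff h)^[k+1] (qfun k) x| ≤ Mk * h ^ k := by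
  obtain ⟨Mk, hMk, hmk⟩ := q_delta1_bound k hk
  refine ⟨Mk, hMk, fun h hh x => ?_⟩
  have key := fdiff_iter_comp_affine 1 h 0 (k+1) (qfun k) (x / h)
  rw [mul_one, mul_div_cancel₀ x (ne_of_gt hh), add_zero] at key
  -- key : (fdiff 1)^[k+1] (fun y => qfun k (h * y + 0)) (x/h) = (fdiff h)^[k+1] (qfun k) x
  have hsplit : (fun y => qfun k (h * y + 0))
      = fun y => (h ^ k * qfun k y) + ((h ^ k * Real.log h) * y ^ k) := by
    funext y
    rcases eq_or_ne y 0 with rfl | hy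
    · simp [qfun, Real.log_zero, zero_pow (by omega : k ≠ 0)]
    · rw [add_zero, qfun, qfun, mul_pow, Real.log_mul (ne_of_gt hh) hy]
      ring
  rw [hsplit] at key
  rw [fdiff_iter_add 1 (k+1) (fun y => h ^ k * qfun k y) (fun y => (h ^ k * Real.log h) * y ^ k)]
    at key
  rw [fdiff_iter_const_mul 1 (h ^ k) (k+1) (qfun k)] at key
  rw [fdiff_iter_const_mul 1 (h ^ k * Real.log h) (k+1) (fun y => y ^ k)] at key
  have key2 : h ^ k * (fdiff 1)^[k+1] (qfun k) (x / h)
      + h ^ k * Real.log h * (fdiff 1)^[k+1] (fun y : ℝ => y ^ k) (x / h)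
      = (fdiff h)^[k+1] (qfun k) x := by exact key
  rw [fdiff_pow_zero k zero_le_one (x / h), mul_zero, add_zero] at key2
  rw [← key2, abs_mul, abs_pow, abs_of_pos hh]
  exact mul_le_mul_of_nonneg_left (hmk _) (by positivity) |>.trans_eq (by ring)

/-- The homogeneous Λ^k seminorm of gbar is finite. -/
theorem gbar_lambda (k : ℕ) (hk : 1 ≤ k) :
    ∃ S, 0 < S ∧ ∀ (h : ℝ), h ≠ 0 → ∀ x, |(fdiff h)^[k+1] (gbar k) x| ≤ S * |h| ^ k := by
  obtain ⟨Bg, hBg, hbg⟩ := gbar_ideriv_bound k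
  obtain ⟨Mk, hMk, hmk⟩ := q_fdiff_bound k hk
  set BE : ℝ := (2:ℝ) ^ k with hBE
  set S : ℝ := Bg + Mk + 2 ^ (k+1) * BE + 1 with hS
  have hS0 : 0 < S := by positivity
  have main : ∀ (h : ℝ), 0 < h → ∀ x, |(fdiff h)^[k+1] (gbar k) x| ≤ S * h ^ k := by
    intro h hh x
    rcases le_or_gt h 1 with hle | hgt
    · -- small h: use C^{k+1} bound
      have := fdiff_bound_of_contDiff (gbar k) (gbar_contDiff k) (k+1) Bg hbg hh.le x
      calc |(fdiff h)^[k+1] (gbar k) x| ≤ Bg * h ^ (k+1) := this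
        _ = Bg * h ^ k * h := by ring
        _ ≤ Bg * h ^ k * 1 := by
            apply mul_le_mul_of_nonneg_left hle (by positivity)
        _ = Bg * h ^ k := by ring
        _ ≤ S * h ^ k := by
            apply mul_le_mul_of_nonneg_right _ (by positivity)
            rw [hS]; nlinarith [pow_pos (show (0:ℝ) < 2 by norm_num) (k+1),
              pow_pos (show (0:ℝ) < 2 by norm_num) k]
    · -- large h: split gbar = qfun + E
      have hg : (fun v => qfun k v + (gbar k v - qfun k v)) = gbar k := by
        funext v; ring
      have hone_le : (1:ℝ) ≤ h ^ k := one_le_pow₀ hgt.le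
      have hpk : (0:ℝ) ≤ h ^ k := by positivity
      have hBE0 : (0:ℝ) ≤ BE := by rw [hBE]; positivity
      have h2k1 : (0:ℝ) ≤ 2 ^ (k+1) := by positivity
      have hE := fdiff_iter_bound_sup h hh.le (k+1) (fun v => gbar k v - qfun k v) BE x
        (fun y _ => abs_gbar_sub_qfun hk y)
      have hsum := congrFun (fdiff_iter_add h (k+1) (qfun k) (fun v => gbar k v - qfun k v)) x
      rw [hg] at hsum
      rw [hsum]
      calc |(fdiff h)^[k+1] (qfun k) x + (fdiff h)^[k+1] (fun v => gbar k v - qfun k v) x|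
          ≤ |(fdiff h)^[k+1] (qfun k) x| + |(fdiff h)^[k+1] (fun v => gbar k v - qfun k v) x| :=
            abs_add_le _ _
        _ ≤ Mk * h ^ k + 2 ^ (k+1) * BE := add_le_add (hmk h hh x) hE
        _ ≤ Mk * h ^ k + (2 ^ (k+1) * BE) * h ^ k := by nlinarith [mul_nonneg (mul_nonneg h2k1 hBE0) (sub_nonneg.mpr hone_le)]
        _ = (Mk + 2 ^ (k+1) * BE) * h ^ k := by ring
        _ ≤ S * h ^ k := by
            apply mul_le_mul_of_nonneg_right _ hpk
            rw [hS]; linarith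
  refine ⟨S, hS0, fun h hh x => ?_⟩
  rcases lt_trichotomy h 0 with hneg | rfl | hpos
  · have hpos' : 0 < -h := by linarith
    have e := fdiff_iter_neg_h (-h) (k+1) (gbar k) x
    rw [neg_neg] at e
    rw [e, abs_mul, abs_pow, abs_neg, abs_one, one_pow, one_mul]
    calc |(fdiff (-h))^[k+1] (gbar k) (x - ((k+1):ℕ) * (-h))| ≤ S * (-h) ^ k :=
        main (-h) hpos' _
      _ = S * |h| ^ k := by rw [abs_of_neg hneg]
  · exact absurd rfl hh
  · calc |(fdiff h)^[k+1] (gbar k) x| ≤ S * h ^ k := main h hpos x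
      _ = S * |h| ^ k := by rw [abs_of_pos hpos]


end FdiffAux

open FdiffAux Set

set_option maxHeartbeats 3000000 in
/-- For every `k ≥ 1` there are `c(k) > 0` and `C(k)` such that: for `0 < ε < 1/4`, `a > 4` and a
closed interval `I = [x₀ - ρ, x₀ + ρ] ⊆ [-a, a]` of length `< 2ε` with midpoint `x₀ ∈ [-1, 1]`,
there is `f_k : ℝ → ℝ` vanishing on `I ∪ [-a, a]ᶜ`, with
`|f_k| ≥ c(k)·min{log a, log(1/ε)}` on `J = [x₀ - 1/2, x₀ + 1/2]ᶜ ∩ [-1, 1]`,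
`‖f_k‖_∞ ≤ C(k)·a^k` and `Λ̇^k(ℝ)` seminorm at most `C(k)`. -/
theorem exists_lipschitz_separating_function_dim_one (k : ℕ) (hk : 1 ≤ k) :
    ∃ c > (0:ℝ), ∃ C > (0:ℝ), ∀ ε a x₀ ρ : ℝ,
      0 < ε → ε < 1 / 4 → 4 < a → x₀ ∈ Set.Icc (-1 : ℝ) 1 → 0 ≤ ρ → ρ < ε →
      Set.Icc (x₀ - ρ) (x₀ + ρ) ⊆ Set.Icc (-a) a →
      ∃ f : ℝ → ℝ,
        (∀ x ∈ Set.Icc (x₀ - ρ) (x₀ + ρ) ∪ (Set.Icc (-a) a)ᶜ, f x = 0) ∧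
        (∀ x ∈ (Set.Icc (x₀ - 1 / 2) (x₀ + 1 / 2))ᶜ ∩ Set.Icc (-1 : ℝ) 1,
          c * min (Real.log a) (Real.log (1 / ε)) ≤ |f x|) ∧
        (∀ x, |f x| ≤ C * a ^ k) ∧
        (∀ h : ℝ, h ≠ 0 → ∀ x, |(fdiff h)^[k + 1] f x| ≤ C * |h| ^ k) := by
  classical
  obtain ⟨m, rfl⟩ : ∃ m, k = m + 1 := ⟨k - 1, by omega⟩
  set k := m + 1 with hkdef
  obtain ⟨S, hS0, hSb⟩ := gbar_lambda k hk
  obtain ⟨κ, hκ0, hκb⟩ := ramp_ideriv_bound 1 (le_refl 1)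
  have hramp_lip : ∀ u v : ℝ, |ramp u - ramp v| ≤ κ * |u - v| := by
    intro u v
    have := (convex_univ (𝕜 := ℝ) (E := ℝ)).norm_image_sub_le_of_norm_deriv_le
      (f := ramp) (C := κ)
      (fun x _ => ((ramp_contDiff.differentiable (zero_lt_one.trans_le one_le_infty).ne') x))
      (fun x _ => by
        rw [Real.norm_eq_abs, show deriv ramp = iteratedDeriv 1 ramp from (iteratedDeriv_one).symm]
        exact hκb x)
      (mem_univ v) (mem_univ u)
    simpa [Real.norm_eq_abs] using this
  refine ⟨(1/4) * (1/2)^k, by positivity, 20 * κ + 20 * S, by nlinarith, ?_⟩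
  intro ε a x₀ ρ hε hε4 ha hx₀ hρ0 hρε _hIsub
  set C : ℝ := 20 * κ + 20 * S with hCdef
  clear_value C
  have hC0 : (0:ℝ) < C := by rw [hCdef]; nlinarith
  have ha0 : (0:ℝ) < a := by linarith
  have ha1 : (0:ℝ) < a - 1 := by linarith
  have hl2 := Real.log_two_gt_d9
  have hlog4 : Real.log 4 = 2 * Real.log 2 := by
    rw [show (4:ℝ) = 2^2 by norm_num, Real.log_pow]; push_cast; ring
  set b1 := Real.log ε with hb1def
  set b2 := Real.log (a-1) - 1/4 with hb2def
  set bst := (b1 + 4*b2)/5 with hbstdef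
  clear_value bst
  clear_value b2
  clear_value b1
  have hb1neg : b1 < -(2 * Real.log 2) := by
    rw [hb1def]
    have h1 : Real.log ε < Real.log (1/4) := Real.log_lt_log hε hε4
    rw [show (1/4 : ℝ) = 4⁻¹ by norm_num, Real.log_inv, hlog4] at h1
    exact h1
  have hb1neg0 : b1 < 0 := by linarith
  have hloga1 : 1 ≤ Real.log (a - 1) := by
    have h3 : Real.exp 1 ≤ a - 1 := by
      have := Real.exp_one_lt_d9; linarith
    calc (1:ℝ) = Real.log (Real.exp 1) := (Real.log_exp 1).symm
      _ ≤ Real.log (a-1) := Real.log_le_log (Real.exp_pos 1) h3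
  have hb2pos : 3/4 ≤ b2 := by rw [hb2def]; linarith
  have hb1b2 : b1 < b2 := by linarith
  have hb1bst : b1 ≤ bst := by rw [hbstdef]; linarith
  have hbstb2 : bst ≤ b2 := by rw [hbstdef]; linarith
  have hεexp : Real.exp b1 = ε := by rw [hb1def]; exact Real.exp_log hε
  set w : ℝ → ℝ := fun s => 2 * ramp (s - b1) + ((-10) * ramp (s - bst) + 8 * ramp (s - b2))
    with hwdef
  set f : ℝ → ℝ := fun x => 2 * ((Real.exp b1)^k * gbar k ((x - x₀)/Real.exp b1))
      + ((-10) * ((Real.exp bst)^k * gbar k ((x - x₀)/Real.exp bst))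
        + 8 * ((Real.exp b2)^k * gbar k ((x - x₀)/Real.exp b2))) with hfdef
  have hterm : ∀ (b x : ℝ), x ≠ x₀ →
      (Real.exp b)^k * gbar k ((x - x₀)/Real.exp b)
        = (x - x₀)^k * ramp (Real.log (x - x₀) - b) := by
    intro b x hx
    have hne : x - x₀ ≠ 0 := sub_ne_zero.mpr hx
    have hexp0 : (0:ℝ) < Real.exp b := Real.exp_pos b
    show (Real.exp b)^k * (((x - x₀)/Real.exp b) ^ k * ramp (Real.log ((x - x₀)/Real.exp b))) = _
    rw [div_pow, Real.log_div hne (ne_of_gt hexp0), Real.log_exp]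
    field_simp
  have hbridge : ∀ x : ℝ, f x = (x - x₀)^k * w (Real.log (x - x₀)) := by
    intro x
    rcases eq_or_ne x x₀ with hx | hx
    · have hz : ∀ b : ℝ, gbar k ((x₀ - x₀)/Real.exp b) = 0 := by
        intro b
        apply gbar_eq_zero
        rw [sub_self, zero_div, abs_zero]
        norm_num
      rw [hx, hfdef]
      simp only [hz, mul_zero]
      rw [sub_self, zero_pow (by omega : k ≠ 0), zero_mul]
      ring
    · rw [hfdef, hwdef]
      simp only [hterm b1 x hx, hterm bst x hx, hterm b2 x hx]
      ring
  clear_value w f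
  have hwL : ∀ s : ℝ, Real.log (a-1) ≤ s → w s = 0 := by
    intro s hs
    have hs1 : Real.log (a-1) = b2 + 1/4 := by rw [hb2def]; ring
    have h1 : 1/4 ≤ s - b1 := by linarith
    have h2 : 1/4 ≤ s - bst := by linarith
    have h3 : 1/4 ≤ s - b2 := by linarith
    rw [hwdef]
    simp only [ramp_of_ge h1, ramp_of_ge h2, ramp_of_ge h3]
    rw [hbstdef]; ring
  have hx₀1 : |x₀| ≤ 1 := abs_le.mpr ⟨hx₀.1, hx₀.2⟩
  refine ⟨f, ?_, ?_, ?_, ?_⟩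
  · -- (i) vanishing
    intro x hx
    rcases hx with hxI | hxO
    · have hxd : |x - x₀| ≤ ρ := abs_le.mpr ⟨by linarith [hxI.1], by linarith [hxI.2]⟩
      have hz : ∀ b : ℝ, b1 ≤ b → gbar k ((x - x₀)/Real.exp b) = 0 := by
        intro b hb
        apply gbar_eq_zero
        rw [abs_div, abs_of_pos (Real.exp_pos b), div_le_one (Real.exp_pos b)]
        calc |x - x₀| ≤ ρ := hxd
          _ ≤ ε := hρε.le
          _ = Real.exp b1 := hεexp.symm
          _ ≤ Real.exp b := Real.exp_le_exp.mpr hb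
      rw [hfdef]
      simp only [hz b1 le_rfl, hz bst hb1bst, hz b2 hb1b2.le]
      ring
    · have hxa : a < |x| := by
        rw [lt_abs]
        simp only [mem_compl_iff, mem_Icc, not_and_or, not_le] at hxO
        rcases hxO with h | h
        · right; linarith
        · left; exact h
      have htd : a - 1 ≤ |x - x₀| := by
        have := abs_sub_abs_le_abs_sub x x₀
        linarith
      have hxne : x ≠ x₀ := by
        intro h
        rw [h, sub_self, abs_zero] at htd
        linarith
      rw [hbridge x]
      have hs : Real.log (a-1) ≤ Real.log (x - x₀) := by
        rw [show Real.log (x - x₀) = Real.log |x - x₀| from (Real.log_abs _).symm]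
        exact Real.log_le_log ha1 htd
      rw [hwL _ hs, mul_zero]
  · -- (ii) lower bound on J
    intro x hx
    obtain ⟨hxJ, hxint⟩ := hx
    have ht_lb : 1/2 < |x - x₀| := by
      simp only [mem_compl_iff, mem_Icc, not_and_or, not_le] at hxJ
      rcases hxJ with h | h
      · rw [abs_sub_comm]
        calc (1/2:ℝ) < x₀ - x := by linarith
          _ ≤ |x₀ - x| := le_abs_self _
      · calc (1/2:ℝ) < x - x₀ := by linarith
          _ ≤ |x - x₀| := le_abs_self _
    have ht_ub : |x - x₀| ≤ 2 :=
      abs_le.mpr ⟨by linarith [hxint.1, hx₀.2], by linarith [hxint.2, hx₀.1]⟩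
    have hxne : x ≠ x₀ := by
      intro h; rw [h, sub_self, abs_zero] at ht_lb; linarith
    set s := Real.log (x - x₀) with hsdef
    clear_value s
    have hs_abs : s = Real.log |x - x₀| := by rw [hsdef, Real.log_abs]
    have hs_lb : -(Real.log 2) ≤ s := by
      rw [hs_abs]
      have h9 : Real.log (1/2) ≤ Real.log |x - x₀| :=
        Real.log_le_log (by norm_num) (by linarith)
      rw [show (1/2:ℝ) = 2⁻¹ by norm_num, Real.log_inv] at h9
      exact h9
    have hs_ub : s ≤ Real.log 2 := by
      rw [hs_abs]
      exact Real.log_le_log (by linarith) ht_ub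
    set M := min (Real.log a) (Real.log (1 / ε)) with hMdef
    clear_value M
    have hM_le1 : M ≤ -b1 := by
      have h1 : Real.log (1/ε) = -b1 := by rw [one_div, Real.log_inv, hb1def]
      rw [hMdef, ← h1]
      exact min_le_right _ _
    have hM_le2 : M ≤ Real.log a := by rw [hMdef]; exact min_le_left _ _
    have hla : 2 * Real.log 2 < Real.log a := by
      rw [← hlog4]; exact Real.log_lt_log (by norm_num) ha
    have hM_pos : 0 ≤ M := by
      rw [hMdef]
      apply le_min
      · linarith
      · rw [one_div, Real.log_inv]; linarith
    have hwlb : (1/4) * M ≤ w s := by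
      rcases le_or_gt s bst with hcase | hcase
      · have hz1 : ramp (s - bst) = 0 := ramp_of_nonpos (by linarith)
        have hz2 : ramp (s - b2) = 0 := ramp_of_nonpos (by linarith)
        have hge := ramp_ge (s - b1)
        have hws : w s = 2 * ramp (s - b1) := by
          rw [hwdef]; simp only [hz1, hz2]; ring
        rw [hws]
        have key : (1/4) * (-b1) ≤ 2 * (s - b1 - 1/4) := by linarith
        linarith
      · have hex : ramp (s - b1) = s - b1 := by
          apply ramp_of_ge
          have hb : bst - b1 = (4/5) * (b2 - b1) := by rw [hbstdef]; ring
          nlinarith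
        have hub := ramp_le (s - bst)
        have hmax : max (s - bst) 0 = s - bst := max_eq_left (by linarith)
        rw [hmax] at hub
        have hge3 := ramp_nonneg (s - b2)
        have hbst5 : 5 * bst = b1 + 4*b2 := by rw [hbstdef]; ring
        have hw8 : 8 * (b2 - s) ≤ w s := by
          rw [hwdef]
          simp only [hex]
          nlinarith
        have hlog_quarter : (1/4) * Real.log a ≤ Real.log ((a-1)/2) := by
          have hpow : a ≤ ((a-1)/2)^4 := by
            nlinarith [sq_nonneg (a-4), pow_nonneg (show (0:ℝ) ≤ a - 4 by linarith) 3,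
              pow_nonneg (show (0:ℝ) ≤ a - 4 by linarith) 4]
          have h5 := Real.log_le_log ha0 hpow
          rw [Real.log_pow] at h5
          push_cast at h5
          linarith
        have hlogdiv : Real.log ((a-1)/2) = Real.log (a-1) - Real.log 2 :=
          Real.log_div (ne_of_gt ha1) (by norm_num)
        have key2 : (1/4) * M ≤ 8 * (b2 - s) := by
          rw [hb2def]
          nlinarith
        linarith
    rw [hbridge x, abs_mul, abs_pow, ← hsdef]
    have h1 : (1/2:ℝ)^k ≤ |x - x₀|^k := pow_le_pow_left₀ (by norm_num) ht_lb.le k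
    have h2 : (1/4) * M ≤ |w s| := le_trans hwlb (le_abs_self _)
    calc (1/4) * (1/2)^k * M = (1/2)^k * ((1/4) * M) := by ring
      _ ≤ |x - x₀|^k * |w s| := by
          apply mul_le_mul h1 h2 (by positivity) (by positivity)
  · -- (iii) sup bound
    intro x
    rcases eq_or_ne x x₀ with hxe | hxne
    · rw [hbridge x, hxe, sub_self, zero_pow (by omega : k ≠ 0), zero_mul, abs_zero]
      exact mul_nonneg hC0.le (by positivity)
    · rw [hbridge x, abs_mul, abs_pow]
      set s := Real.log (x - x₀) with hsdef
      set L := Real.log (a - 1) with hLdef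
      clear_value s
      clear_value L
      have habs : 0 < |x - x₀| := abs_pos.mpr (sub_ne_zero.mpr hxne)
      have hs_abs : s = Real.log |x - x₀| := by rw [hsdef, Real.log_abs]
      rcases le_or_gt L s with hLs | hLs
      · rw [hwL s hLs, abs_zero, mul_zero]
        exact mul_nonneg hC0.le (by positivity)
      · -- |t| < a - 1
        have ht_lt : |x - x₀| < a - 1 := by
          have h7 := Real.exp_lt_exp.mpr hLs
          rw [hs_abs, hLdef] at h7
          rw [Real.exp_log habs, Real.exp_log ha1] at h7
          exact h7
        have hwlip : |w s| ≤ 20 * κ * (L - s) := by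
          have e0 : w L = 0 := hwL L le_rfl
          have d1 := hramp_lip (s - b1) (L - b1)
          have d2 := hramp_lip (s - bst) (L - bst)
          have d3 := hramp_lip (s - b2) (L - b2)
          have habs_sL : |s - b1 - (L - b1)| = L - s := by
            rw [show s - b1 - (L - b1) = -(L - s) by ring, abs_neg,
              abs_of_nonneg (by linarith : (0:ℝ) ≤ L - s)]
          have habs_sL2 : |s - bst - (L - bst)| = L - s := by
            rw [show s - bst - (L - bst) = -(L - s) by ring, abs_neg,
              abs_of_nonneg (by linarith : (0:ℝ) ≤ L - s)]
          have habs_sL3 : |s - b2 - (L - b2)| = L - s := by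
            rw [show s - b2 - (L - b2) = -(L - s) by ring, abs_neg,
              abs_of_nonneg (by linarith : (0:ℝ) ≤ L - s)]
          rw [habs_sL] at d1; rw [habs_sL2] at d2; rw [habs_sL3] at d3
          have ew : w s = (w s - w L) := by rw [e0]; ring
          rw [ew, hwdef]
          simp only []
          have expand : 2 * ramp (s - b1) + (-10 * ramp (s - bst) + 8 * ramp (s - b2))
              - (2 * ramp (L - b1) + (-10 * ramp (L - bst) + 8 * ramp (L - b2)))
              = 2 * (ramp (s - b1) - ramp (L - b1)) + (-10) * (ramp (s - bst) - ramp (L - bst))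
                + 8 * (ramp (s - b2) - ramp (L - b2)) := by ring
          rw [expand]
          calc |2 * (ramp (s - b1) - ramp (L - b1)) + (-10) * (ramp (s - bst) - ramp (L - bst))
                + 8 * (ramp (s - b2) - ramp (L - b2))|
              ≤ |2 * (ramp (s - b1) - ramp (L - b1)) + (-10) * (ramp (s - bst) - ramp (L - bst))|
                + |8 * (ramp (s - b2) - ramp (L - b2))| := abs_add_le _ _
            _ ≤ |2 * (ramp (s - b1) - ramp (L - b1))| + |(-10) * (ramp (s - bst) - ramp (L - bst))|
                + |8 * (ramp (s - b2) - ramp (L - b2))| := by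
                  have := abs_add_le (2 * (ramp (s - b1) - ramp (L - b1)))
                    ((-10) * (ramp (s - bst) - ramp (L - bst)))
                  linarith
            _ = 2 * |ramp (s - b1) - ramp (L - b1)| + 10 * |ramp (s - bst) - ramp (L - bst)|
                + 8 * |ramp (s - b2) - ramp (L - b2)| := by
                  rw [abs_mul, abs_mul, abs_mul]
                  norm_num
            _ ≤ 2 * (κ * (L - s)) + 10 * (κ * (L - s)) + 8 * (κ * (L - s)) := by
                  apply add_le_add (add_le_add _ _) _
                  · linarith
                  · linarith
                  · linarith
            _ = 20 * κ * (L - s) := by ring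
        have hLsub : L - s = Real.log ((a-1)/|x - x₀|) := by
          rw [Real.log_div (ne_of_gt ha1) (ne_of_gt habs), hs_abs, hLdef]
        have hlog_le : Real.log ((a-1)/|x - x₀|) ≤ (a-1)/|x - x₀| := by
          have := Real.log_le_sub_one_of_pos (show (0:ℝ) < (a-1)/|x - x₀| by positivity)
          linarith
        have hLs_nonneg : 0 ≤ L - s := by linarith
        have hkey : |x - x₀|^k * (L - s) ≤ (a-1)^k := by
          calc |x - x₀|^k * (L - s) ≤ |x - x₀|^k * ((a-1)/|x - x₀|) := by
                apply mul_le_mul_of_nonneg_left _ (by positivity)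
                rw [hLsub]; exact hlog_le
            _ = |x - x₀|^m * (a-1) := by
                rw [hkdef, pow_succ]
                field_simp
            _ ≤ (a-1)^m * (a-1) := by
                apply mul_le_mul_of_nonneg_right _ (le_of_lt ha1)
                exact pow_le_pow_left₀ (abs_nonneg _) ht_lt.le m
            _ = (a-1)^k := by rw [hkdef, pow_succ]
        calc |x - x₀|^k * |w s| ≤ |x - x₀|^k * (20 * κ * (L - s)) := by
              apply mul_le_mul_of_nonneg_left hwlip (by positivity)
          _ = 20 * κ * (|x - x₀|^k * (L - s)) := by ring
          _ ≤ 20 * κ * (a-1)^k := by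
              apply mul_le_mul_of_nonneg_left hkey (by positivity)
          _ ≤ C * a^k := by
              have h1 : (a-1)^k ≤ a^k := pow_le_pow_left₀ (by linarith) (by linarith) k
              have h2 : (0:ℝ) < a^k := by positivity
              have h3 : 20 * κ * (a-1)^k ≤ 20 * κ * a^k :=
                mul_le_mul_of_nonneg_left h1 (by positivity)
              have h4 : 20 * κ * a^k ≤ C * a^k := by
                apply mul_le_mul_of_nonneg_right _ (le_of_lt h2)
                rw [hCdef]; linarith
              linarith
  · -- (iv) Lipschitz seminorm
    intro h hne x
    have hcomp : ∀ b : ℝ,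
        (fdiff h)^[k+1] (fun y => (Real.exp b)^k * gbar k ((y - x₀)/Real.exp b)) x
          = (Real.exp b)^k * (fdiff (h / Real.exp b))^[k+1] (gbar k) ((x - x₀)/Real.exp b) := by
      intro b
      have hexp0 : (0:ℝ) < Real.exp b := Real.exp_pos b
      rw [fdiff_iter_const_mul h ((Real.exp b)^k) (k+1)
        (fun y => gbar k ((y - x₀)/Real.exp b))]
      show (Real.exp b)^k * (fdiff h)^[k+1] (fun y => gbar k ((y - x₀)/Real.exp b)) x = _
      congr 1
      have harg : (fun y => gbar k ((y - x₀)/Real.exp b))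
          = fun y => gbar k ((1/Real.exp b) * y + (-(x₀/Real.exp b))) := by
        funext y
        congr 1
        field_simp
        ring
      rw [harg, fdiff_iter_comp_affine h (1/Real.exp b) (-(x₀/Real.exp b)) (k+1) (gbar k) x]
      rw [show 1/Real.exp b * h = h / Real.exp b from by ring,
        show 1/Real.exp b * x + -(x₀/Real.exp b) = (x - x₀)/Real.exp b from by field_simp; ring]
    have hbound : ∀ b : ℝ,
        |(Real.exp b)^k * (fdiff (h / Real.exp b))^[k+1] (gbar k) ((x - x₀)/Real.exp b)|
          ≤ S * |h|^k := by
      intro b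
      have hexp0 : (0:ℝ) < Real.exp b := Real.exp_pos b
      have hne' : h / Real.exp b ≠ 0 := div_ne_zero hne (ne_of_gt hexp0)
      rw [abs_mul, abs_pow, abs_of_pos hexp0]
      have := hSb (h / Real.exp b) hne' ((x - x₀)/Real.exp b)
      calc (Real.exp b)^k * |(fdiff (h / Real.exp b))^[k+1] (gbar k) ((x - x₀)/Real.exp b)|
          ≤ (Real.exp b)^k * (S * |h / Real.exp b|^k) := by
            apply mul_le_mul_of_nonneg_left this (by positivity)
        _ = S * |h|^k := by
            rw [abs_div, abs_of_pos hexp0, div_pow]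
            field_simp
    rw [hfdef]
    rw [fdiff_iter_add h (k+1)
      (fun x => 2 * ((Real.exp b1)^k * gbar k ((x - x₀)/Real.exp b1)))
      (fun x => (-10) * ((Real.exp bst)^k * gbar k ((x - x₀)/Real.exp bst))
        + 8 * ((Real.exp b2)^k * gbar k ((x - x₀)/Real.exp b2)))]
    rw [fdiff_iter_add h (k+1)
      (fun x => (-10) * ((Real.exp bst)^k * gbar k ((x - x₀)/Real.exp bst)))
      (fun x => 8 * ((Real.exp b2)^k * gbar k ((x - x₀)/Real.exp b2)))]
    rw [fdiff_iter_const_mul h 2 (k+1)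
      (fun x => (Real.exp b1)^k * gbar k ((x - x₀)/Real.exp b1))]
    rw [fdiff_iter_const_mul h (-10) (k+1)
      (fun x => (Real.exp bst)^k * gbar k ((x - x₀)/Real.exp bst))]
    rw [fdiff_iter_const_mul h 8 (k+1)
      (fun x => (Real.exp b2)^k * gbar k ((x - x₀)/Real.exp b2))]
    simp only []
    have e1 := hcomp b1
    have e2 := hcomp bst
    have e3 := hcomp b2
    rw [e1, e2, e3]
    have b1b := hbound b1
    have b2b := hbound bst
    have b3b := hbound b2
    have tri : ∀ p q r : ℝ, |2 * p + ((-10) * q + 8 * r)| ≤ 2 * |p| + 10 * |q| + 8 * |r| := by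
      intro p q r
      calc |2 * p + ((-10) * q + 8 * r)| ≤ |2 * p| + |(-10) * q + 8 * r| := abs_add_le _ _
        _ ≤ |2 * p| + (|(-10) * q| + |8 * r|) := by linarith [abs_add_le ((-10) * q) (8 * r)]
        _ = 2 * |p| + 10 * |q| + 8 * |r| := by
            have e2 : |(2:ℝ)| = 2 := by norm_num
            have e10 : |(-10:ℝ)| = 10 := by norm_num
            have e8 : |(8:ℝ)| = 8 := by norm_num
            rw [abs_mul, abs_mul, abs_mul, e2, e10, e8]
            ring
    calc |2 * ((Real.exp b1)^k * (fdiff (h / Real.exp b1))^[k+1] (gbar k) ((x - x₀)/Real.exp b1))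
          + ((-10) * ((Real.exp bst)^k * (fdiff (h / Real.exp bst))^[k+1] (gbar k) ((x - x₀)/Real.exp bst))
            + 8 * ((Real.exp b2)^k * (fdiff (h / Real.exp b2))^[k+1] (gbar k) ((x - x₀)/Real.exp b2)))|
        ≤ 2 * (S * |h|^k) + 10 * (S * |h|^k) + 8 * (S * |h|^k) := by
          have := tri ((Real.exp b1)^k * (fdiff (h / Real.exp b1))^[k+1] (gbar k) ((x - x₀)/Real.exp b1))
            ((Real.exp bst)^k * (fdiff (h / Real.exp bst))^[k+1] (gbar k) ((x - x₀)/Real.exp bst))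
            ((Real.exp b2)^k * (fdiff (h / Real.exp b2))^[k+1] (gbar k) ((x - x₀)/Real.exp b2))
          nlinarith [b1b, b2b, b3b]
      _ = 20 * S * |h|^k := by ring
      _ ≤ C * |h|^k := by
          apply mul_le_mul_of_nonneg_right _ (by positivity)
          rw [hCdef]; linarith
end
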